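/- arXiv:2103.08260 — 8 statements merged into one kernel-verified Lean document; each statement's English description precedes it below -/
import Mathlib

section
/- Let a be a weight, let β ∈ (1,d] and K > 0, and assume (x−1)·|a'(x)| ≤ K·a(x) for all x ∈ (1,β]. Then a(x) ≥ a(β)·(x−1)^K/(β−1)^K for all x ∈ [1,β]. (This contains inequalities (1.0.1c) with β = d, K = κ_{2,a}μ_{2,a}, and (1.0.1e) with β = x₂*, K = μ_{2,a}.) -/
open MeasureTheory Set Filter Topology

noncomputable section

/-- A *weight* on `[c,d]` with degeneration point `1`: continuous on `[c,d]`,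
continuously differentiable on `[c,d] \ {1}` (with derivative `a'`),
vanishing at `1` and positive elsewhere on `[c,d]`. -/
structure IsWeight (c d : ℝ) (a a' : ℝ → ℝ) : Prop where
  cont : ContinuousOn a (Set.Icc c d)
  hderiv : ∀ x ∈ Set.Icc c d \ {1}, HasDerivWithinAt a (a' x) (Set.Icc c d \ {1}) x
  contDeriv : ContinuousOn a' (Set.Icc c d \ {1})
  zero_at_one : a 1 = 0
  pos : ∀ x ∈ Set.Icc c d \ {1}, 0 < a x

/-- if `(x-1)·|a'(x)| ≤ K·a(x)` on `(1,β]` then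
`a(x) ≥ a(β)·(x-1)^K/(β-1)^K` on `[1,β]`. -/
theorem stmt_1 (c d β K : ℝ) (a a' : ℝ → ℝ)
    (hc : 0 ≤ c) (hc1 : c < 1) (h1d : 1 < d) (hd2 : d ≤ 2)
    (hw : IsWeight c d a a')
    (hβ : β ∈ Set.Ioc 1 d) (hK : 0 < K)
    (hbound : ∀ x ∈ Set.Ioc 1 β, (x - 1) * |a' x| ≤ K * a x) :
    ∀ x ∈ Set.Icc 1 β, a β * (x - 1) ^ K / (β - 1) ^ K ≤ a x := by
  obtain ⟨h1β, hβd⟩ := hβ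
  have hsub : Set.Ioc 1 β ⊆ Set.Icc c d \ {1} := by
    intro x ⟨hx1, hxβ⟩
    exact ⟨⟨le_trans hc1.le hx1.le, hxβ.trans hβd⟩, ne_of_gt hx1⟩
  set f : ℝ → ℝ := fun x => a x * (x - 1) ^ (-K) with hf
  have hanti : AntitoneOn f (Set.Ioc 1 β) := by
    apply antitoneOn_of_hasDerivWithinAt_nonpos (convex_Ioc 1 β)
      (f' := fun x => a' x * (x - 1) ^ (-K) + a x * (K * (x - 1) ^ (K - 1) * -((x-1)^K)⁻¹ * ((x-1)^K)⁻¹))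
    · -- continuity of f on Ioc 1 β
      apply ContinuousOn.mul
      · exact (hw.cont.mono (fun x hx => (hsub hx).1)).congr (fun _ _ => rfl)
      · apply ContinuousOn.rpow_const
        · exact (continuous_id.sub continuous_const).continuousOn
        · intro x hx; left; exact ne_of_gt (sub_pos.mpr hx.1)
    · -- derivative
      rw [interior_Ioc]
      intro x hx
      have hx1 : (0:ℝ) < x - 1 := sub_pos.mpr hx.1
      have hda : HasDerivWithinAt a (a' x) (Set.Ioo 1 β) x :=
        (hw.hderiv x (hsub (Set.Ioo_subset_Ioc_self hx))).mono
          (Set.Ioo_subset_Ioc_self.trans hsub)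
      have hdr : HasDerivAt (fun y => ((y:ℝ) - 1) ^ (-K))
          (K * (x - 1) ^ (K - 1) * -((x-1)^K)⁻¹ * ((x-1)^K)⁻¹ * 1) x := by
        have h1 : HasDerivAt (fun y : ℝ => y - 1) 1 x := (hasDerivAt_id x).sub_const 1
        have h2 : HasDerivAt (fun y : ℝ => y ^ (-K))
            (-K * (x - 1) ^ (-K - 1)) (x - 1) :=
          Real.hasDerivAt_rpow_const (Or.inl (ne_of_gt hx1))
        have := h2.comp x h1
        convert this using 1
        case e'_4 => rfl
        case e'_5 => rfl
        case e'_8 => rfl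
        have hne : ((x - 1) ^ K : ℝ) ≠ 0 := ne_of_gt (Real.rpow_pos_of_pos hx1 K)
        rw [mul_one, mul_one]
        rw [show -K - 1 = (K - 1) + (-K) + (-K) by ring,
          Real.rpow_add hx1, Real.rpow_add hx1, Real.rpow_neg hx1.le]
        ring
      exact hda.mul ((hdr.hasDerivWithinAt).congr_deriv (by ring))
    · -- nonpositivity
      rw [interior_Ioc]
      intro x hx
      have hx1 : (0:ℝ) < x - 1 := sub_pos.mpr hx.1
      have hxm : x ∈ Set.Ioc 1 β := Set.Ioo_subset_Ioc_self hx
      have hpos : 0 < a x := hw.pos x (hsub hxm)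
      have hb := hbound x hxm
      have hK1 : (0:ℝ) < (x - 1) ^ K := Real.rpow_pos_of_pos hx1 K
      have hK2 : (0:ℝ) < (x - 1) ^ (K - 1) := Real.rpow_pos_of_pos hx1 (K - 1)
      have key : a' x * (x - 1) ≤ K * a x :=
        le_trans (by nlinarith [le_abs_self (a' x), abs_nonneg (a' x)]) hb
      have hid : (x - 1) ^ (-K) = (x-1) * (x - 1) ^ (K-1) * ((x-1)^K)⁻¹ * ((x-1)^K)⁻¹ := by
        have h1 : (x-1) * (x-1)^(K-1) = (x-1)^K := by
          nth_rewrite 1 [← Real.rpow_one (x-1)]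
          rw [← Real.rpow_add hx1]; ring_nf
        rw [h1, Real.rpow_neg hx1.le]
        field_simp
      rw [hid]
      have : a' x * ((x - 1) * (x - 1) ^ (K - 1)) ≤ K * a x * (x-1)^(K-1) := by
        calc a' x * ((x - 1) * (x - 1) ^ (K - 1)) = (a' x * (x-1)) * (x-1)^(K-1) := by ring
        _ ≤ K * a x * (x-1)^(K-1) := mul_le_mul_of_nonneg_right key hK2.le
      nlinarith [mul_pos (inv_pos.mpr hK1) (inv_pos.mpr hK1), sq_nonneg ((x-1)^K)⁻¹]
  intro x ⟨hx1, hxβ⟩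
  rcases eq_or_lt_of_le hx1 with h | h
  · rw [← h, sub_self, Real.zero_rpow (ne_of_gt hK), mul_zero, zero_div, hw.zero_at_one]
  · have hxm : x ∈ Set.Ioc 1 β := ⟨h, hxβ⟩
    have := hanti hxm ⟨h1β, le_refl β⟩ hxβ
    have hx1p : (0:ℝ) < x - 1 := sub_pos.mpr h
    have hβ1p : (0:ℝ) < β - 1 := sub_pos.mpr h1β
    have hKx : (0:ℝ) < (x - 1) ^ K := Real.rpow_pos_of_pos hx1p K
    have hKβ : (0:ℝ) < (β - 1) ^ K := Real.rpow_pos_of_pos hβ1p K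
    simp only [hf, Real.rpow_neg hx1p.le, Real.rpow_neg hβ1p.le] at this
    rw [div_le_iff₀ hKβ]
    calc a β * (x - 1) ^ K = (a β * ((β-1)^K)⁻¹) * ((x-1)^K * (β-1)^K) := by
          field_simp
      _ ≤ (a x * ((x-1)^K)⁻¹) * ((x-1)^K * (β-1)^K) := by
          apply mul_le_mul_of_nonneg_right this (by positivity)
      _ = a x * (β - 1) ^ K := by field_simp
  
end
end

section
/- Let a be a weight, let x₁* ∈ [c,1) and x₂* ∈ (1,d], and assume that a is monotonically nonincreasing on [x₁*,1], monotonically nondecreasing on [1,x₂*], and that 2·√(a(x)) ≤ |a'(x)| for all x ∈ [x₁*,x₂*] \ {1}. Then a(x) ≥ (x−1)² for all x ∈ [x₁*,x₂*]. -/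
open MeasureTheory Set Filter Topology

noncomputable section

/-- if `a` is nonincreasing on `[x₁*,1]`, nondecreasing on `[1,x₂*]`
and `2·√(a x) ≤ |a' x|` on `[x₁*,x₂*] \ {1}`, then `a x ≥ (x-1)²` on `[x₁*,x₂*]`. -/
theorem stmt_2 (c d x₁ x₂ : ℝ) (a a' : ℝ → ℝ)
    (hc : 0 ≤ c) (hc1 : c < 1) (h1d : 1 < d) (hd2 : d ≤ 2)
    (hw : IsWeight c d a a')
    (hx₁ : x₁ ∈ Set.Ico c 1) (hx₂ : x₂ ∈ Set.Ioc 1 d)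
    (hdec : AntitoneOn a (Set.Icc x₁ 1))
    (hinc : MonotoneOn a (Set.Icc 1 x₂))
    (hlow : ∀ x ∈ Set.Icc x₁ x₂ \ {1}, 2 * Real.sqrt (a x) ≤ |a' x|) :
    ∀ x ∈ Set.Icc x₁ x₂, (x - 1) ^ 2 ≤ a x := by
  obtain ⟨hx₁c, hx₁1⟩ := hx₁
  obtain ⟨hx₂1, hx₂d⟩ := hx₂
  have hsub : Set.Icc x₁ x₂ ⊆ Set.Icc c d := Set.Icc_subset_Icc hx₁c hx₂d
  have ha_nonneg : ∀ y ∈ Set.Icc c d, 0 ≤ a y := by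
    intro y hy
    by_cases h : y = 1
    · simp [h, hw.zero_at_one]
    · exact (hw.pos y ⟨hy, h⟩).le
  -- full derivative at interior points ≠ 1
  have hDA : ∀ x ∈ Set.Ioo x₁ x₂, x ≠ 1 → HasDerivAt a (a' x) x := by
    intro x hx hx1
    have hmem : x ∈ Set.Icc c d \ {1} :=
      ⟨⟨hx₁c.trans hx.1.le, hx.2.le.trans hx₂d⟩, hx1⟩
    have hnhds : Set.Icc c d \ {1} ∈ 𝓝 x := by
      refine Filter.mem_of_superset
        ((isOpen_Ioo.sdiff isClosed_singleton).mem_nhds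
          ⟨⟨hx₁c.trans_lt hx.1, lt_of_lt_of_le hx.2 hx₂d⟩, hx1⟩) ?_
      exact Set.diff_subset_diff_left Set.Ioo_subset_Icc_self
    exact (hw.hderiv x hmem).hasDerivAt hnhds
  have ha1 : a 1 = 0 := hw.zero_at_one
  intro x hx
  rcases le_or_gt x 1 with hle | hgt
  · -- left side
    have hsubL : Set.Icc x₁ 1 ⊆ Set.Icc c d := Set.Icc_subset_Icc hx₁c h1d.le
    have hcontf : ContinuousOn (fun y => Real.sqrt (a y) + y) (Set.Icc x₁ 1) :=
      (Real.continuous_sqrt.comp_continuousOn (hw.cont.mono hsubL)).add continuousOn_id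
    have hanti : AntitoneOn (fun y => Real.sqrt (a y) + y) (Set.Icc x₁ 1) := by
      refine antitoneOn_of_hasDerivWithinAt_nonpos (convex_Icc x₁ 1) hcontf
        (f' := fun y => a' y / (2 * Real.sqrt (a y)) + 1) ?_ ?_
      · intro y hy
        rw [interior_Icc] at hy
        have hy1 : y ≠ 1 := hy.2.ne
        have hda : HasDerivAt a (a' y) y :=
          hDA y ⟨hy.1, hy.2.trans hx₂1⟩ hy1
        have hapos : 0 < a y :=
          hw.pos y ⟨hsubL (Set.Ioo_subset_Icc_self hy), hy1⟩
        exact ((hda.sqrt hapos.ne').add (hasDerivAt_id y)).hasDerivWithinAt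
      · intro y hy
        rw [interior_Icc] at hy
        have hy1 : y ≠ 1 := hy.2.ne
        have hda : HasDerivAt a (a' y) y :=
          hDA y ⟨hy.1, hy.2.trans hx₂1⟩ hy1
        have hapos : 0 < a y :=
          hw.pos y ⟨hsubL (Set.Ioo_subset_Icc_self hy), hy1⟩
        -- a' y ≤ 0 from antitonicity
        have ha'le : a' y ≤ 0 := by
          have hT : Filter.Tendsto (slope a y) (𝓝[>] y) (𝓝 (a' y)) :=
            (hasDerivAt_iff_tendsto_slope.mp hda).mono_left
              (nhdsWithin_mono y fun z hz => ne_of_gt hz)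
          refine le_of_tendsto hT ?_
          filter_upwards [Ioo_mem_nhdsGT_of_mem ⟨le_refl y, hy.2⟩] with z hz
          have hle' : a z ≤ a y :=
            hdec ⟨hy.1.le, hy.2.le⟩ ⟨(hy.1.trans hz.1).le, hz.2.le⟩ hz.1.le
          rw [slope_def_field]
          rw [div_nonpos_iff]
          right
          constructor
          · field_simp
            linarith
          · linarith [hz.1]
        have hlb := hlow y ⟨⟨hy.1.le, hy.2.le.trans hx₂1.le⟩, hy1⟩
        rw [abs_of_nonpos ha'le] at hlb
        have hs : 0 < 2 * Real.sqrt (a y) := by positivity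
        have : a' y / (2 * Real.sqrt (a y)) ≤ -1 := by
          rw [div_le_iff₀ hs]; linarith
        linarith
    have hxI : x ∈ Set.Icc x₁ 1 := ⟨hx.1, hle⟩
    have h1I : (1 : ℝ) ∈ Set.Icc x₁ 1 := ⟨hx₁1.le, le_refl 1⟩
    have := hanti hxI h1I hle
    simp only [ha1, Real.sqrt_zero, zero_add] at this
    have hnn : 0 ≤ 1 - x := by linarith
    have hsq : Real.sqrt (a x) ^ 2 = a x := Real.sq_sqrt (ha_nonneg x (hsub hx))
    nlinarith [Real.sqrt_nonneg (a x)]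
  · -- right side
    have hsubR : Set.Icc 1 x₂ ⊆ Set.Icc c d := Set.Icc_subset_Icc hc1.le hx₂d
    have hcontf : ContinuousOn (fun y => Real.sqrt (a y) - y) (Set.Icc 1 x₂) :=
      (Real.continuous_sqrt.comp_continuousOn (hw.cont.mono hsubR)).sub continuousOn_id
    have hmono : MonotoneOn (fun y => Real.sqrt (a y) - y) (Set.Icc 1 x₂) := by
      refine monotoneOn_of_hasDerivWithinAt_nonneg (convex_Icc 1 x₂) hcontf
        (f' := fun y => a' y / (2 * Real.sqrt (a y)) - 1) ?_ ?_
      · intro y hy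
        rw [interior_Icc] at hy
        have hy1 : y ≠ 1 := hy.1.ne'
        have hda : HasDerivAt a (a' y) y :=
          hDA y ⟨hx₁1.trans hy.1, hy.2⟩ hy1
        have hapos : 0 < a y :=
          hw.pos y ⟨hsubR (Set.Ioo_subset_Icc_self hy), hy1⟩
        exact ((hda.sqrt hapos.ne').sub (hasDerivAt_id y)).hasDerivWithinAt
      · intro y hy
        rw [interior_Icc] at hy
        have hy1 : y ≠ 1 := hy.1.ne'
        have hda : HasDerivAt a (a' y) y :=
          hDA y ⟨hx₁1.trans hy.1, hy.2⟩ hy1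
        have hapos : 0 < a y :=
          hw.pos y ⟨hsubR (Set.Ioo_subset_Icc_self hy), hy1⟩
        -- a' y ≥ 0 from monotonicity
        have ha'ge : 0 ≤ a' y := by
          have hT : Filter.Tendsto (slope a y) (𝓝[<] y) (𝓝 (a' y)) :=
            (hasDerivAt_iff_tendsto_slope.mp hda).mono_left
              (nhdsWithin_mono y fun z hz => ne_of_lt hz)
          refine ge_of_tendsto hT ?_
          filter_upwards [Ioo_mem_nhdsLT_of_mem ⟨hy.1, le_refl y⟩] with z hz
          have hle' : a z ≤ a y :=
            hinc ⟨hz.1.le, hz.2.le.trans hy.2.le⟩ ⟨hy.1.le, hy.2.le⟩ hz.2.le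
          rw [slope_def_field]
          rw [div_nonneg_iff]
          exact Or.inr ⟨by linarith, by linarith [hz.2]⟩
        have hlb := hlow y ⟨⟨hx₁1.le.trans hy.1.le, hy.2.le⟩, hy1⟩
        rw [abs_of_nonneg ha'ge] at hlb
        have hs : 0 < 2 * Real.sqrt (a y) := by positivity
        have : 1 ≤ a' y / (2 * Real.sqrt (a y)) := by
          rw [le_div_iff₀ hs]; linarith
        linarith
    have hxI : x ∈ Set.Icc 1 x₂ := ⟨hgt.le, hx.2⟩
    have h1I : (1 : ℝ) ∈ Set.Icc 1 x₂ := ⟨le_refl 1, hx₂1.le⟩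
    have := hmono h1I hxI hgt.le
    simp only [ha1, Real.sqrt_zero, zero_sub] at this
    have hnn : 0 ≤ x - 1 := by linarith
    have hsq : Real.sqrt (a x) ^ 2 = a x := Real.sq_sqrt (ha_nonneg x (hsub hx))
    nlinarith [Real.sqrt_nonneg (a x)]

end
end

section
/- Let a be a weight and let μ₁, μ₂ ∈ (0,2] be such that a(x) ≥ a(c)·(1−x)^{μ₁}/(1−c)^{μ₁} for all x ∈ [c,1) and a(x) ≥ a(d)·(x−1)^{μ₂}/(d−1)^{μ₂} for all x ∈ (1,d]. Let y ∈ L²(c,d) be piecewise absolutely continuous with ∫_c^d a(x)·y'(x)² dx < ∞. Then lim_{x↗1} (1−x)·y(x)² = 0 and lim_{x↘1} (x−1)·y(x)² = 0. -/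
open MeasureTheory Set Filter Topology

noncomputable section

lemma sq_inv_integral (β x : ℝ) (hβ : β ≤ x) (hx : x < 1) :
    ∫ t in β..x, ((1 - t) ^ 2)⁻¹ = (1 - x)⁻¹ - (1 - β)⁻¹ := by
  have hderiv : ∀ t ∈ Set.uIcc β x, HasDerivAt (fun u => (1 - u)⁻¹) (((1 - t) ^ 2)⁻¹) t := by
    intro t ht
    rw [Set.uIcc_of_le hβ] at ht
    have h1t : 1 - t ≠ 0 := by have := ht.2; intro h; nlinarith
    have h : HasDerivAt (fun u : ℝ => 1 - u) (-1) t := by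
      simpa using (hasDerivAt_id t).const_sub 1
    have := h.inv h1t
    simpa [Pi.inv_def] using this
  have hint : IntervalIntegrable (fun t => ((1 - t) ^ 2)⁻¹) volume β x := by
    apply ContinuousOn.intervalIntegrable
    apply ContinuousOn.inv₀
    · fun_prop
    · intro t ht
      rw [Set.uIcc_of_le hβ] at ht
      have := ht.2; nlinarith
  exact intervalIntegral.integral_eq_sub_of_hasDerivAt hderiv hint

lemma cs_pointwise (L A w : ℝ) (hL : 0 < L) (hA : 0 < A) (h0 : 0 ≤ w) :
    w ≤ (L * (A * w ^ 2) + L⁻¹ * A⁻¹) / 2 := by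
  have h1 : (L * A) * (L * A)⁻¹ = 1 := mul_inv_cancel₀ (by positivity)
  have h2 : L⁻¹ * A⁻¹ = (L * A)⁻¹ := by rw [mul_inv]
  rw [h2]
  nlinarith [sq_nonneg (L * A * w - 1), mul_pos hL hA, sq_nonneg w]

lemma key_low (C B s μ : ℝ) (hC : 0 < C) (hB : 0 < B) (hs : 0 < s) (hsB : s ≤ B) (hμ : μ ≤ 2) :
    C / B ^ 2 * s ^ 2 ≤ C * s ^ μ / B ^ μ := by
  have h1 : s ^ μ / B ^ μ = (s / B) ^ μ := (Real.div_rpow hs.le hB.le μ).symm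
  have h2 : (s / B) ^ (2:ℝ) ≤ (s / B) ^ μ :=
    Real.rpow_le_rpow_of_exponent_ge (div_pos hs hB) ((div_le_one hB).mpr hsB) hμ
  have h3 : (s / B) ^ (2:ℝ) = s ^ 2 / B ^ 2 := by
    rw [Real.rpow_two, div_pow]
  calc C / B ^ 2 * s ^ 2 = C * (s ^ 2 / B ^ 2) := by ring
    _ ≤ C * (s / B) ^ μ := by rw [← h3]; exact mul_le_mul_of_nonneg_left h2 hC.le
    _ = C * s ^ μ / B ^ μ := by rw [← h1]; ring

set_option maxHeartbeats 1000000 in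
lemma left_aux (c K : ℝ) (a v y : ℝ → ℝ) (hc1 : c < 1) (hK : 0 < K)
    (ha_cont : ContinuousOn a (Set.Ico c 1))
    (hKa : ∀ t ∈ Set.Ico c 1, K * (1 - t) ^ 2 ≤ a t)
    (hInt : ∀ x, c ≤ x → x < 1 → IntegrableOn v (Set.Icc c x))
    (hFTC : ∀ β x, c ≤ β → β ≤ x → x < 1 → y x = y β + ∫ t in β..x, v t)
    (hE : IntegrableOn (fun t => a t * v t ^ 2) (Set.Ioo c 1)) :
    Tendsto (fun x => (1 - x) * y x ^ 2) (𝓝[<] (1:ℝ)) (𝓝 0) := by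
  set g : ℝ → ℝ := fun t => a t * v t ^ 2 with hg_def
  have ha_pos : ∀ t ∈ Set.Ico c 1, 0 < a t := by
    intro t ht
    have h1 := hKa t ht
    have h2 : (0:ℝ) < 1 - t := by linarith [ht.2]
    have : 0 < K * (1 - t) ^ 2 := by positivity
    linarith
  have hg_nonneg : ∀ t ∈ Set.Ico c 1, 0 ≤ g t := by
    intro t ht
    have := ha_pos t ht
    positivity
  have hgIcc : IntegrableOn g (Set.Icc c 1) := by
    rwa [integrableOn_Icc_iff_integrableOn_Ioo]
  -- Step A : tail energy tends to 0
  have hEtend : Tendsto (fun b => ∫ t in Set.Ioo b 1, g t) (𝓝[<] (1:ℝ)) (𝓝 0) := by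
    set P : ℝ → ℝ := fun b => ∫ t in Set.Ioc c b, g t with hP_def
    have hPcont : ContinuousOn P (Set.Icc c 1) := intervalIntegral.continuousOn_primitive hgIcc
    have hPtend : Tendsto P (𝓝[<] (1:ℝ)) (𝓝 (P 1)) := by
      have h1 : Tendsto P (𝓝[Set.Icc c 1] (1:ℝ)) (𝓝 (P 1)) :=
        (hPcont 1 ⟨hc1.le, le_rfl⟩).tendsto
      rw [← nhdsWithin_Ioo_eq_nhdsLT hc1]
      exact h1.mono_left (nhdsWithin_mono _ Set.Ioo_subset_Icc_self)
    have key : ∀ b ∈ Set.Ioo c 1, ∫ t in Set.Ioo b 1, g t = P 1 - P b := by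
      intro b hb
      have hint1 : IntegrableOn g (Set.Ioc c b) :=
        hgIcc.mono_set (Set.Ioc_subset_Icc_self.trans (Set.Icc_subset_Icc_right hb.2.le))
      have hint2 : IntegrableOn g (Set.Ioc b 1) :=
        hgIcc.mono_set ((Set.Ioc_subset_Ioc_left hb.1.le).trans Set.Ioc_subset_Icc_self)
      have hsplit : P 1 = P b + ∫ t in Set.Ioc b 1, g t := by
        rw [hP_def]
        rw [← MeasureTheory.setIntegral_union (Set.Ioc_disjoint_Ioc_of_le le_rfl) measurableSet_Ioc
          hint1 hint2, Set.Ioc_union_Ioc_eq_Ioc hb.1.le hb.2.le]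
      rw [← MeasureTheory.integral_Ioc_eq_integral_Ioo]
      linarith
    have h2 : Tendsto (fun b => P 1 - P b) (𝓝[<] (1:ℝ)) (𝓝 0) := by
      have h3 := (tendsto_const_nhds (x := P 1)).sub hPtend
      simpa using h3
    apply h2.congr'
    filter_upwards [Ioo_mem_nhdsLT_of_mem (show (1:ℝ) ∈ Set.Ioc c 1 from ⟨hc1, le_rfl⟩)] with b hb
    exact (key b hb).symm
  -- Main argument
  rw [NormedAddCommGroup.tendsto_nhds_zero]
  intro ε hε
  set ε₀ : ℝ := K * ε / 8 with hε₀_def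
  have hε₀ : 0 < ε₀ := by rw [hε₀_def]; positivity
  clear_value ε₀
  have hev : ∀ᶠ b in 𝓝[<] (1:ℝ), (∫ t in Set.Ioo b 1, g t) < ε₀ ∧ b ∈ Set.Ioo c 1 := by
    refine (hEtend.eventually (gt_mem_nhds hε₀)).and ?_
    exact Ioo_mem_nhdsLT_of_mem ⟨hc1, le_rfl⟩
  obtain ⟨β, hβE, hβmem⟩ := hev.exists
  set E : ℝ := ∫ t in Set.Ioo β 1, g t with hE_def
  have hEnn : 0 ≤ E := by
    apply MeasureTheory.setIntegral_nonneg measurableSet_Ioo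
    intro t ht
    exact hg_nonneg t ⟨le_of_lt (lt_of_le_of_lt hβmem.1.le ht.1), ht.2⟩
  set E' : ℝ := E + ε₀ with hE'_def
  have hE' : 0 < E' := by rw [hE'_def]; positivity
  clear_value E E'
  set δ : ℝ := ε / (4 * (y β ^ 2 + 1)) with hδ_def
  have hδ : 0 < δ := by rw [hδ_def]; positivity
  clear_value δ
  have hβc : c ≤ β := hβmem.1.le
  have hβ1 : β < 1 := hβmem.2
  have hmax1 : max β (1 - δ) < 1 := by
    apply max_lt hβ1; linarith
  filter_upwards [Ioo_mem_nhdsLT_of_mem (show (1:ℝ) ∈ Set.Ioc (max β (1-δ)) 1 from ⟨hmax1, le_rfl⟩)]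
    with x hx
  have hβx : β < x := lt_of_le_of_lt (le_max_left _ _) hx.1
  have hxδ : 1 - δ < x := lt_of_le_of_lt (le_max_right _ _) hx.1
  have hx1 : x < 1 := hx.2
  have hcx : c ≤ x := le_trans hβc hβx.le
  -- integrability facts on s := Ioc β x
  have hsub1 : Set.Ioc β x ⊆ Set.Icc β x := Set.Ioc_subset_Icc_self
  have hsubIco : Set.Icc β x ⊆ Set.Ico c 1 := fun t ht => ⟨le_trans hβc ht.1, lt_of_le_of_lt ht.2 hx1⟩
  have hsubIoo : Set.Ioc β x ⊆ Set.Ioo β 1 := fun t ht => ⟨ht.1, lt_of_le_of_lt ht.2 hx1⟩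
  have hsubIooc : Set.Ioo β 1 ⊆ Set.Ioo c 1 := Set.Ioo_subset_Ioo_left hβc
  have hvInt : IntegrableOn v (Set.Ioc β x) :=
    (hInt x hcx hx1).mono_set ((hsub1.trans (Set.Icc_subset_Icc_left hβc)))
  have haInv_cont : ContinuousOn (fun t => (a t)⁻¹) (Set.Icc β x) := by
    apply ContinuousOn.inv₀ (ha_cont.mono hsubIco)
    exact fun t ht => ne_of_gt (ha_pos t (hsubIco ht))
  have haInvInt : IntegrableOn (fun t => (a t)⁻¹) (Set.Ioc β x) :=
    (haInv_cont.integrableOn_Icc).mono_set hsub1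
  have hgInt : IntegrableOn g (Set.Ioc β x) :=
    hE.mono_set (hsubIoo.trans hsubIooc)
  -- the quantities
  set I : ℝ := ∫ t in Set.Ioc β x, |v t| with hI_def
  have hI0 : 0 ≤ I := by
    rw [hI_def]
    apply MeasureTheory.setIntegral_nonneg measurableSet_Ioc
    intro t _; exact abs_nonneg _
  clear_value I
  set Q : ℝ := K⁻¹ * (1 - x)⁻¹ with hQ_def
  have hQ : 0 < Q := by
    rw [hQ_def]
    have : 0 < 1 - x := by linarith
    positivity
  clear_value Q
  set lam : ℝ := Real.sqrt Q / Real.sqrt E' with hlam_def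
  have hlam : 0 < lam := by rw [hlam_def]; positivity
  clear_value lam
  -- bound on ∫ 1/a
  have bound1 : ∫ t in Set.Ioc β x, (a t)⁻¹ ≤ Q := by
    have hmono : ∫ t in Set.Ioc β x, (a t)⁻¹ ≤ ∫ t in Set.Ioc β x, K⁻¹ * ((1 - t) ^ 2)⁻¹ := by
      apply MeasureTheory.setIntegral_mono_on haInvInt _ measurableSet_Ioc
      · intro t ht
        have htm := hsubIco (hsub1 ht)
        have h1 := hKa t htm
        have ha := ha_pos t htm
        have h2 : 0 < 1 - t := by have := htm.2; linarith
        rw [← mul_inv]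
        exact inv_anti₀ (by positivity) h1
      · have hcont2 : ContinuousOn (fun t => K⁻¹ * ((1 - t) ^ 2)⁻¹) (Set.Icc β x) := by
          apply continuousOn_const.mul
          apply ContinuousOn.inv₀
          · fun_prop
          · intro t ht
            have h2 : t < 1 := (hsubIco ht).2
            exact pow_ne_zero 2 (ne_of_gt (by linarith))
        exact (hcont2.integrableOn_Icc).mono_set hsub1
    have heval : ∫ t in Set.Ioc β x, K⁻¹ * ((1 - t) ^ 2)⁻¹ = K⁻¹ * ((1 - x)⁻¹ - (1 - β)⁻¹) := by
      rw [← intervalIntegral.integral_of_le hβx.le, intervalIntegral.integral_const_mul,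
        sq_inv_integral β x hβx.le hx1]
    rw [heval] at hmono
    have : K⁻¹ * ((1 - x)⁻¹ - (1 - β)⁻¹) ≤ Q := by
      rw [hQ_def]
      have h0β : 0 < 1 - β := by linarith
      have h1β : 0 < (1 - β)⁻¹ := by positivity
      have hKinv : 0 < K⁻¹ := by positivity
      nlinarith
    linarith
  -- bound on ∫ g
  have bound2 : ∫ t in Set.Ioc β x, g t ≤ E := by
    rw [hE_def]
    apply MeasureTheory.setIntegral_mono_set (hE.mono_set hsubIooc)
    · exact MeasureTheory.ae_restrict_of_forall_mem measurableSet_Ioo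
        fun t ht => hg_nonneg t ⟨le_trans hβc ht.1.le, ht.2⟩
    · exact HasSubset.Subset.eventuallyLE hsubIoo
  -- pointwise Cauchy-Schwarz
  have hpt : ∀ t ∈ Set.Ioc β x, |v t| ≤ (lam * g t + lam⁻¹ * (a t)⁻¹) / 2 := by
    intro t ht
    have htm := hsubIco (hsub1 ht)
    have hA := ha_pos t htm
    have h := cs_pointwise lam (a t) |v t| hlam hA (abs_nonneg _)
    rwa [sq_abs] at h
  have hIle : I ≤ Real.sqrt Q * Real.sqrt E' := by
    have hrhsInt : Integrable (fun t => (lam * g t + lam⁻¹ * (a t)⁻¹) / 2)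
        (volume.restrict (Set.Ioc β x)) :=
      ((hgInt.const_mul lam).add (haInvInt.const_mul lam⁻¹)).div_const 2
    have h1 : I ≤ ∫ t in Set.Ioc β x, (lam * g t + lam⁻¹ * (a t)⁻¹) / 2 := by
      rw [hI_def]
      apply MeasureTheory.integral_mono_of_nonneg
      · exact Filter.Eventually.of_forall fun t => abs_nonneg _
      · exact hrhsInt
      · exact MeasureTheory.ae_restrict_of_forall_mem measurableSet_Ioc hpt
    have h2 : ∫ t in Set.Ioc β x, (lam * g t + lam⁻¹ * (a t)⁻¹) / 2
        = (lam * ∫ t in Set.Ioc β x, g t) / 2 + (lam⁻¹ * ∫ t in Set.Ioc β x, (a t)⁻¹) / 2 := by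
      rw [MeasureTheory.integral_div,
        MeasureTheory.integral_add (hgInt.const_mul lam) (haInvInt.const_mul lam⁻¹),
        MeasureTheory.integral_const_mul, MeasureTheory.integral_const_mul]
      ring
    have hEE' : (∫ t in Set.Ioc β x, g t) ≤ E' := by
      have : E ≤ E' := by rw [hE'_def]; linarith
      linarith [bound2]
    have h3 : (lam * ∫ t in Set.Ioc β x, g t) / 2 + (lam⁻¹ * ∫ t in Set.Ioc β x, (a t)⁻¹) / 2
        ≤ (lam * E') / 2 + (lam⁻¹ * Q) / 2 := by
      have hl1 : lam * (∫ t in Set.Ioc β x, g t) ≤ lam * E' :=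
        mul_le_mul_of_nonneg_left hEE' hlam.le
      have hl2 : lam⁻¹ * (∫ t in Set.Ioc β x, (a t)⁻¹) ≤ lam⁻¹ * Q :=
        mul_le_mul_of_nonneg_left bound1 (by positivity)
      linarith
    have e1 : lam * E' = Real.sqrt Q * Real.sqrt E' := by
      rw [hlam_def, div_mul_eq_mul_div, mul_div_assoc, Real.div_sqrt]
    have e2 : lam⁻¹ * Q = Real.sqrt Q * Real.sqrt E' := by
      rw [hlam_def, inv_div, div_mul_eq_mul_div, mul_div_assoc, Real.div_sqrt]; ring
    rw [h2] at h1
    linarith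
  have hI2 : I ^ 2 ≤ Q * E' := by
    calc I ^ 2 ≤ (Real.sqrt Q * Real.sqrt E') ^ 2 := pow_le_pow_left₀ hI0 hIle 2
      _ = Q * E' := by rw [mul_pow, Real.sq_sqrt hQ.le, Real.sq_sqrt hE'.le]
  -- FTC and conclusion
  have hyx : y x = y β + ∫ t in β..x, v t := hFTC β x hβc hβx.le hx1
  set J : ℝ := ∫ t in β..x, v t with hJ_def
  clear_value J
  have hJI : |J| ≤ I := by
    have h1 : |J| ≤ ∫ t in β..x, |v t| := by
      rw [hJ_def]
      exact intervalIntegral.abs_integral_le_integral_abs hβx.le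
    have h2 : ∫ t in β..x, |v t| = I := by
      rw [hI_def, intervalIntegral.integral_of_le hβx.le]
    linarith
  have hJ2 : J ^ 2 ≤ I ^ 2 := by
    have h := abs_le.mp hJI
    exact sq_le_sq' (by linarith) h.2
  have hy2 : y x ^ 2 ≤ 2 * y β ^ 2 + 2 * I ^ 2 := by
    rw [hyx]
    nlinarith [sq_nonneg (y β - J), hJ2]
  have h1x : 0 < 1 - x := by linarith
  have hterm1 : (1 - x) * (2 * y β ^ 2) ≤ 2 * δ * y β ^ 2 := by
    nlinarith [sq_nonneg (y β)]
  have hδ2 : 2 * δ * y β ^ 2 < ε / 2 := by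
    have hpos : (0:ℝ) < 4 * (y β ^ 2 + 1) := by positivity
    have hq : 0 < δ := hδ
    have hcanc : δ * (4 * (y β ^ 2 + 1)) = ε := by
      rw [hδ_def]; field_simp
    nlinarith [sq_nonneg (y β)]
  have hterm2 : (1 - x) * (2 * I ^ 2) < ε / 2 := by
    have h5 : (1 - x) * I ^ 2 ≤ (1 - x) * (Q * E') := mul_le_mul_of_nonneg_left hI2 h1x.le
    have h6 : (1 - x) * (Q * E') = K⁻¹ * E' := by
      rw [hQ_def]
      field_simp
    have h7 : K⁻¹ * E' < K⁻¹ * (2 * ε₀) := by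
      apply mul_lt_mul_of_pos_left _ (by positivity)
      rw [hE'_def]; linarith
    have h8 : K⁻¹ * (2 * ε₀) = ε / 4 := by
      rw [hε₀_def]; field_simp; ring
    nlinarith
  have hfx : 0 ≤ (1 - x) * y x ^ 2 := by positivity
  rw [Real.norm_eq_abs, abs_of_nonneg hfx]
  have hmul := mul_le_mul_of_nonneg_left hy2 h1x.le
  have hsum : (1 - x) * (2 * y β ^ 2 + 2 * I ^ 2)
      = (1 - x) * (2 * y β ^ 2) + (1 - x) * (2 * I ^ 2) := by ring
  linarith

/-- `u` is piecewise absolutely continuous on `(c,d)` with a.e. derivative `u'`: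
it is absolutely continuous (i.e. the fundamental theorem of calculus holds with
integrable derivative `u'`) on every compact subinterval of `[c,1)` and of `(1,d]`. -/
def PiecewiseAC (c d : ℝ) (u u' : ℝ → ℝ) : Prop :=
  (∀ β, c ≤ β → β < 1 →
    MeasureTheory.IntegrableOn u' (Set.Icc c β) ∧
    ∀ x ∈ Set.Icc c β, u x = u c + ∫ t in c..x, u' t) ∧
  (∀ α, 1 < α → α ≤ d →
    MeasureTheory.IntegrableOn u' (Set.Icc α d) ∧
    ∀ x ∈ Set.Icc α d, u x = u α + ∫ t in α..x, u' t)


/-- under the power-type lower bounds on `a`, any finite-energy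
piecewise absolutely continuous `y ∈ L²(c,d)` satisfies
`(1-x)·y(x)² → 0` as `x ↗ 1` and `(x-1)·y(x)² → 0` as `x ↘ 1`. -/
theorem stmt_8 (c d μ₁ μ₂ : ℝ) (a a' y y' : ℝ → ℝ)
    (hc : 0 ≤ c) (hc1 : c < 1) (h1d : 1 < d) (hd2 : d ≤ 2)
    (hw : IsWeight c d a a')
    (hμ₁ : μ₁ ∈ Set.Ioc 0 2) (hμ₂ : μ₂ ∈ Set.Ioc 0 2)
    (hlow₁ : ∀ x ∈ Set.Ico c 1, a c * (1 - x) ^ μ₁ / (1 - c) ^ μ₁ ≤ a x)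
    (hlow₂ : ∀ x ∈ Set.Ioc 1 d, a d * (x - 1) ^ μ₂ / (d - 1) ^ μ₂ ≤ a x)
    (hy2 : MeasureTheory.MemLp y 2 (volume.restrict (Set.Ioo c d)))
    (hAC : PiecewiseAC c d y y')
    (hint : MeasureTheory.IntegrableOn (fun x => a x * y' x ^ 2) (Set.Ioo c d)) :
    Filter.Tendsto (fun x => (1 - x) * y x ^ 2) (𝓝[<] 1) (𝓝 0) ∧
    Filter.Tendsto (fun x => (x - 1) * y x ^ 2) (𝓝[>] 1) (𝓝 0) := by
  have hac : 0 < a c := hw.pos c ⟨⟨le_rfl, by linarith⟩, by simp; exact ne_of_lt hc1⟩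
  have had : 0 < a d := hw.pos d ⟨⟨by linarith, le_rfl⟩, by simp; exact ne_of_gt h1d⟩
  have hrefl : ∀ (f : ℝ → ℝ) (s : Set ℝ), IntegrableOn f s volume →
      IntegrableOn (fun t => f (2 - t)) ((fun t : ℝ => 2 - t) ⁻¹' s) volume := by
    intro f s h
    have e : MeasurableEmbedding (fun x : ℝ => 2 - x) :=
      (MeasurableEquiv.subLeft (2:ℝ)).measurableEmbedding
    exact ((Measure.measurePreserving_sub_left volume 2).integrableOn_comp_preimage e).mpr h
  constructor
  · -- left limit
    apply left_aux c (a c / (1 - c) ^ 2) a y' y hc1 (div_pos hac (pow_pos (by linarith) 2))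
    · exact hw.cont.mono (fun t ht => ⟨ht.1, by linarith [ht.2]⟩)
    · intro t ht
      have h1 := hlow₁ t ht
      have h2 : a c / (1 - c) ^ 2 * (1 - t) ^ 2 ≤ a c * (1 - t) ^ μ₁ / (1 - c) ^ μ₁ :=
        key_low (a c) (1 - c) (1 - t) μ₁ hac (by linarith)
          (by linarith [ht.2]) (by linarith [ht.1]) hμ₁.2
      linarith
    · intro x hcx hx1
      exact (hAC.1 x hcx hx1).1
    · intro β x hcβ hβx hx1
      obtain ⟨hi, hf⟩ := hAC.1 x (le_trans hcβ hβx) hx1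
      have hbx := hf x ⟨le_trans hcβ hβx, le_rfl⟩
      have hbβ := hf β ⟨hcβ, hβx⟩
      have i1 : IntervalIntegrable y' volume c β :=
        (intervalIntegrable_iff_integrableOn_Icc_of_le hcβ).mpr
          (hi.mono_set (Set.Icc_subset_Icc_right hβx))
      have i2 : IntervalIntegrable y' volume β x :=
        (intervalIntegrable_iff_integrableOn_Icc_of_le hβx).mpr
          (hi.mono_set (Set.Icc_subset_Icc_left hcβ))
      have hsplit := intervalIntegral.integral_add_adjacent_intervals i1 i2
      linarith
    · exact hint.mono_set (fun t ht => ⟨ht.1, lt_trans ht.2 h1d⟩)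
  · -- right limit
    have key : Tendsto (fun x => (1 - x) * (y (2 - x)) ^ 2) (𝓝[<] (1:ℝ)) (𝓝 0) := by
      apply left_aux (2 - d) (a d / (d - 1) ^ 2) (fun t => a (2 - t)) (fun t => -y' (2 - t))
        (fun t => y (2 - t)) (by linarith) (div_pos had (pow_pos (by linarith) 2))
      · apply hw.cont.comp ((continuous_const.sub continuous_id).continuousOn)
        intro t ht
        show (2 - t) ∈ Set.Icc c d
        exact Set.mem_Icc.mpr ⟨by linarith [ht.2, hc1], by linarith [ht.1]⟩
      · intro t ht
        have h2t : 2 - t ∈ Set.Ioc 1 d := ⟨by linarith [ht.2], by linarith [ht.1]⟩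
        have h1 := hlow₂ (2 - t) h2t
        have h3 : (2 - t - 1 : ℝ) = 1 - t := by ring
        rw [h3] at h1
        have h2 : a d / (d - 1) ^ 2 * (1 - t) ^ 2 ≤ a d * (1 - t) ^ μ₂ / (d - 1) ^ μ₂ :=
          key_low (a d) (d - 1) (1 - t) μ₂ had (by linarith)
            (by linarith [ht.2]) (by linarith [ht.1]) hμ₂.2
        linarith
      · intro x h2dx hx1
        have h1 : (1:ℝ) < 2 - x := by linarith
        have h2 : 2 - x ≤ d := by linarith
        have hi := (hAC.2 (2 - x) h1 h2).1
        have h3 := hrefl y' (Set.Icc (2 - x) d) hi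
        have hpre : (fun t : ℝ => 2 - t) ⁻¹' Set.Icc (2 - x) d = Set.Icc (2 - d) x := by
          ext t
          simp only [Set.mem_preimage, Set.mem_Icc]
          constructor <;> intro h <;> exact ⟨by linarith [h.1, h.2], by linarith [h.1, h.2]⟩
        rw [hpre] at h3
        exact h3.neg
      · intro β x h2dβ hβx hx1
        have h1 : (1:ℝ) < 2 - x := by linarith
        have h2 : 2 - x ≤ d := by linarith
        obtain ⟨hi, hf⟩ := hAC.2 (2 - x) h1 h2
        have hb := hf (2 - β) ⟨by linarith, by linarith⟩
        show y (2 - x) = y (2 - β) + ∫ t in β..x, -y' (2 - t)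
        have hcomp : (∫ t in β..x, -y' (2 - t)) = -∫ t in (2 - x)..(2 - β), y' t := by
          rw [intervalIntegral.integral_neg, intervalIntegral.integral_comp_sub_left y' 2]
        rw [hcomp]
        linarith
      · have h1 := hint.mono_set
          (show Set.Ioo 1 d ⊆ Set.Ioo c d from fun t ht => ⟨lt_trans hc1 ht.1, ht.2⟩)
        have h2 := hrefl (fun x => a x * y' x ^ 2) (Set.Ioo 1 d) h1
        have hpre : (fun t : ℝ => 2 - t) ⁻¹' Set.Ioo 1 d = Set.Ioo (2 - d) 1 := by
          ext t
          simp only [Set.mem_preimage, Set.mem_Ioo]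
          constructor <;> intro h <;> exact ⟨by linarith [h.1, h.2], by linarith [h.1, h.2]⟩
        rw [hpre] at h2
        have heq : (fun t => a (2 - t) * (-y' (2 - t)) ^ 2)
            = (fun t => a (2 - t) * y' (2 - t) ^ 2) := by
          funext t; rw [neg_sq]
        rw [heq]
        exact h2
    have hmap : Tendsto (fun x : ℝ => 2 - x) (𝓝[>] (1:ℝ)) (𝓝[<] (1:ℝ)) := by
      apply tendsto_nhdsWithin_of_tendsto_nhds_of_eventually_within
      · have h2 : Tendsto (fun x : ℝ => 2 - x) (𝓝 1) (𝓝 1) := by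
          have h := (by fun_prop : Continuous (fun x : ℝ => 2 - x)).tendsto (1:ℝ)
          norm_num at h
          exact h
        exact h2.mono_left nhdsWithin_le_nhds
      · filter_upwards [self_mem_nhdsWithin] with x hx
        have h1 : (1:ℝ) < x := hx
        simp only [Set.mem_Iio]
        linarith
    have hcomp := key.comp hmap
    apply hcomp.congr
    intro x
    show (1 - (2 - x)) * y (2 - (2 - x)) ^ 2 = (x - 1) * y x ^ 2
    have h1 : (2:ℝ) - (2 - x) = x := by ring
    rw [h1]
    ring

end
end

section
/- (Strong degeneration, vanishing flux.) Let a be a weight such that ∫_x^1 (1/a(s)) ds = +∞ for every x ∈ [c,1) and ∫_1^x (1/a(s)) ds = +∞ for every x ∈ (1,d]. Let y be piecewise absolutely continuous with ∫_c^d a(x)·y'(x)² dx < ∞, and suppose that the function x ↦ a(x)·y'(x) (defined for x ≠ 1) extends continuously to each of the intervals [c,1] and [1,d]. Then lim_{x↗1} a(x)·y'(x) = 0 and lim_{x↘1} a(x)·y'(x) = 0. -/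
open MeasureTheory Set Filter Topology
open scoped ENNReal NNReal

noncomputable section

lemma aux_contra {a y' : ℝ → ℝ} {s : Set ℝ} {ε : ℝ} (hε : 0 < ε)
    (hs : MeasurableSet s)
    (hpos : ∀ x ∈ s, 0 < a x) (hbig : ∀ x ∈ s, ε ≤ |a x * y' x|)
    (htop : ∫⁻ x in s, ENNReal.ofReal (1 / a x) = ⊤)
    (hfin : ∫⁻ x in s, ENNReal.ofReal (a x * y' x ^ 2) ≠ ⊤) : False := by
  have h1 : ∀ x ∈ s, ENNReal.ofReal (ε^2) * ENNReal.ofReal (1 / a x)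
      ≤ ENNReal.ofReal (a x * y' x ^ 2) := by
    intro x hx
    rw [← ENNReal.ofReal_mul (by positivity)]
    apply ENNReal.ofReal_le_ofReal
    have hax := hpos x hx
    have h2 : ε^2 ≤ (a x * y' x)^2 := by
      calc ε^2 ≤ |a x * y' x|^2 := pow_le_pow_left₀ hε.le (hbig x hx) 2
      _ = _ := sq_abs _
    calc ε^2 * (1/a x) ≤ (a x * y' x)^2 * (1/a x) :=
          mul_le_mul_of_nonneg_right h2 (by positivity)
    _ = a x * y' x ^ 2 := by field_simp
  have hT : (⊤ : ℝ≥0∞) ≤ ∫⁻ x in s, ENNReal.ofReal (a x * y' x ^ 2) := by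
    calc (⊤:ℝ≥0∞) = ENNReal.ofReal (ε^2) * ∫⁻ x in s, ENNReal.ofReal (1/a x) := by
          rw [htop, ENNReal.mul_top (ENNReal.ofReal_pos.mpr (by positivity)).ne']
    _ = ∫⁻ x in s, ENNReal.ofReal (ε^2) * ENNReal.ofReal (1/a x) :=
          (lintegral_const_mul' _ _ ENNReal.ofReal_ne_top).symm
    _ ≤ _ := by
          refine lintegral_mono_ae ?_
          filter_upwards [ae_restrict_mem hs] with x hx using h1 x hx
  exact hfin (top_le_iff.mp hT)

/-- Strong degeneration, vanishing flux: if `∫_x^1 1/a = +∞` for all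
`x ∈ [c,1)` and `∫_1^x 1/a = +∞` for all `x ∈ (1,d]`, and `a·y'` extends continuously
to `[c,1]` and to `[1,d]`, then the flux `a·y'` tends to `0` from both sides of `1`. -/
theorem stmt_10 (c d : ℝ) (a a' y y' : ℝ → ℝ)
    (hc : 0 ≤ c) (hc1 : c < 1) (h1d : 1 < d) (hd2 : d ≤ 2)
    (hw : IsWeight c d a a')
    (hstrong₁ : ∀ x ∈ Set.Ico c 1,
      ∫⁻ s in Set.Ioo x 1, ENNReal.ofReal (1 / a s) = ⊤)
    (hstrong₂ : ∀ x ∈ Set.Ioc 1 d,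
      ∫⁻ s in Set.Ioo 1 x, ENNReal.ofReal (1 / a s) = ⊤)
    (hAC : PiecewiseAC c d y y')
    (hint : MeasureTheory.IntegrableOn (fun x => a x * y' x ^ 2) (Set.Ioo c d))
    (hext : ∃ g₁ g₂ : ℝ → ℝ,
      ContinuousOn g₁ (Set.Icc c 1) ∧ ContinuousOn g₂ (Set.Icc 1 d) ∧
      (∀ x ∈ Set.Ico c 1, g₁ x = a x * y' x) ∧
      (∀ x ∈ Set.Ioc 1 d, g₂ x = a x * y' x)) :
    Filter.Tendsto (fun x => a x * y' x) (𝓝[<] 1) (𝓝 0) ∧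
    Filter.Tendsto (fun x => a x * y' x) (𝓝[>] 1) (𝓝 0) := by
  obtain ⟨g₁, g₂, hg₁, hg₂, he₁, he₂⟩ := hext
  -- finiteness of the lintegral of a*y'^2 over any subset of Ioo c d
  have hfin : ∀ s : Set ℝ, s ⊆ Set.Ioo c d →
      ∫⁻ x in s, ENNReal.ofReal (a x * y' x ^ 2) ≠ ⊤ := by
    intro s hsub
    have h1 : ∫⁻ x in s, ENNReal.ofReal (a x * y' x ^ 2)
        ≤ ∫⁻ x in Set.Ioo c d, ‖a x * y' x ^ 2‖ₑ := by
      refine le_trans (lintegral_mono_set hsub) (lintegral_mono fun x => ?_)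
      rw [Real.enorm_eq_ofReal_abs]
      exact ENNReal.ofReal_le_ofReal (le_abs_self _)
    have h2 := hint.2
    rw [MeasureTheory.HasFiniteIntegral] at h2
    exact (h1.trans_lt h2).ne
  constructor
  · -- left limit
    have hmem : Set.Ioo c 1 ∈ 𝓝[<] (1:ℝ) :=
      Ioo_mem_nhdsLT_of_mem ⟨hc1, le_refl 1⟩
    have hle : 𝓝[<] (1:ℝ) ≤ 𝓝[Set.Icc c 1] 1 :=
      nhdsWithin_le_of_mem (mem_of_superset hmem Set.Ioo_subset_Icc_self)
    have htg : Filter.Tendsto g₁ (𝓝[<] (1:ℝ)) (𝓝 (g₁ 1)) :=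
      ((hg₁ 1 (Set.right_mem_Icc.mpr hc1.le)).tendsto).mono_left hle
    have heq : (fun x => a x * y' x) =ᶠ[𝓝[<] (1:ℝ)] g₁ := by
      filter_upwards [hmem] with x hx
      exact (he₁ x ⟨hx.1.le, hx.2⟩).symm
    have htg' : Filter.Tendsto (fun x => a x * y' x) (𝓝[<] (1:ℝ)) (𝓝 (g₁ 1)) :=
      htg.congr' heq.symm
    have hL : g₁ 1 = 0 := by
      by_contra hL
      set ε := |g₁ 1| / 2 with hεdef
      have hε : 0 < ε := by
        have := abs_pos.mpr hL; simp only [hεdef]; linarith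
      have hev : ∀ᶠ x in 𝓝[<] (1:ℝ), ε ≤ |a x * y' x| := by
        have habs : Filter.Tendsto (fun x => |a x * y' x|) (𝓝[<] (1:ℝ)) (𝓝 |g₁ 1|) :=
          htg'.abs
        have : ∀ᶠ z in 𝓝 |g₁ 1|, ε < z :=
          eventually_gt_nhds (by have := abs_pos.mpr hL; simp only [hεdef]; linarith)
        filter_upwards [habs.eventually this] with x hx using hx.le
      obtain ⟨l, hl, hsub⟩ := mem_nhdsLT_iff_exists_Ioo_subset.mp
        (hev.and hmem : {x | ε ≤ |a x * y' x|} ∩ Set.Ioo c 1 ∈ 𝓝[<] (1:ℝ))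
      set x₁ := max c l with hx₁
      have hx₁lt : x₁ < 1 := max_lt hc1 hl
      have hsub' : Set.Ioo x₁ 1 ⊆ {x | ε ≤ |a x * y' x|} ∩ Set.Ioo c 1 := fun x hx =>
        hsub ⟨lt_of_le_of_lt (le_max_right c l) hx.1, hx.2⟩
      refine aux_contra hε measurableSet_Ioo (fun x hx => ?_) (fun x hx => (hsub' hx).1)
        (hstrong₁ x₁ ⟨le_max_left c l, hx₁lt⟩) (hfin _ ?_)
      · exact hw.pos x ⟨⟨(le_max_left c l).trans hx.1.le, hx.2.le.trans h1d.le⟩, hx.2.ne⟩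
      · exact fun x hx => ⟨(hsub' hx).2.1, hx.2.trans h1d⟩
    rw [hL] at htg'; exact htg'
  · -- right limit
    have hmem : Set.Ioo 1 d ∈ 𝓝[>] (1:ℝ) :=
      Ioo_mem_nhdsGT_of_mem ⟨le_refl 1, h1d⟩
    have hle : 𝓝[>] (1:ℝ) ≤ 𝓝[Set.Icc 1 d] 1 :=
      nhdsWithin_le_of_mem (mem_of_superset hmem Set.Ioo_subset_Icc_self)
    have htg : Filter.Tendsto g₂ (𝓝[>] (1:ℝ)) (𝓝 (g₂ 1)) :=
      ((hg₂ 1 (Set.left_mem_Icc.mpr h1d.le)).tendsto).mono_left hle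
    have heq : (fun x => a x * y' x) =ᶠ[𝓝[>] (1:ℝ)] g₂ := by
      filter_upwards [hmem] with x hx
      exact (he₂ x ⟨hx.1, hx.2.le⟩).symm
    have htg' : Filter.Tendsto (fun x => a x * y' x) (𝓝[>] (1:ℝ)) (𝓝 (g₂ 1)) :=
      htg.congr' heq.symm
    have hL : g₂ 1 = 0 := by
      by_contra hL
      set ε := |g₂ 1| / 2 with hεdef
      have hε : 0 < ε := by
        have := abs_pos.mpr hL; simp only [hεdef]; linarith
      have hev : ∀ᶠ x in 𝓝[>] (1:ℝ), ε ≤ |a x * y' x| := by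
        have habs : Filter.Tendsto (fun x => |a x * y' x|) (𝓝[>] (1:ℝ)) (𝓝 |g₂ 1|) :=
          htg'.abs
        have : ∀ᶠ z in 𝓝 |g₂ 1|, ε < z :=
          eventually_gt_nhds (by have := abs_pos.mpr hL; simp only [hεdef]; linarith)
        filter_upwards [habs.eventually this] with x hx using hx.le
      obtain ⟨u, hu, hsub⟩ := mem_nhdsGT_iff_exists_Ioo_subset.mp
        (hev.and hmem : {x | ε ≤ |a x * y' x|} ∩ Set.Ioo 1 d ∈ 𝓝[>] (1:ℝ))
      set x₁ := min d u with hx₁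
      have hx₁gt : 1 < x₁ := lt_min h1d hu
      have hsub' : Set.Ioo 1 x₁ ⊆ {x | ε ≤ |a x * y' x|} ∩ Set.Ioo 1 d := fun x hx =>
        hsub ⟨hx.1, lt_of_lt_of_le hx.2 (min_le_right d u)⟩
      refine aux_contra hε measurableSet_Ioo (fun x hx => ?_) (fun x hx => (hsub' hx).1)
        (hstrong₂ x₁ ⟨hx₁gt, min_le_left d u⟩) (hfin _ ?_)
      · exact hw.pos x ⟨⟨hc1.le.trans hx.1.le, hx.2.le.trans (min_le_left d u)⟩, hx.1.ne'⟩
      · exact fun x hx => ⟨hc1.trans hx.1, (hsub' hx).2.2⟩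
    rw [hL] at htg'; exact htg'


end
end

section
/- Let a be a weight and let μ₁, μ₂ ∈ (0,2] be such that (1−x)·|a'(x)| ≤ μ₁·a(x) for all x ∈ [c,1), (x−1)·|a'(x)| ≤ μ₂·a(x) for all x ∈ (1,d], a(x) ≥ a(c)·(1−x)^{μ₁}/(1−c)^{μ₁} for all x ∈ [c,1), and a(x) ≥ a(d)·(x−1)^{μ₂}/(d−1)^{μ₂} for all x ∈ (1,d]. Let y ∈ L²(c,d) be piecewise absolutely continuous with ∫_c^d a(x)·y'(x)² dx < ∞, and suppose the function x ↦ a(x)·y'(x) is absolutely continuous on each of [c,1] and [1,d] with derivative (a y')' ∈ L²(c,d). Then lim_{x↗1} (1−x)·a(x)·y'(x)² = 0 and lim_{x↘1} (x−1)·a(x)·y'(x)² = 0. -/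
set_option maxHeartbeats 1000000

open MeasureTheory Set Filter Topology

noncomputable section

private lemma tail_tendsto {x₀ : ℝ} (hx₀ : x₀ < 1) {f : ℝ → ℝ}
    (hf : IntegrableOn f (Set.Ioo x₀ 1)) :
    Tendsto (fun x => ∫ t in x..1, f t) (𝓝[<] (1:ℝ)) (𝓝 0) := by
  have hIcc : IntegrableOn f (Set.Icc x₀ 1) := by
    rwa [integrableOn_Icc_iff_integrableOn_Ioo]
  have hcont : ContinuousOn (fun x => ∫ t in x..1, f t) (Set.Icc x₀ 1) := by
    have := intervalIntegral.continuousOn_primitive_interval_left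
      (f := f) (μ := volume) (a := x₀) (b := 1) (by rwa [Set.uIcc_of_le hx₀.le])
    rwa [Set.uIcc_of_le hx₀.le] at this
  have h1 : ContinuousWithinAt (fun x => ∫ t in x..1, f t) (Set.Icc x₀ 1) 1 :=
    hcont 1 (Set.right_mem_Icc.2 hx₀.le)
  have h2 : ContinuousWithinAt (fun x => ∫ t in x..1, f t) (Set.Ioo x₀ 1) 1 :=
    h1.mono Set.Ioo_subset_Icc_self
  have h3 := h2.tendsto
  rw [nhdsWithin_Ioo_eq_nhdsLT hx₀] at h3
  simpa using h3

private lemma reflect_integrableOn {p q : ℝ} (hpq : p ≤ q) {f : ℝ → ℝ}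
    (hf : IntegrableOn f (Set.Ioo p q)) :
    IntegrableOn (fun x => f (2 - x)) (Set.Ioo (2 - q) (2 - p)) := by
  have h1 : IntegrableOn f (Set.Ioc p q) := (integrableOn_Ioc_iff_integrableOn_Ioo).2 hf
  have h2 : IntervalIntegrable f volume p q :=
    (intervalIntegrable_iff_integrableOn_Ioc_of_le hpq).2 h1
  have h3 := (h2.comp_sub_left 2).symm
  have h4 : IntegrableOn (fun x => f (2 - x)) (Set.Ioc (2 - q) (2 - p)) :=
    (intervalIntegrable_iff_integrableOn_Ioc_of_le (by linarith)).1 h3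
  exact h4.mono_set Set.Ioo_subset_Ioc_self

private lemma cs_bound {x : ℝ} (hx : x ≤ 1) {W : ℝ → ℝ}
    (hW : IntegrableOn W (Set.Ioc x 1))
    (hW2 : IntegrableOn (fun t => W t ^ 2) (Set.Ioc x 1)) :
    (∫ t in x..1, W t) ^ 2 ≤ (1 - x) * ∫ t in x..1, W t ^ 2 := by
  set μ := volume.restrict (Set.Ioc x 1) with hμ
  haveI : IsFiniteMeasure μ := ⟨by
    rw [hμ, Measure.restrict_apply_univ, Real.volume_Ioc]
    exact ENNReal.ofReal_lt_top⟩
  have hWm : AEStronglyMeasurable W μ := hW.aestronglyMeasurable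
  have habs2 : Integrable (fun t => |W t| ^ 2) μ := by simp only [sq_abs]; exact hW2
  have hmem : MemLp (fun t => |W t|) 2 μ :=
    (memLp_two_iff_integrable_sq (by simpa using hWm.norm : AEStronglyMeasurable (fun t => |W t|) μ)).2 habs2
  have hone : MemLp (fun _ : ℝ => (1 : ℝ)) 2 μ := memLp_const 1
  have hpq : Real.HolderConjugate 2 2 := ⟨by norm_num, by norm_num, by norm_num⟩
  have hH := integral_mul_le_Lp_mul_Lq_of_nonneg hpq
      (ae_of_all μ fun t => abs_nonneg (W t)) (ae_of_all μ fun _ => zero_le_one)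
      (by simpa [ENNReal.ofReal_ofNat] using hmem) (by simpa [ENNReal.ofReal_ofNat] using hone)
  have e2 : (∫ a, |W a| ^ (2:ℝ) ∂μ) = ∫ a, W a ^ 2 ∂μ := by
    apply integral_congr_ae; filter_upwards with t
    rw [show ((2:ℝ)) = ((2:ℕ):ℝ) by norm_num, Real.rpow_natCast, sq_abs]
  have e3 : (∫ _a, (1:ℝ) ^ (2:ℝ) ∂μ) = 1 - x := by
    simp [hμ, hx, Real.one_rpow, integral_const, Measure.restrict_apply_univ, Real.volume_Ioc,
      ENNReal.toReal_ofReal (by linarith : (0:ℝ) ≤ 1 - x)]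
  rw [e2, e3] at hH
  simp only [mul_one] at hH
  set S := ∫ a, W a ^ 2 ∂μ with hS
  have hSnn : 0 ≤ S := integral_nonneg fun t => sq_nonneg _
  have h1x : (0:ℝ) ≤ 1 - x := by linarith
  have hIval : |∫ t in x..1, W t| ≤ ∫ a, |W a| ∂μ := by
    rw [hμ]
    calc |∫ t in x..1, W t| ≤ ∫ t in x..1, |W t| :=
          intervalIntegral.abs_integral_le_integral_abs hx
      _ = ∫ t in Set.Ioc x 1, |W t| := intervalIntegral.integral_of_le hx
  have hle : |∫ t in x..1, W t| ≤ S ^ (1/2:ℝ) * (1-x) ^ (1/2:ℝ) := le_trans hIval hH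
  have hpow : (S ^ (1/2:ℝ) * (1-x) ^ (1/2:ℝ))^2 = S * (1-x) := by
    rw [mul_pow, ← Real.rpow_natCast (S ^ (1/2:ℝ)) 2, ← Real.rpow_natCast ((1-x) ^ (1/2:ℝ)) 2,
      ← Real.rpow_mul hSnn, ← Real.rpow_mul h1x]
    norm_num
  have hfin : (∫ t in x..1, W t) ^ 2 ≤ S * (1-x) := by
    calc (∫ t in x..1, W t) ^ 2 = |∫ t in x..1, W t| ^ 2 := (sq_abs _).symm
      _ ≤ (S ^ (1/2:ℝ) * (1-x) ^ (1/2:ℝ))^2 := by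
          apply pow_le_pow_left₀ (abs_nonneg _) hle
      _ = S * (1-x) := hpow
  have eS : S = ∫ t in x..1, W t ^ 2 := by
    rw [hS, hμ, intervalIntegral.integral_of_le hx]
  rw [eS] at hfin
  linarith [hfin]

private lemma key_antitone {c μ : ℝ} {A A' : ℝ → ℝ}
    (hμ : 0 < μ)
    (hA_cont : ContinuousOn A (Set.Icc c 1))
    (hA_deriv : ∀ x ∈ Set.Ioo c 1, HasDerivAt A (A' x) x)
    (hbnd : ∀ x ∈ Set.Ico c 1, (1 - x) * |A' x| ≤ μ * A x) :
    AntitoneOn (fun x => A x * (1 - x) ^ μ) (Set.Icc c 1) := by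
  have hk : ∀ x ∈ Set.Ioo c 1, HasDerivAt (fun x => A x * (1 - x) ^ μ)
      (A' x * (1 - x) ^ μ + A x * (μ * (1 - x) ^ (μ - 1) * (-1))) x := by
    intro x hx
    have h1x : (0:ℝ) < 1 - x := by linarith [hx.2]
    have hu : HasDerivAt (fun x : ℝ => 1 - x) (-1) x := by
      simpa using (hasDerivAt_id x).const_sub 1
    have hv : HasDerivAt (fun y : ℝ => y ^ μ) (μ * (1 - x) ^ (μ - 1)) (1 - x) :=
      Real.hasDerivAt_rpow_const (Or.inl h1x.ne')
    have hcomp : HasDerivAt (fun x : ℝ => (1 - x) ^ μ) (μ * (1 - x) ^ (μ - 1) * (-1)) x :=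
      hv.comp x hu
    exact (hA_deriv x hx).mul hcomp
  apply antitoneOn_of_deriv_nonpos (convex_Icc c 1)
  · exact hA_cont.mul ((continuousOn_const.sub continuousOn_id).rpow_const
      (fun t _ => Or.inr hμ.le))
  · intro x hx
    rw [interior_Icc] at hx
    exact (hk x hx).differentiableAt.differentiableWithinAt
  · intro x hx
    rw [interior_Icc] at hx
    rw [(hk x hx).deriv]
    have h1x : (0:ℝ) < 1 - x := by linarith [hx.2]
    have hB : (0:ℝ) ≤ (1 - x) ^ (μ - 1) := Real.rpow_nonneg h1x.le _
    have hsplit : (1 - x) ^ μ = (1 - x) * (1 - x) ^ (μ - 1) := by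
      rw [show μ = 1 + (μ - 1) by ring, Real.rpow_add h1x, Real.rpow_one]
      ring_nf
    have hb := hbnd x ⟨hx.1.le, hx.2⟩
    have habs : A' x ≤ |A' x| := le_abs_self _
    rw [hsplit]
    nlinarith [mul_le_mul_of_nonneg_right hb hB,
      mul_le_mul_of_nonneg_right (mul_le_mul_of_nonneg_left habs h1x.le) hB]

private lemma one_sided (c μ : ℝ) (A A' G W : ℝ → ℝ)
    (hc1 : c < 1) (h1c : 1 - c ≤ 1) (hμ : 0 < μ) (hμ2 : μ ≤ 2)
    (hA_cont : ContinuousOn A (Set.Icc c 1))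
    (hA_pos : ∀ x ∈ Set.Ico c 1, 0 < A x)
    (hA1 : 0 ≤ A 1)
    (hA_deriv : ∀ x ∈ Set.Ioo c 1, HasDerivAt A (A' x) x)
    (hbnd : ∀ x ∈ Set.Ico c 1, (1 - x) * |A' x| ≤ μ * A x)
    (hlow : ∀ x ∈ Set.Ico c 1, A c * (1 - x) ^ μ / (1 - c) ^ μ ≤ A x)
    (hW : IntegrableOn W (Set.Ioo c 1))
    (hW2 : IntegrableOn (fun t => W t ^ 2) (Set.Ioo c 1))
    (hG : ∀ x ∈ Set.Icc c 1, G x = G c + ∫ t in c..x, W t)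
    (hE : IntegrableOn (fun t => G t ^ 2 / A t) (Set.Ioo c 1)) :
    Tendsto (fun x => (1 - x) * (G x ^ 2 / A x)) (𝓝[<] (1:ℝ)) (𝓝 0) := by
  have hc0 : (0:ℝ) < 1 - c := by linarith
  have hAc : 0 < A c := hA_pos c ⟨le_refl c, hc1⟩
  have hWIcc : IntegrableOn W (Set.Icc c 1) :=
    (integrableOn_Icc_iff_integrableOn_Ioo).2 hW
  have hW2Icc : IntegrableOn (fun t => W t ^ 2) (Set.Icc c 1) :=
    (integrableOn_Icc_iff_integrableOn_Ioo).2 hW2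
  have hWiint : ∀ p ∈ Set.Icc c 1, ∀ q ∈ Set.Icc c 1, IntervalIntegrable W volume p q :=
    fun p hp q hq => (hWIcc.mono_set (Set.uIcc_subset_Icc hp hq)).intervalIntegrable
  -- continuity of G on [c,1]
  have hGC : ContinuousOn G (Set.Icc c 1) := by
    have hprim : ContinuousOn (fun x => G c + ∫ t in c..x, W t) (Set.Icc c 1) := by
      apply continuousOn_const.add
      have := intervalIntegral.continuousOn_primitive_interval
        (f := W) (μ := volume) (a := c) (b := 1) (by rwa [Set.uIcc_of_le hc1.le])
      rwa [Set.uIcc_of_le hc1.le] at this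
    exact hprim.congr hG
  set L := G 1 with hLdef
  have hGsub : ∀ x ∈ Set.Icc c 1, G x = L - ∫ t in x..1, W t := by
    intro x hx
    have h1 := hG x hx
    have h2 := hG 1 (Set.right_mem_Icc.2 hc1.le)
    have hadd : (∫ t in c..x, W t) + (∫ t in x..1, W t) = ∫ t in c..1, W t :=
      intervalIntegral.integral_add_adjacent_intervals
        (hWiint c (Set.left_mem_Icc.2 hc1.le) x hx)
        (hWiint x hx 1 (Set.right_mem_Icc.2 hc1.le))
    rw [hLdef, h2, h1]
    linarith
  set K := (1 - c) ^ μ / A c with hKdef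
  have hKnn : 0 ≤ K := div_nonneg (Real.rpow_nonneg hc0.le _) hAc.le
  have hsqK : ∀ x ∈ Set.Ico c 1, (1 - x)^2 / A x ≤ K := by
    intro x hx
    have h1x : (0:ℝ) < 1 - x := by linarith [hx.2]
    have hAx := hA_pos x hx
    rw [div_le_iff₀ hAx]
    have h1 : (1 - x)^2 ≤ (1 - x) ^ μ := by
      rw [show ((1:ℝ) - x)^2 = (1 - x) ^ ((2:ℕ):ℝ) from (Real.rpow_natCast _ 2).symm]
      push_cast
      exact Real.rpow_le_rpow_of_exponent_ge h1x (by linarith [hx.1]) hμ2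
    have h2 : (1 - x) ^ μ ≤ K * A x := by
      have := hlow x hx
      have hKA : K * (A c * (1 - x) ^ μ / (1 - c) ^ μ) = (1 - x) ^ μ := by
        rw [hKdef]
        field_simp
      calc (1 - x) ^ μ = K * (A c * (1 - x) ^ μ / (1 - c) ^ μ) := hKA.symm
        _ ≤ K * A x := by
            apply mul_le_mul_of_nonneg_left this hKnn
    linarith
  -- main pointwise bound
  have hmain : ∀ x ∈ Set.Ico c 1,
      (1 - x) * (G x ^ 2 / A x)
        ≤ 2*L^2 * ((1 - x) / A x) + 2*K * (∫ t in x..1, W t ^ 2) := by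
    intro x hx
    have h1x : (0:ℝ) < 1 - x := by linarith [hx.2]
    have hAx := hA_pos x hx
    set I := ∫ t in x..1, W t with hIdef
    set S := ∫ t in x..1, W t ^ 2 with hSdef
    have hSnn : 0 ≤ S := intervalIntegral.integral_nonneg hx.2.le (fun t _ => sq_nonneg _)
    have hcs : I ^ 2 ≤ (1 - x) * S :=
      cs_bound hx.2.le
        (hWIcc.mono_set (Set.Ioc_subset_Icc_self.trans (Set.Icc_subset_Icc_left hx.1)))
        (hW2Icc.mono_set (Set.Ioc_subset_Icc_self.trans (Set.Icc_subset_Icc_left hx.1)))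
    have hGx : G x = L - I := hGsub x ⟨hx.1, hx.2.le⟩
    have hG2 : G x ^ 2 ≤ 2*L^2 + 2*((1 - x)*S) := by
      rw [hGx]
      nlinarith [sq_nonneg (L + I), hcs]
    have step1 : (1 - x) * (G x ^ 2 / A x)
        ≤ (1 - x) * ((2*L^2 + 2*((1 - x)*S)) / A x) := by
      apply mul_le_mul_of_nonneg_left _ h1x.le
      exact (div_le_div_iff_of_pos_right hAx).2 hG2
    have step2 : (1 - x) * ((2*L^2 + 2*((1 - x)*S)) / A x)
        = 2*L^2 * ((1 - x) / A x) + 2*S*((1 - x)^2 / A x) := by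
      field_simp
    have step3 : 2*S*((1 - x)^2 / A x) ≤ 2*K*S := by
      have := hsqK x hx
      nlinarith [hSnn]
    calc (1 - x) * (G x ^ 2 / A x)
        ≤ 2*L^2 * ((1 - x) / A x) + 2*S*((1 - x)^2 / A x) := by rw [← step2]; exact step1
      _ ≤ 2*L^2 * ((1 - x) / A x) + 2*K*S := by linarith
      _ = 2*L^2 * ((1 - x) / A x) + 2*K*(∫ t in x..1, W t ^ 2) := by rw [hSdef]
  -- the second part of the bound tends to zero
  have T2 : Tendsto (fun x => 2*K*(∫ t in x..1, W t ^ 2)) (𝓝[<] (1:ℝ)) (𝓝 0) := by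
    have := (tail_tendsto hc1 hW2).const_mul (2*K)
    simpa using this
  -- the first part tends to zero
  have T1 : Tendsto (fun x => 2*L^2 * ((1 - x) / A x)) (𝓝[<] (1:ℝ)) (𝓝 0) := by
    rcases eq_or_ne L 0 with hL | hL
    · have : (fun x => 2*L^2 * ((1 - x) / A x)) = fun _ => (0:ℝ) := by
        funext x; rw [hL]; ring
      rw [this]
      exact tendsto_const_nhds
    · -- choose x₀ with |G| ≥ |L|/2 on [x₀, 1)
      have hL2 : 0 < L ^ 2 := lt_of_le_of_ne (sq_nonneg L) (Ne.symm (pow_ne_zero 2 hL))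
      have hLpos : 0 < |L| := abs_pos.mpr hL
      have hcw : Tendsto G (𝓝[Set.Icc c 1] 1) (𝓝 L) :=
        (hGC 1 (Set.right_mem_Icc.2 hc1.le)).tendsto
      have hev : ∀ᶠ t in 𝓝[Set.Icc c 1] (1:ℝ), |G t - L| < |L|/2 := by
        have : {z : ℝ | |z - L| < |L|/2} ∈ 𝓝 L := by
          have : Metric.ball L (|L|/2) ∈ 𝓝 L := Metric.ball_mem_nhds L (by linarith)
          simpa [Metric.ball, Real.dist_eq] using this
        exact hcw this
      obtain ⟨ε, hε, hball⟩ := Metric.mem_nhdsWithin_iff.1 hev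
      set x₀ := max c (1 - ε/2) with hx₀def
      have hx₀1 : x₀ < 1 := by
        apply max_lt hc1; linarith
      have hx₀c : c ≤ x₀ := le_max_left _ _
      have hGhalf : ∀ t ∈ Set.Ico x₀ 1, |L|/2 ≤ |G t| := by
        intro t ht
        have htc : t ∈ Set.Icc c 1 := ⟨le_trans hx₀c ht.1, ht.2.le⟩
        have htd : dist t 1 < ε := by
          rw [Real.dist_eq, abs_of_nonpos (by linarith [ht.2])]
          have : 1 - ε/2 ≤ x₀ := le_max_right _ _
          have := ht.1
          linarith
        have hmem : t ∈ {z : ℝ | |G z - L| < |L|/2} := hball ⟨htd, htc⟩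
        have h2 : |G t - L| < |L|/2 := hmem
        have h1 := abs_sub_abs_le_abs_sub L (G t)
        rw [abs_sub_comm] at h1
        linarith
      -- 1/A integrable near 1
      have hIa : IntegrableOn (fun t => 1 / A t) (Set.Ioo x₀ 1) := by
        have hEx : IntegrableOn (fun t => G t ^ 2 / A t) (Set.Ioo x₀ 1) :=
          hE.mono_set (Set.Ioo_subset_Ioo_left hx₀c)
        have hgint : Integrable (fun t => (4 / L^2) * (G t ^ 2 / A t))
            (volume.restrict (Set.Ioo x₀ 1)) := hEx.const_mul _
        apply Integrable.mono' hgint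
        · apply ContinuousOn.aestronglyMeasurable _ measurableSet_Ioo
          apply ContinuousOn.div continuousOn_const
          · exact hA_cont.mono (fun t ht => ⟨le_trans hx₀c ht.1.le, ht.2.le⟩)
          · intro t ht
            exact (hA_pos t ⟨le_trans hx₀c ht.1.le, ht.2⟩).ne'
        · filter_upwards [self_mem_ae_restrict measurableSet_Ioo] with t ht
          have hAt := hA_pos t ⟨le_trans hx₀c ht.1.le, ht.2⟩
          have hGt := hGhalf t ⟨ht.1.le, ht.2⟩
          have hG2 : L^2/4 ≤ G t ^ 2 := by
            have h := mul_self_le_mul_self (by positivity : (0:ℝ) ≤ |L|/2) hGt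
            calc L^2/4 = (|L|/2) * (|L|/2) := by rw [← sq_abs L]; ring
              _ ≤ |G t| * |G t| := h
              _ = G t ^ 2 := by rw [← sq_abs (G t)]; ring
          rw [Real.norm_eq_abs, abs_of_nonneg (by positivity : (0:ℝ) ≤ 1 / A t)]
          have hnum : (1:ℝ) ≤ 4 / L^2 * G t ^ 2 := by
            rw [div_mul_eq_mul_div, le_div_iff₀ hL2]
            nlinarith
          calc 1 / A t ≤ (4 / L^2 * G t ^ 2) / A t := (div_le_div_iff_of_pos_right hAt).2 hnum
            _ = 4 / L^2 * (G t ^ 2 / A t) := by ring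
      -- key inequality : (1-x)/A x ≤ (μ+1) ∫ 1/A
      have hkey : ∀ x ∈ Set.Ico x₀ 1,
          (1 - x) / A x ≤ (μ + 1) * ∫ t in x..1, 1 / A t := by
        intro x hx
        have hxc : x ∈ Set.Ico c 1 := ⟨le_trans hx₀c hx.1, hx.2⟩
        have hAx := hA_pos x hxc
        have h1x : (0:ℝ) < 1 - x := by linarith [hx.2]
        have hrpos : (0:ℝ) < (1 - x) ^ μ := Real.rpow_pos_of_pos h1x _
        have hden : (0:ℝ) < A x * (1 - x) ^ μ := by positivity
        have hanti := key_antitone hμ hA_cont hA_deriv hbnd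
        -- integrabilities on [x,1]
        have hint1 : IntervalIntegrable (fun t => (1 - t) ^ μ / (A x * (1 - x) ^ μ))
            volume x 1 := by
          apply ContinuousOn.intervalIntegrable
          apply ContinuousOn.div_const
          exact (continuousOn_const.sub continuousOn_id).rpow_const (fun t _ => Or.inr hμ.le)
        have hint2 : IntervalIntegrable (fun t => 1 / A t) volume x 1 := by
          rw [intervalIntegrable_iff_integrableOn_Ioc_of_le hx.2.le,
            integrableOn_Ioc_iff_integrableOn_Ioo]
          exact hIa.mono_set (Set.Ioo_subset_Ioo_left hx.1)
        have hmono : ∫ t in x..1, (1 - t) ^ μ / (A x * (1 - x) ^ μ)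
            ≤ ∫ t in x..1, 1 / A t := by
          apply intervalIntegral.integral_mono_on hx.2.le hint1 hint2
          intro t ht
          rcases eq_or_lt_of_le ht.2 with h1 | h1
          · rw [h1]
            rw [show (1:ℝ) - 1 = 0 by ring, Real.zero_rpow hμ.ne', zero_div]
            exact one_div_nonneg.2 hA1
          · have htc : t ∈ Set.Ico c 1 := ⟨le_trans hxc.1 ht.1, h1⟩
            have hAt := hA_pos t htc
            have hk := hanti (⟨hxc.1, hxc.2.le⟩ : x ∈ Set.Icc c 1)
              (⟨htc.1, htc.2.le⟩ : t ∈ Set.Icc c 1) ht.1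
            rw [div_le_div_iff₀ hden hAt]
            calc (1 - t) ^ μ * A t = A t * (1 - t) ^ μ := by ring
              _ ≤ A x * (1 - x) ^ μ := hk
              _ = 1 * (A x * (1 - x) ^ μ) := by ring
        have hcomp : ∫ t in x..1, (1 - t) ^ μ / (A x * (1 - x) ^ μ)
            = (1 - x) / ((μ + 1) * A x) := by
          rw [intervalIntegral.integral_div]
          have hsub : (∫ t in x..1, (1 - t) ^ μ) = ∫ s in (0:ℝ)..(1 - x), s ^ μ := by
            have := intervalIntegral.integral_comp_sub_left (a := x) (b := 1)
              (fun s => s ^ μ) 1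
            simpa using this
          rw [hsub, integral_rpow (Or.inl (by linarith : (-1:ℝ) < μ))]
          rw [Real.zero_rpow (by linarith : μ + 1 ≠ 0)]
          have hmu1 : (0:ℝ) < μ + 1 := by linarith
          have hsplit : (1 - x) ^ (μ + 1) = (1 - x) ^ μ * (1 - x) := by
            rw [Real.rpow_add h1x, Real.rpow_one]
          rw [hsplit]
          field_simp
          ring
        rw [hcomp] at hmono
        have hfin : (1 - x) / A x = (μ + 1) * ((1 - x) / ((μ + 1) * A x)) := by
          field_simp
        rw [hfin]
        exact mul_le_mul_of_nonneg_left hmono (by linarith)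
      -- squeeze for (1-x)/A x
      have Ttail : Tendsto (fun x => ∫ t in x..1, 1 / A t) (𝓝[<] (1:ℝ)) (𝓝 0) :=
        tail_tendsto hx₀1 hIa
      have Tfrac : Tendsto (fun x => (1 - x) / A x) (𝓝[<] (1:ℝ)) (𝓝 0) := by
        apply squeeze_zero' ?_ ?_
          (by have h := Ttail.const_mul (μ + 1); rw [mul_zero] at h; exact h)
        · filter_upwards [Ioo_mem_nhdsLT hx₀1] with x hx
          have hAx := hA_pos x ⟨le_trans hx₀c hx.1.le, hx.2⟩
          exact div_nonneg (by linarith [hx.2]) hAx.le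
        · filter_upwards [Ioo_mem_nhdsLT hx₀1] with x hx
          exact hkey x ⟨hx.1.le, hx.2⟩
      have := Tfrac.const_mul (2*L^2)
      simpa using this
  -- final squeeze
  apply squeeze_zero' ?_ ?_ (by have h := T1.add T2; rw [add_zero] at h; exact h)
  · filter_upwards [Ioo_mem_nhdsLT hc1] with x hx
    have hAx := hA_pos x ⟨hx.1.le, hx.2⟩
    have h1x : (0:ℝ) < 1 - x := by linarith [hx.2]
    positivity
  · filter_upwards [Ioo_mem_nhdsLT hc1] with x hx
    exact hmain x ⟨hx.1.le, hx.2⟩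


/-- under the two-sided degeneracy bounds with exponents
`μ₁, μ₂ ∈ (0,2]`, if `y ∈ L²` has finite weighted energy and the flux `a·y'` is
absolutely continuous on `[c,1]` and on `[1,d]` with derivative `(a y')' = w ∈ L²(c,d)`,
then `(1-x)·a(x)·y'(x)² → 0` as `x ↗ 1` and `(x-1)·a(x)·y'(x)² → 0` as `x ↘ 1`. -/
theorem stmt_11 (c d μ₁ μ₂ : ℝ) (a a' y y' w : ℝ → ℝ)
    (hc : 0 ≤ c) (hc1 : c < 1) (h1d : 1 < d) (hd2 : d ≤ 2)
    (hw : IsWeight c d a a')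
    (hμ₁ : μ₁ ∈ Set.Ioc 0 2) (hμ₂ : μ₂ ∈ Set.Ioc 0 2)
    (hbnd₁ : ∀ x ∈ Set.Ico c 1, (1 - x) * |a' x| ≤ μ₁ * a x)
    (hbnd₂ : ∀ x ∈ Set.Ioc 1 d, (x - 1) * |a' x| ≤ μ₂ * a x)
    (hlow₁ : ∀ x ∈ Set.Ico c 1, a c * (1 - x) ^ μ₁ / (1 - c) ^ μ₁ ≤ a x)
    (hlow₂ : ∀ x ∈ Set.Ioc 1 d, a d * (x - 1) ^ μ₂ / (d - 1) ^ μ₂ ≤ a x)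
    (hy2 : MeasureTheory.MemLp y 2 (volume.restrict (Set.Ioo c d)))
    (hAC : PiecewiseAC c d y y')
    (hint : MeasureTheory.IntegrableOn (fun x => a x * y' x ^ 2) (Set.Ioo c d))
    (hw2 : MeasureTheory.MemLp w 2 (volume.restrict (Set.Ioo c d)))
    (hwint : MeasureTheory.IntegrableOn w (Set.Ioo c d))
    (hfluxAC : ∃ g₁ g₂ : ℝ → ℝ,
      (∀ x ∈ Set.Ico c 1, g₁ x = a x * y' x) ∧
      (∀ x ∈ Set.Ioc 1 d, g₂ x = a x * y' x) ∧
      (∀ x ∈ Set.Icc c 1, g₁ x = g₁ c + ∫ t in c..x, w t) ∧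
      (∀ x ∈ Set.Icc 1 d, g₂ x = g₂ 1 + ∫ t in (1:ℝ)..x, w t)) :
    Filter.Tendsto (fun x => (1 - x) * a x * y' x ^ 2) (𝓝[<] 1) (𝓝 0) ∧
    Filter.Tendsto (fun x => (x - 1) * a x * y' x ^ 2) (𝓝[>] 1) (𝓝 0) := by

  obtain ⟨g₁, g₂, hg₁, hg₂, hg₁AC, hg₂AC⟩ := hfluxAC
  have hmemIco : ∀ x ∈ Set.Ico c 1, x ∈ Set.Icc c d \ {1} := by
    intro x hx
    exact ⟨⟨hx.1, le_trans hx.2.le h1d.le⟩, fun h => absurd (Set.mem_singleton_iff.1 h) hx.2.ne⟩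
  have hmemIoc : ∀ x ∈ Set.Ioc 1 d, x ∈ Set.Icc c d \ {1} := by
    intro x hx
    exact ⟨⟨le_trans hc1.le hx.1.le, hx.2⟩, fun h => absurd (Set.mem_singleton_iff.1 h) hx.1.ne'⟩
  have hderivAt : ∀ x ∈ Set.Ioo c d, x ≠ 1 → HasDerivAt a (a' x) x := by
    intro x hx hne
    have hxS : x ∈ Set.Icc c d \ {1} :=
      ⟨⟨hx.1.le, hx.2.le⟩, fun h => absurd (Set.mem_singleton_iff.1 h) hne⟩
    have hopen : IsOpen (Set.Ioo c d \ {1}) := isOpen_Ioo.sdiff isClosed_singleton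
    have hnhds : Set.Icc c d \ {1} ∈ 𝓝 x := by
      apply mem_of_superset (hopen.mem_nhds ⟨hx, fun h => absurd (Set.mem_singleton_iff.1 h) hne⟩)
      exact Set.diff_subset_diff_left Set.Ioo_subset_Icc_self
    exact (hw.hderiv x hxS).hasDerivAt hnhds
  have hwsq : IntegrableOn (fun x => w x ^ 2) (Set.Ioo c d) := hw2.integrable_sq
  constructor
  · -- LEFT side
    have hEL : IntegrableOn (fun t => g₁ t ^ 2 / a t) (Set.Ioo c 1) := by
      apply IntegrableOn.congr_fun (hint.mono_set (Set.Ioo_subset_Ioo_right h1d.le)) ?_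
        measurableSet_Ioo
      intro t ht
      have hat : a t ≠ 0 := (hw.pos t (hmemIco t ⟨ht.1.le, ht.2⟩)).ne'
      show a t * y' t ^ 2 = g₁ t ^ 2 / a t
      rw [hg₁ t ⟨ht.1.le, ht.2⟩]
      field_simp
    have TL := one_sided c μ₁ a a' g₁ w hc1 (by linarith) hμ₁.1 hμ₁.2
      (hw.cont.mono (Set.Icc_subset_Icc_right h1d.le))
      (fun x hx => hw.pos x (hmemIco x hx))
      (by rw [hw.zero_at_one])
      (fun x hx => hderivAt x ⟨hx.1, lt_trans hx.2 h1d⟩ hx.2.ne)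
      hbnd₁ hlow₁
      (hwint.mono_set (Set.Ioo_subset_Ioo_right h1d.le))
      (hwsq.mono_set (Set.Ioo_subset_Ioo_right h1d.le))
      hg₁AC hEL
    apply TL.congr'
    filter_upwards [Ioo_mem_nhdsLT hc1] with x hx
    have hat : a x ≠ 0 := (hw.pos x (hmemIco x ⟨hx.1.le, hx.2⟩)).ne'
    rw [hg₁ x ⟨hx.1.le, hx.2⟩]
    field_simp
  · -- RIGHT side
    have hIoo1d : Set.Ioo 1 d ⊆ Set.Ioo c d := Set.Ioo_subset_Ioo_left hc1.le
    have hER : IntegrableOn (fun t => g₂ t ^ 2 / a t) (Set.Ioo 1 d) := by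
      apply IntegrableOn.congr_fun (hint.mono_set hIoo1d) ?_ measurableSet_Ioo
      intro t ht
      have hat : a t ≠ 0 := (hw.pos t (hmemIoc t ⟨ht.1, ht.2.le⟩)).ne'
      show a t * y' t ^ 2 = g₂ t ^ 2 / a t
      rw [hg₂ t ⟨ht.1, ht.2.le⟩]
      field_simp
    have hwIcc1d : ∀ p ∈ Set.Icc (1:ℝ) d, ∀ q ∈ Set.Icc (1:ℝ) d,
        IntervalIntegrable w volume p q := by
      intro p hp q hq
      have h1 : IntegrableOn w (Set.Icc 1 d) :=
        (integrableOn_Icc_iff_integrableOn_Ioo).2 (hwint.mono_set hIoo1d)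
      exact (h1.mono_set (Set.uIcc_subset_Icc hp hq)).intervalIntegrable
    have TR := one_sided (2 - d) μ₂ (fun x => a (2 - x)) (fun x => -a' (2 - x))
      (fun x => g₂ (2 - x)) (fun x => -w (2 - x))
      (by linarith) (by linarith) hμ₂.1 hμ₂.2
      (by
        apply (hw.cont.mono (Set.Icc_subset_Icc hc1.le le_rfl)).comp
          ((continuous_const.sub continuous_id).continuousOn)
        intro x hx
        refine ⟨?_, ?_⟩ <;> simp only [Pi.sub_apply, id_eq] <;> [linarith [hx.2]; linarith [hx.1]])
      (by
        intro x hx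
        exact hw.pos _ (hmemIoc _ ⟨by linarith [hx.2], by linarith [hx.1]⟩))
      (by
        show (0:ℝ) ≤ a (2 - 1)
        rw [show (2:ℝ) - 1 = 1 by norm_num, hw.zero_at_one])
      (by
        intro x hx
        have h2x : 2 - x ∈ Set.Ioo 1 d := ⟨by linarith [hx.2], by linarith [hx.1]⟩
        have ha := hderivAt (2 - x) ⟨lt_trans hc1 h2x.1, h2x.2⟩ h2x.1.ne'
        have hu : HasDerivAt (fun x : ℝ => 2 - x) (-1) x := by
          simpa using (hasDerivAt_id x).const_sub 2
        have := ha.comp x hu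
        simp only [mul_neg, mul_one] at this
        exact this)
      (by
        intro x hx
        have h2x : 2 - x ∈ Set.Ioc 1 d := ⟨by linarith [hx.2], by linarith [hx.1]⟩
        have := hbnd₂ _ h2x
        show (1 - x) * |-a' (2 - x)| ≤ μ₂ * a (2 - x)
        rw [abs_neg, show (1:ℝ) - x = (2 - x) - 1 by ring]
        exact this)
      (by
        intro x hx
        have h2x : 2 - x ∈ Set.Ioc 1 d := ⟨by linarith [hx.2], by linarith [hx.1]⟩
        show a (2 - (2 - d)) * (1 - x) ^ μ₂ / (1 - (2 - d)) ^ μ₂ ≤ a (2 - x)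
        rw [show (2:ℝ) - (2 - d) = d by ring, show (1:ℝ) - (2 - d) = d - 1 by ring,
          show (1:ℝ) - x = (2 - x) - 1 by ring]
        exact hlow₂ _ h2x)
      (by
        have := reflect_integrableOn h1d.le (hwint.mono_set hIoo1d)
        norm_num at this
        exact this.neg)
      (by
        have := reflect_integrableOn h1d.le (hwsq.mono_set hIoo1d)
        norm_num at this
        have heq : (fun t : ℝ => (-w (2 - t)) ^ 2) = fun t : ℝ => w (2 - t) ^ 2 := by
          funext t; rw [neg_pow]; norm_num
        rw [heq]
        exact this)
      (by
        intro x hx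
        have hx' : 2 - x ∈ Set.Icc 1 d := ⟨by linarith [hx.2], by linarith [hx.1]⟩
        show g₂ (2 - x) = g₂ (2 - (2 - d)) + ∫ t in (2 - d)..x, -w (2 - t)
        rw [show (2:ℝ) - (2 - d) = d by ring, hg₂AC _ hx',
          hg₂AC d (Set.right_mem_Icc.2 h1d.le), intervalIntegral.integral_neg]
        have hcs := intervalIntegral.integral_comp_sub_left (a := 2 - d) (b := x) w 2
        rw [hcs, show (2:ℝ) - (2 - d) = d by ring]
        have hadd : (∫ t in (1:ℝ)..(2 - x), w t) + ∫ t in (2 - x)..d, w t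
            = ∫ t in (1:ℝ)..d, w t :=
          intervalIntegral.integral_add_adjacent_intervals
            (hwIcc1d 1 (Set.left_mem_Icc.2 h1d.le) (2 - x) hx')
            (hwIcc1d (2 - x) hx' d (Set.right_mem_Icc.2 h1d.le))
        linarith)
      (by
        have := reflect_integrableOn h1d.le hER
        norm_num at this ⊢
        exact this)
    have hrefl : Tendsto (fun x : ℝ => 2 - x) (𝓝[>] (1:ℝ)) (𝓝[<] (1:ℝ)) := by
      apply tendsto_nhdsWithin_of_tendsto_nhds_of_eventually_within
      · have h : Tendsto (fun x : ℝ => 2 - x) (𝓝 1) (𝓝 (2 - 1)) :=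
          Continuous.tendsto (by continuity) 1
        norm_num at h
        exact h.mono_left nhdsWithin_le_nhds
      · filter_upwards [self_mem_nhdsWithin] with x hx
        have : (1:ℝ) < x := hx
        show (2:ℝ) - x ∈ Set.Iio 1
        simp only [Set.mem_Iio]
        linarith
    have Tcomp := TR.comp hrefl
    apply Tcomp.congr'
    filter_upwards [Ioo_mem_nhdsGT h1d] with x hx
    have hat : a x ≠ 0 := (hw.pos x (hmemIoc x ⟨hx.1, hx.2.le⟩)).ne'
    simp only [Function.comp_apply]
    rw [show (2:ℝ) - (2 - x) = x by ring, show (1:ℝ) - (2 - x) = x - 1 by ring,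
      hg₂ x ⟨hx.1, hx.2.le⟩]
    field_simp



end
end

section
/- (Strong degeneration, transmission condition.) Let a be a weight such that ∫_x^1 (1/a(s)) ds = +∞ for every x ∈ [c,1) and ∫_1^x (1/a(s)) ds = +∞ for every x ∈ (1,d]. Let y ∈ L²(c,d) be piecewise absolutely continuous with ∫_c^d a(x)·y'(x)² dx < ∞, and let φ be piecewise absolutely continuous with ∫_c^d a(x)·φ'(x)² dx < ∞ such that x ↦ a(x)·φ'(x) is absolutely continuous on each of [c,1] and [1,d] with derivative (a φ')' ∈ L²(c,d). Then lim_{x↗1} a(x)·φ'(x)·y(x) = 0 and lim_{x↘1} a(x)·φ'(x)·y(x) = 0. -/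
open MeasureTheory Set Filter Topology

noncomputable section

section Helpers

lemma lint_inv_top {r : ℝ} (hr : 0 < r) :
    ∫⁻ t in Ioo (0:ℝ) r, ENNReal.ofReal t⁻¹ = ⊤ := by
  by_contra h
  have hmeas : AEStronglyMeasurable (fun t : ℝ => t⁻¹) (volume.restrict (Ioo (0:ℝ) r)) :=
    measurable_inv.aestronglyMeasurable
  have hfin : HasFiniteIntegral (fun t : ℝ => t⁻¹) (volume.restrict (Ioo (0:ℝ) r)) := by
    rw [hasFiniteIntegral_iff_norm]
    have : ∀ᵐ t ∂(volume.restrict (Ioo (0:ℝ) r)),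
        ENNReal.ofReal ‖t⁻¹‖ = ENNReal.ofReal t⁻¹ := by
      filter_upwards [ae_restrict_mem measurableSet_Ioo] with t ht
      rw [Real.norm_eq_abs, abs_of_nonneg (inv_nonneg.2 ht.1.le)]
    rw [lintegral_congr_ae this]
    exact lt_top_iff_ne_top.2 h
  have hint : IntegrableOn (fun t : ℝ => t⁻¹) (Ioo (0:ℝ) r) := ⟨hmeas, hfin⟩
  have : IntervalIntegrable (fun t : ℝ => t⁻¹) volume 0 r := by
    rwa [intervalIntegrable_iff_integrableOn_Ioo_of_le hr.le]
  rw [intervalIntegrable_inv_iff] at this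
  rcases this with h' | h'
  · exact hr.ne h'
  · exact h' (by rw [uIcc_of_le hr.le]; exact ⟨le_rfl, hr.le⟩)

lemma lint_left_top {x₁ : ℝ} (h : x₁ < 1) :
    ∫⁻ s in Ioo x₁ 1, ENNReal.ofReal (1 - s)⁻¹ = ⊤ := by
  have hmp : MeasurePreserving (fun t : ℝ => 1 - t) volume volume :=
    Measure.measurePreserving_sub_left volume 1
  have hemb : MeasurableEmbedding (fun t : ℝ => 1 - t) :=
    (MeasurableEquiv.subLeft (1:ℝ)).measurableEmbedding
  have hpre : (fun t : ℝ => 1 - t) ⁻¹' (Ioo x₁ 1) = Ioo 0 (1 - x₁) := by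
    ext t; simp only [mem_preimage, mem_Ioo]; constructor <;> intro ⟨h1, h2⟩ <;>
      constructor <;> linarith
  have := hmp.setLIntegral_comp_preimage_emb hemb
    (fun s => ENNReal.ofReal (1 - s)⁻¹) (Ioo x₁ 1)
  rw [hpre] at this
  rw [← this]
  have heq : ∀ t : ℝ, ENNReal.ofReal (1 - (1 - t))⁻¹ = ENNReal.ofReal t⁻¹ := by
    intro t; ring_nf
  simp only [heq]
  exact lint_inv_top (by linarith)

lemma lint_right_top {x₂ : ℝ} (h : 1 < x₂) :
    ∫⁻ s in Ioo 1 x₂, ENNReal.ofReal (s - 1)⁻¹ = ⊤ := by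
  have hmp : MeasurePreserving (fun t : ℝ => 1 + t) volume volume :=
    measurePreserving_add_left volume 1
  have hemb : MeasurableEmbedding (fun t : ℝ => 1 + t) :=
    (MeasurableEquiv.addLeft (1:ℝ)).measurableEmbedding
  have hpre : (fun t : ℝ => 1 + t) ⁻¹' (Ioo 1 x₂) = Ioo 0 (x₂ - 1) := by
    ext t; simp only [mem_preimage, mem_Ioo]; constructor <;> intro ⟨h1, h2⟩ <;>
      constructor <;> linarith
  have := hmp.setLIntegral_comp_preimage_emb hemb
    (fun s => ENNReal.ofReal (s - 1)⁻¹) (Ioo 1 x₂)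
  rw [hpre] at this
  rw [← this]
  have heq : ∀ t : ℝ, ENNReal.ofReal (1 + t - 1)⁻¹ = ENNReal.ofReal t⁻¹ := by
    intro t; ring_nf
  simp only [heq]
  exact lint_inv_top (by linarith)

lemma lint_contra {S : Set ℝ} (hS : MeasurableSet S) {f b : ℝ → ℝ}
    (hf : IntegrableOn f S) (hle : ∀ s ∈ S, b s ≤ f s)
    (hb : ∫⁻ s in S, ENNReal.ofReal (b s) = ⊤) : False := by
  have h1 : ∫⁻ s in S, ENNReal.ofReal (b s) ≤ ∫⁻ s in S, ENNReal.ofReal (f s) := by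
    refine lintegral_mono_ae ?_
    filter_upwards [ae_restrict_mem hS] with s hs
    exact ENNReal.ofReal_le_ofReal (hle s hs)
  have h2 : ∫⁻ s in S, ENNReal.ofReal (f s) ≤ ∫⁻ s in S, (‖f s‖₊ : ENNReal) :=
    lintegral_mono fun s => Real.ofReal_le_enorm (f s)
  have h3 := hf.2
  rw [HasFiniteIntegral] at h3
  rw [hb] at h1
  exact absurd (le_trans h1 h2) (by simpa [enorm_eq_nnnorm] using h3.ne)

lemma lint_scale_contra {S : Set ℝ} (hS : MeasurableSet S) {f b : ℝ → ℝ} {C : ℝ}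
    (hC : 0 < C) (hf : IntegrableOn f S) (hle : ∀ s ∈ S, C * b s ≤ f s)
    (hb : ∫⁻ s in S, ENNReal.ofReal (b s) = ⊤) : False := by
  refine lint_contra hS hf hle ?_
  have heq : ∀ s : ℝ, ENNReal.ofReal (C * b s) = ENNReal.ofReal C * ENNReal.ofReal (b s) :=
    fun s => ENNReal.ofReal_mul hC.le
  simp_rw [heq]
  rw [lintegral_const_mul' _ _ ENNReal.ofReal_ne_top, hb, ENNReal.mul_top]
  exact ((ENNReal.ofReal_pos.2 hC).ne')

lemma sqrt_primitive_bound {u v K : ℝ} (huv : u ≤ v) {w : ℝ → ℝ}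
    (hw : IntegrableOn w (Ioc u v)) (hw2 : IntegrableOn (fun t => w t ^ 2) (Ioc u v))
    (hK : 0 < K) (hKb : ∫ t in Ioc u v, w t ^ 2 ≤ K) :
    |∫ t in Ioc u v, w t| ≤ Real.sqrt (K * (v - u)) := by
  rcases eq_or_lt_of_le huv with rfl | huv'
  · simp [Real.sqrt_nonneg]
  set S := Real.sqrt (K * (v - u)) with hSdef
  have hS2 : S ^ 2 = K * (v - u) := Real.sq_sqrt (by nlinarith)
  have hSpos : 0 < S := Real.sqrt_pos.2 (by nlinarith)
  set ε := S / K with hεdef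
  have hεpos : 0 < ε := div_pos hSpos hK
  have step1 : |∫ t in Ioc u v, w t| ≤ ∫ t in Ioc u v, |w t| := by
    simpa [Real.norm_eq_abs] using
      norm_integral_le_integral_norm (μ := volume.restrict (Ioc u v)) w
  have step2 : ∫ t in Ioc u v, |w t| ≤ ∫ t in Ioc u v, (ε * w t ^ 2 + 1 / ε) / 2 := by
    refine integral_mono hw.abs ?_ ?_
    · exact ((hw2.const_mul ε).add (integrableOn_const (by simp))).div_const 2
    · intro t
      have h := sq_nonneg (ε * |w t| - 1)
      have h2 : |w t| ^ 2 = w t ^ 2 := sq_abs (w t)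
      simp only []
      rw [le_div_iff₀ (by norm_num : (0:ℝ) < 2)]
      have h3 : ε * (1 / ε) = 1 := by field_simp
      have h4 : ε * (|w t| * 2) ≤ ε * (ε * w t ^ 2 + 1 / ε) := by
        have h5 : ε * (ε * w t ^ 2 + 1 / ε) = ε ^ 2 * w t ^ 2 + ε * (1 / ε) := by ring
        rw [h5, h3]
        nlinarith [h, h2]
      exact le_of_mul_le_mul_left h4 hεpos
  have step3 : ∫ t in Ioc u v, (ε * w t ^ 2 + 1 / ε) / 2 ≤ S := by
    have hsplit : ∫ t in Ioc u v, (ε * w t ^ 2 + 1 / ε) / 2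
        = (ε * ∫ t in Ioc u v, w t ^ 2) / 2 + ((v - u) * (1 / ε)) / 2 := by
      rw [integral_div, integral_add (hw2.const_mul ε)
        (integrableOn_const (by simp)), integral_const_mul, setIntegral_const]
      simp [Real.volume_Ioc, ENNReal.toReal_ofReal (by linarith : (0:ℝ) ≤ v - u),
        max_eq_left (by linarith : (0:ℝ) ≤ v - u)]
      ring
    rw [hsplit]
    have h1 : ε * ∫ t in Ioc u v, w t ^ 2 ≤ ε * K :=
      mul_le_mul_of_nonneg_left hKb hεpos.le
    have h2 : ε * K = S := by rw [hεdef]; field_simp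
    have h3 : (v - u) * (1 / ε) = S := by
      rw [hεdef]
      field_simp
      nlinarith
    nlinarith
  linarith

lemma fubini_parts {x₀ x : ℝ} (hx : x₀ ≤ x) {f g : ℝ → ℝ}
    (hf : IntegrableOn f (Ioc x₀ x)) (hg : IntegrableOn g (Ioc x₀ x)) :
    (∫ t in Ioc x₀ x, f t * (∫ u in Ioc x₀ t, g u)) +
      (∫ t in Ioc x₀ x, g t * (∫ u in Ioc x₀ t, f u)) =
    (∫ t in Ioc x₀ x, f t) * (∫ t in Ioc x₀ x, g t) := by
  set s := Ioc x₀ x with hs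
  set A := ∫ t in s, f t with hA
  set B := ∫ t in s, g t with hB
  set F := fun u => ∫ u' in Ioc x₀ u, f u' with hF
  have hfIcc : IntegrableOn f (Icc x₀ x) := (integrableOn_Icc_iff_integrableOn_Ioc (by simp)).2 hf
  have hFcont : ContinuousOn F (Icc x₀ x) := intervalIntegral.continuousOn_primitive hfIcc
  have hFmeas : AEStronglyMeasurable F (volume.restrict s) :=
    (hFcont.aestronglyMeasurable measurableSet_Icc).mono_measure
      (Measure.restrict_mono Ioc_subset_Icc_self le_rfl)
  have hFbd : ∀ u ∈ s, ‖F u‖ ≤ ∫ u' in Ioc x₀ x, ‖f u'‖ := by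
    intro u hu
    calc ‖F u‖ ≤ ∫ u' in Ioc x₀ u, ‖f u'‖ := norm_integral_le_integral_norm f
      _ ≤ ∫ u' in Ioc x₀ x, ‖f u'‖ :=
        setIntegral_mono_set hf.norm (ae_of_all _ fun t => norm_nonneg _)
          (HasSubset.Subset.eventuallyLE (Ioc_subset_Ioc_right hu.2))
  have hgF : IntegrableOn (fun u => g u * F u) s := by
    refine Integrable.mono' (hg.norm.mul_const (∫ u' in Ioc x₀ x, ‖f u'‖))
      (hg.1.mul hFmeas) ?_
    filter_upwards [ae_restrict_mem measurableSet_Ioc] with u hu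
    rw [norm_mul]
    exact mul_le_mul_of_nonneg_left (hFbd u hu) (norm_nonneg _)
  set T : Set (ℝ × ℝ) := {p | p.2 ≤ p.1} with hT
  have hTm : MeasurableSet T := measurableSet_le measurable_snd measurable_fst
  set Φ : ℝ × ℝ → ℝ := T.indicator (fun p => f p.1 * g p.2) with hΦdef
  have hΦ : Integrable Φ ((volume.restrict s).prod (volume.restrict s)) :=
    (hf.mul_prod hg).indicator hTm
  have key1 : (∫ t in s, f t * (∫ u in Ioc x₀ t, g u)) = ∫ t in s, ∫ u in s, Φ (t, u) := by
    refine (setIntegral_congr_fun measurableSet_Ioc (fun t ht => ?_)).symm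
    have h1 : ∀ u, Φ (t, u) = (Iic t).indicator (fun u => f t * g u) u := by
      intro u
      by_cases h : u ≤ t <;>
        simp [hΦdef, hT, Set.indicator_apply, Set.mem_Iic, Set.mem_setOf_eq, h]
    calc ∫ u in s, Φ (t, u) = ∫ u in s, (Iic t).indicator (fun u => f t * g u) u := by
          simp_rw [h1]
      _ = ∫ u in s ∩ Iic t, f t * g u := setIntegral_indicator measurableSet_Iic
      _ = ∫ u in Ioc x₀ t, f t * g u := by rw [hs, Ioc_inter_Iic, min_eq_right ht.2]
      _ = f t * ∫ u in Ioc x₀ t, g u := integral_const_mul _ _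
  have hswap : (∫ t in s, ∫ u in s, Φ (t, u)) = ∫ u in s, ∫ t in s, Φ (t, u) :=
    integral_integral_swap hΦ
  have key2 : (∫ u in s, ∫ t in s, Φ (t, u)) = ∫ u in s, g u * (A - F u) := by
    refine setIntegral_congr_fun measurableSet_Ioc (fun u hu => ?_)
    have h1 : ∀ t, Φ (t, u) = (Ici u).indicator (fun t => f t * g u) t := by
      intro t
      by_cases h : u ≤ t <;>
        simp [hΦdef, hT, Set.indicator_apply, Set.mem_Ici, Set.mem_setOf_eq, h]
    have hsi : s ∩ Ici u = Icc u x := by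
      ext t
      simp only [hs, mem_inter_iff, mem_Ioc, mem_Ici, mem_Icc]
      exact ⟨fun ⟨⟨_, h2⟩, h3⟩ => ⟨h3, h2⟩, fun ⟨h1', h2⟩ => ⟨⟨lt_of_lt_of_le hu.1 h1', h2⟩, h1'⟩⟩
    have hadd : F u + ∫ t in Ioc u x, f t = A := by
      rw [hA, hs, ← Ioc_union_Ioc_eq_Ioc hu.1.le hu.2,
        setIntegral_union (Ioc_disjoint_Ioc_of_le le_rfl) measurableSet_Ioc
          (hf.mono_set (Ioc_subset_Ioc_right hu.2))
          (hf.mono_set (Ioc_subset_Ioc_left hu.1.le))]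
    calc ∫ t in s, Φ (t, u) = ∫ t in s, (Ici u).indicator (fun t => f t * g u) t := by
          simp_rw [h1]
      _ = ∫ t in s ∩ Ici u, f t * g u := setIntegral_indicator measurableSet_Ici
      _ = ∫ t in Icc u x, f t * g u := by rw [hsi]
      _ = ∫ t in Ioc u x, f t * g u := integral_Icc_eq_integral_Ioc
      _ = (∫ t in Ioc u x, f t) * g u := integral_mul_const _ _
      _ = g u * (A - F u) := by
          have h2 : ∫ t in Ioc u x, f t = A - F u := by linarith [hadd]
          rw [h2]; ring
  have key3 : (∫ u in s, g u * (A - F u)) = B * A - ∫ u in s, g u * F u := by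
    have heq : (fun u => g u * (A - F u)) = fun u => g u * A - g u * F u := by
      funext u; ring
    rw [heq, integral_sub (hg.mul_const A) hgF, integral_mul_const]
  rw [key1, hswap, key2, key3]
  ring

lemma prim_mul_int {x₀ x : ℝ} {f g : ℝ → ℝ}
    (hf : IntegrableOn f (Ioc x₀ x)) (hg : IntegrableOn g (Ioc x₀ x)) :
    IntegrableOn (fun u => g u * ∫ u' in Ioc x₀ u, f u') (Ioc x₀ x) := by
  set F := fun u => ∫ u' in Ioc x₀ u, f u' with hF
  have hfIcc : IntegrableOn f (Icc x₀ x) := (integrableOn_Icc_iff_integrableOn_Ioc (by simp)).2 hf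
  have hFcont : ContinuousOn F (Icc x₀ x) := intervalIntegral.continuousOn_primitive hfIcc
  have hFmeas : AEStronglyMeasurable F (volume.restrict (Ioc x₀ x)) :=
    (hFcont.aestronglyMeasurable measurableSet_Icc).mono_measure
      (Measure.restrict_mono Ioc_subset_Icc_self le_rfl)
  have hFbd : ∀ u ∈ Ioc x₀ x, ‖F u‖ ≤ ∫ u' in Ioc x₀ x, ‖f u'‖ := by
    intro u hu
    calc ‖F u‖ ≤ ∫ u' in Ioc x₀ u, ‖f u'‖ := norm_integral_le_integral_norm f
      _ ≤ ∫ u' in Ioc x₀ x, ‖f u'‖ :=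
        setIntegral_mono_set hf.norm (ae_of_all _ fun t => norm_nonneg _)
          (HasSubset.Subset.eventuallyLE (Ioc_subset_Ioc_right hu.2))
  refine Integrable.mono' (hg.norm.mul_const (∫ u' in Ioc x₀ x, ‖f u'‖))
    (hg.1.mul hFmeas) ?_
  filter_upwards [ae_restrict_mem measurableSet_Ioc] with u hu
  rw [norm_mul]
  exact mul_le_mul_of_nonneg_left (hFbd u hu) (norm_nonneg _)

lemma parts_eq {x₀ x : ℝ} (hx : x₀ ≤ x) {f g F G : ℝ → ℝ}
    (hf : IntegrableOn f (Ioc x₀ x)) (hg : IntegrableOn g (Ioc x₀ x))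
    (hF : ∀ t ∈ Icc x₀ x, F t = F x₀ + ∫ u in Ioc x₀ t, f u)
    (hG : ∀ t ∈ Icc x₀ x, G t = G x₀ + ∫ u in Ioc x₀ t, g u) :
    F x * G x = F x₀ * G x₀ + ∫ t in Ioc x₀ x, (f t * G t + F t * g t) := by
  set A := ∫ t in Ioc x₀ x, f t with hA
  set B := ∫ t in Ioc x₀ x, g t with hB
  have hfGp : IntegrableOn (fun t => f t * ∫ u in Ioc x₀ t, g u) (Ioc x₀ x) :=
    prim_mul_int hg hf
  have hgFp : IntegrableOn (fun t => g t * ∫ u in Ioc x₀ t, f u) (Ioc x₀ x) :=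
    prim_mul_int hf hg
  have step1 : ∫ t in Ioc x₀ x, (f t * G t + F t * g t) =
      ∫ t in Ioc x₀ x, ((f t * G x₀ + f t * ∫ u in Ioc x₀ t, g u) +
        (F x₀ * g t + (∫ u in Ioc x₀ t, f u) * g t)) := by
    refine setIntegral_congr_fun measurableSet_Ioc (fun t ht => ?_)
    rw [hF t (Ioc_subset_Icc_self ht), hG t (Ioc_subset_Icc_self ht)]
    ring
  have step2 : ∫ t in Ioc x₀ x, ((f t * G x₀ + f t * ∫ u in Ioc x₀ t, g u) +
      (F x₀ * g t + (∫ u in Ioc x₀ t, f u) * g t)) =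
      (A * G x₀ + ∫ t in Ioc x₀ x, f t * ∫ u in Ioc x₀ t, g u) +
      (F x₀ * B + ∫ t in Ioc x₀ x, g t * ∫ u in Ioc x₀ t, f u) := by
    have e1 : IntegrableOn (fun t => f t * G x₀ + f t * ∫ u in Ioc x₀ t, g u) (Ioc x₀ x) :=
      (hf.mul_const _).add hfGp
    have e2 : IntegrableOn (fun t => F x₀ * g t + (∫ u in Ioc x₀ t, f u) * g t) (Ioc x₀ x) := by
      refine (hg.const_mul _).add ?_
      exact hgFp.congr_fun (fun t _ => by ring) measurableSet_Ioc
    rw [integral_add e1 e2, integral_add (hf.mul_const _) hfGp,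
      integral_add (hg.const_mul _) (hgFp.congr_fun (fun t _ => by ring) measurableSet_Ioc),
      integral_mul_const, integral_const_mul]
    have e3 : ∫ t in Ioc x₀ x, (∫ u in Ioc x₀ t, f u) * g t =
        ∫ t in Ioc x₀ x, g t * ∫ u in Ioc x₀ t, f u :=
      setIntegral_congr_fun measurableSet_Ioc (fun t _ => by ring)
    rw [e3]
  have hfub := fubini_parts hx hf hg
  have hFx : F x = F x₀ + A := hF x ⟨hx, le_rfl⟩
  have hGx : G x = G x₀ + B := hG x ⟨hx, le_rfl⟩
  rw [step1, step2, hFx, hGx]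
  nlinarith [hfub]

lemma exists_lower_left {F : ℝ → ℝ} {b ℓ cc : ℝ} (h : Tendsto F (𝓝[<] b) (𝓝 ℓ))
    (hℓ : ℓ ≠ 0) (hcb : cc < b) :
    ∃ x₁, cc ≤ x₁ ∧ x₁ < b ∧ ∀ s ∈ Ioo x₁ b, |ℓ| / 2 ≤ |F s| := by
  have h1 : ∀ᶠ s in 𝓝[<] b, |ℓ| / 2 < |F s| :=
    h.abs.eventually (eventually_gt_nhds (by simpa using abs_pos.2 hℓ))
  rw [eventually_iff, mem_nhdsLT_iff_exists_Ioo_subset] at h1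
  obtain ⟨l, hl, hsub⟩ := h1
  exact ⟨max l cc, le_max_right _ _, max_lt hl hcb,
    fun s hs => (hsub ⟨lt_of_le_of_lt (le_max_left l cc) hs.1, hs.2⟩).le⟩

lemma exists_lower_right {F : ℝ → ℝ} {b ℓ dd : ℝ} (h : Tendsto F (𝓝[>] b) (𝓝 ℓ))
    (hℓ : ℓ ≠ 0) (hbd : b < dd) :
    ∃ x₂, b < x₂ ∧ x₂ ≤ dd ∧ ∀ s ∈ Ioo b x₂, |ℓ| / 2 ≤ |F s| := by
  have h1 : ∀ᶠ s in 𝓝[>] b, |ℓ| / 2 < |F s| :=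
    h.abs.eventually (eventually_gt_nhds (by simpa using abs_pos.2 hℓ))
  rw [eventually_iff, mem_nhdsGT_iff_exists_Ioo_subset] at h1
  obtain ⟨u, hu, hsub⟩ := h1
  exact ⟨min u dd, lt_min hu hbd, min_le_right _ _,
    fun s hs => (hsub ⟨hs.1, lt_of_lt_of_le hs.2 (min_le_left u dd)⟩).le⟩

end Helpers

set_option maxHeartbeats 2000000 in
/-- Strong degeneration, transmission condition: under strong
degeneration of `a` at `1`, if `y ∈ L²` has finite weighted energy and `φ` has finite
weighted energy with flux `a·φ'` absolutely continuous on `[c,1]` and `[1,d]` with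
derivative `(a φ')' = w ∈ L²(c,d)`, then `a·φ'·y → 0` from both sides of `1`. -/
theorem stmt_12 (c d : ℝ) (a a' y y' φ φ' w : ℝ → ℝ)
    (hc : 0 ≤ c) (hc1 : c < 1) (h1d : 1 < d) (hd2 : d ≤ 2)
    (hw : IsWeight c d a a')
    (hstrong₁ : ∀ x ∈ Set.Ico c 1,
      ∫⁻ s in Set.Ioo x 1, ENNReal.ofReal (1 / a s) = ⊤)
    (hstrong₂ : ∀ x ∈ Set.Ioc 1 d,
      ∫⁻ s in Set.Ioo 1 x, ENNReal.ofReal (1 / a s) = ⊤)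
    (hy2 : MeasureTheory.MemLp y 2 (volume.restrict (Set.Ioo c d)))
    (hACy : PiecewiseAC c d y y')
    (hinty : MeasureTheory.IntegrableOn (fun x => a x * y' x ^ 2) (Set.Ioo c d))
    (hACφ : PiecewiseAC c d φ φ')
    (hintφ : MeasureTheory.IntegrableOn (fun x => a x * φ' x ^ 2) (Set.Ioo c d))
    (hw2 : MeasureTheory.MemLp w 2 (volume.restrict (Set.Ioo c d)))
    (hwint : MeasureTheory.IntegrableOn w (Set.Ioo c d))
    (hfluxAC : ∃ g₁ g₂ : ℝ → ℝ,
      (∀ x ∈ Set.Ico c 1, g₁ x = a x * φ' x) ∧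
      (∀ x ∈ Set.Ioc 1 d, g₂ x = a x * φ' x) ∧
      (∀ x ∈ Set.Icc c 1, g₁ x = g₁ c + ∫ t in c..x, w t) ∧
      (∀ x ∈ Set.Icc 1 d, g₂ x = g₂ 1 + ∫ t in (1:ℝ)..x, w t)) :
    Filter.Tendsto (fun x => a x * φ' x * y x) (𝓝[<] 1) (𝓝 0) ∧
    Filter.Tendsto (fun x => a x * φ' x * y x) (𝓝[>] 1) (𝓝 0) := by
  obtain ⟨g₁, g₂, hg₁eq, hg₂eq, hg₁rep0, hg₂rep0⟩ := hfluxAC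
  have hy2sq : IntegrableOn (fun t => y t ^ 2) (Ioo c d) := hy2.integrable_sq
  have hw2sq : IntegrableOn (fun t => w t ^ 2) (Ioo c d) := hw2.integrable_sq
  have hapos : ∀ s, c ≤ s → s ≤ d → s ≠ 1 → 0 < a s :=
    fun s h1 h2 h3 => hw.pos s ⟨⟨h1, h2⟩, by simpa using h3⟩
  have hwy : IntegrableOn (fun t => w t * y t) (Ioo c d) := by
    refine Integrable.mono' ((hw2sq.add hy2sq).div_const 2)
      (hw2.aestronglyMeasurable.mul hy2.aestronglyMeasurable) ?_
    refine ae_of_all _ fun t => ?_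
    rw [Real.norm_eq_abs, abs_mul]
    simp only [Pi.add_apply]
    nlinarith [sq_nonneg (|w t| - |y t|), sq_abs (w t), sq_abs (y t),
      abs_nonneg (w t), abs_nonneg (y t)]
  constructor
  · -- LEFT SIDE
    have hsub1 : Ioc c 1 ⊆ Ioo c d := fun t ht => ⟨ht.1, lt_of_le_of_lt ht.2 h1d⟩
    have hsubo1 : Ioo c 1 ⊆ Ioo c d := fun t ht => ⟨ht.1, lt_trans ht.2 h1d⟩
    have hwIoc1 : IntegrableOn w (Ioc c 1) := hwint.mono_set hsub1
    have hg₁rep : ∀ t ∈ Icc c 1, g₁ t = g₁ c + ∫ u in Ioc c t, w u := by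
      intro t ht
      rw [hg₁rep0 t ht, intervalIntegral.integral_of_le ht.1]
    -- measurability of y' on (c,1)
    have hy'meas1 : AEStronglyMeasurable y' (volume.restrict (Ioo c 1)) := by
      have hU : Ioo c 1 ⊆ ⋃ n : ℕ, Icc c (1 - (1 - c) / (n + 1)) := by
        intro t ht
        obtain ⟨n, hn⟩ := exists_nat_gt ((1 - c) / (1 - t))
        refine mem_iUnion.2 ⟨n, ht.1.le, ?_⟩
        have h1t : 0 < 1 - t := by linarith [ht.2]
        rw [div_lt_iff₀ h1t] at hn
        have hn1 : (0:ℝ) < (n:ℝ) + 1 := Nat.cast_add_one_pos n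
        have hd1 : (1 - c) / ((n:ℝ) + 1) ≤ 1 - t := by
          rw [div_le_iff₀ hn1]; nlinarith
        linarith
      refine AEStronglyMeasurable.mono_measure ?_ (Measure.restrict_mono hU le_rfl)
      refine aestronglyMeasurable_iUnion_iff.2 fun n => ?_
      have hb1 : c ≤ 1 - (1 - c) / ((n:ℝ) + 1) := by
        have h0 : (0:ℝ) ≤ (n:ℝ) := Nat.cast_nonneg n
        have := div_le_self (by linarith : (0:ℝ) ≤ 1 - c) (by linarith : (1:ℝ) ≤ (n:ℝ) + 1)
        linarith
      have hb2 : 1 - (1 - c) / ((n:ℝ) + 1) < 1 := by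
        have : 0 < (1 - c) / ((n:ℝ) + 1) := div_pos (by linarith) (Nat.cast_add_one_pos n)
        linarith
      exact (hACy.1 _ hb1 hb2).1.aestronglyMeasurable
    have hwIcc1 : IntegrableOn w (Icc c 1) := (integrableOn_Icc_iff_integrableOn_Ioc (by simp)).2 hwIoc1
    have hg₁cont : ContinuousOn g₁ (Icc c 1) :=
      ((continuousOn_const.add (intervalIntegral.continuousOn_primitive hwIcc1)).congr
        fun t ht => hg₁rep t ht)
    have hg₁y' : IntegrableOn (fun t => g₁ t * y' t) (Ioo c 1) := by
      refine Integrable.mono'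
        (((hintφ.mono_set hsubo1).add (hinty.mono_set hsubo1)).div_const 2)
        ((((hg₁cont.mono Ioo_subset_Icc_self).aestronglyMeasurable
          measurableSet_Ioo)).mul hy'meas1) ?_
      filter_upwards [ae_restrict_mem measurableSet_Ioo] with t ht
      have ha := hapos t ht.1.le (by linarith [ht.2]) (ne_of_lt ht.2)
      rw [hg₁eq t ⟨ht.1.le, ht.2⟩, Real.norm_eq_abs, abs_mul, abs_mul, abs_of_pos ha]
      simp only [Pi.add_apply]
      nlinarith [mul_nonneg ha.le (sq_nonneg (|φ' t| - |y' t|)), sq_abs (φ' t),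
        sq_abs (y' t), abs_nonneg (φ' t), abs_nonneg (y' t), ha.le]
    set h₁ : ℝ → ℝ := fun t => w t * y t + g₁ t * y' t with hh₁def
    have hh₁Ioo : IntegrableOn h₁ (Ioo c 1) := (hwy.mono_set hsubo1).add hg₁y'
    have hh₁Ioc : IntegrableOn h₁ (Ioc c 1) := (integrableOn_Ioc_iff_integrableOn_Ioo (by simp)).2 hh₁Ioo
    have hh₁Icc : IntegrableOn h₁ (Icc c 1) := (integrableOn_Icc_iff_integrableOn_Ioc (by simp)).2 hh₁Ioc
    have hkey : ∀ β, c ≤ β → β < 1 → g₁ β * y β = g₁ c * y c + ∫ t in Ioc c β, h₁ t := by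
      intro β h1 h2
      have hGrep : ∀ t ∈ Icc c β, y t = y c + ∫ u in Ioc c t, y' u := by
        intro t ht
        rw [(hACy.1 β h1 h2).2 t ht, intervalIntegral.integral_of_le ht.1]
      have hFrep : ∀ t ∈ Icc c β, g₁ t = g₁ c + ∫ u in Ioc c t, w u :=
        fun t ht => hg₁rep t ⟨ht.1, le_trans ht.2 h2.le⟩
      exact parts_eq h1 (hwIoc1.mono_set (Ioc_subset_Ioc_right h2.le))
        ((hACy.1 β h1 h2).1.mono_set Ioc_subset_Icc_self) hFrep hGrep
    have hIccmem : Icc c 1 ∈ 𝓝[<] (1:ℝ) :=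
      mem_of_superset (Ioo_mem_nhdsLT_of_mem ⟨hc1, le_rfl⟩) Ioo_subset_Icc_self
    have hlefil : 𝓝[<] (1:ℝ) ≤ 𝓝[Icc c 1] 1 := nhdsWithin_le_of_mem hIccmem
    have hprim : Tendsto (fun β => ∫ t in Ioc c β, h₁ t) (𝓝[<] (1:ℝ))
        (𝓝 (∫ t in Ioc c 1, h₁ t)) :=
      Tendsto.mono_left (intervalIntegral.continuousOn_primitive hh₁Icc 1 ⟨hc1.le, le_rfl⟩)
        hlefil
    set ℓ := g₁ c * y c + ∫ t in Ioc c 1, h₁ t with hℓdef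
    have htends : Tendsto (fun β => g₁ β * y β) (𝓝[<] (1:ℝ)) (𝓝 ℓ) := by
      refine (tendsto_const_nhds.add hprim).congr' ?_
      filter_upwards [Ioo_mem_nhdsLT_of_mem (⟨hc1, le_rfl⟩ : (1:ℝ) ∈ Ioc c 1)] with β hβ
      exact (hkey β hβ.1.le hβ.2).symm
    have htendg : Tendsto g₁ (𝓝[<] (1:ℝ)) (𝓝 (g₁ 1)) :=
      Tendsto.mono_left (hg₁cont 1 ⟨hc1.le, le_rfl⟩) hlefil
    have hL : g₁ 1 = 0 := by
      by_contra hL0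
      obtain ⟨x₂, hx₂c, hx₂1, hbnd⟩ := exists_lower_left htendg hL0 hc1
      refine lint_scale_contra (C := g₁ 1 ^ 2 / 4) measurableSet_Ioo (by positivity)
        (hintφ.mono_set (fun s hs => ⟨lt_of_le_of_lt hx₂c hs.1, lt_trans hs.2 h1d⟩))
        ?_ (hstrong₁ x₂ ⟨hx₂c, hx₂1⟩)
      intro s hs
      have hcs : c < s := lt_of_le_of_lt hx₂c hs.1
      have ha := hapos s hcs.le (by linarith [hs.2] : s ≤ d) (ne_of_lt hs.2)
      have heq : g₁ s = a s * φ' s := hg₁eq s ⟨hcs.le, hs.2⟩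
      have hb := hbnd s hs
      have h2 : g₁ 1 ^ 2 / 4 ≤ g₁ s ^ 2 := by
        nlinarith [mul_self_le_mul_self (by positivity : (0:ℝ) ≤ |g₁ 1| / 2) hb,
          abs_mul_abs_self (g₁ 1), abs_mul_abs_self (g₁ s)]
      have h3 : a s * φ' s ^ 2 = g₁ s ^ 2 * (1 / a s) := by
        rw [heq]; field_simp
      rw [h3]
      exact mul_le_mul_of_nonneg_right h2 (by positivity)
    have hg₁tail : ∀ s ∈ Icc c 1, g₁ s = - ∫ t in Ioc s 1, w t := by
      intro s hs
      have h1 := hg₁rep s hs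
      have h2 := hg₁rep 1 ⟨hc1.le, le_rfl⟩
      rw [hL] at h2
      have h3 : ∫ u in Ioc c 1, w u = (∫ u in Ioc c s, w u) + ∫ u in Ioc s 1, w u := by
        rw [← Ioc_union_Ioc_eq_Ioc hs.1 hs.2,
          setIntegral_union (Ioc_disjoint_Ioc_of_le le_rfl) measurableSet_Ioc
            (hwIoc1.mono_set (Ioc_subset_Ioc_right hs.2))
            (hwIoc1.mono_set (Ioc_subset_Ioc_left hs.1))]
      linarith
    set K := (∫ t in Ioc c 1, w t ^ 2) + 1 with hKdef
    have hw2Ioc1 : IntegrableOn (fun t => w t ^ 2) (Ioc c 1) := hw2sq.mono_set hsub1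
    have hKpos : 0 < K := by
      have h0 : 0 ≤ ∫ t in Ioc c 1, w t ^ 2 := integral_nonneg fun t => sq_nonneg _
      rw [hKdef]; linarith
    have hgbd : ∀ s ∈ Ico c 1, |g₁ s| ≤ Real.sqrt (K * (1 - s)) := by
      intro s hs
      rw [hg₁tail s ⟨hs.1, hs.2.le⟩, abs_neg]
      refine sqrt_primitive_bound hs.2.le (hwIoc1.mono_set (Ioc_subset_Ioc_left hs.1))
        (hw2Ioc1.mono_set (Ioc_subset_Ioc_left hs.1)) hKpos ?_
      have hmono : ∫ t in Ioc s 1, w t ^ 2 ≤ ∫ t in Ioc c 1, w t ^ 2 :=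
        setIntegral_mono_set hw2Ioc1 (ae_of_all _ fun t => sq_nonneg _)
          (HasSubset.Subset.eventuallyLE (Ioc_subset_Ioc_left hs.1))
      rw [hKdef]; linarith
    have hℓ0 : ℓ = 0 := by
      by_contra hne
      obtain ⟨x₁, hx₁c, hx₁1, hbnd⟩ := exists_lower_left htends hne hc1
      refine lint_scale_contra (C := ℓ ^ 2 / (4 * K)) measurableSet_Ioo (by positivity)
        (hy2sq.mono_set (fun s hs => ⟨lt_of_le_of_lt hx₁c hs.1, lt_trans hs.2 h1d⟩))
        ?_ (lint_left_top hx₁1)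
      intro s hs
      have hb := hbnd s hs
      have hgb := hgbd s ⟨le_trans hx₁c hs.1.le, hs.2⟩
      have h1s : 0 < 1 - s := by linarith [hs.2]
      have hsq : Real.sqrt (K * (1 - s)) ^ 2 = K * (1 - s) := Real.sq_sqrt (by positivity)
      have h2 : |ℓ| / 2 ≤ Real.sqrt (K * (1 - s)) * |y s| := by
        refine le_trans hb ?_
        rw [abs_mul]
        exact mul_le_mul_of_nonneg_right hgb (abs_nonneg _)
      have h3 : (|ℓ| / 2) * (|ℓ| / 2) ≤
          (Real.sqrt (K * (1 - s)) * |y s|) * (Real.sqrt (K * (1 - s)) * |y s|) :=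
        mul_self_le_mul_self (by positivity) h2
      have e : ℓ ^ 2 / (4 * K) * (1 - s)⁻¹ = ℓ ^ 2 / (4 * K * (1 - s)) := by
        field_simp
      rw [e, div_le_iff₀ (by positivity)]
      nlinarith [h3, hsq, abs_mul_abs_self ℓ, abs_mul_abs_self (y s),
        Real.sqrt_nonneg (K * (1 - s)), abs_nonneg (y s)]
    rw [hℓ0] at htends
    refine htends.congr' ?_
    filter_upwards [Ioo_mem_nhdsLT_of_mem (⟨hc1, le_rfl⟩ : (1:ℝ) ∈ Ioc c 1)] with β hβ
    rw [hg₁eq β ⟨hβ.1.le, hβ.2⟩]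
  · -- RIGHT SIDE
    have hsub2 : Ioo 1 d ⊆ Ioo c d := fun t ht => ⟨lt_trans hc1 ht.1, ht.2⟩
    have hwIoc2 : IntegrableOn w (Ioc 1 d) :=
      (integrableOn_Ioc_iff_integrableOn_Ioo (by simp)).2 (hwint.mono_set hsub2)
    have hg₂rep : ∀ t ∈ Icc 1 d, g₂ t = g₂ 1 + ∫ u in Ioc 1 t, w u := by
      intro t ht
      rw [hg₂rep0 t ht, intervalIntegral.integral_of_le ht.1]
    have hg₂rep' : ∀ α ∈ Icc 1 d, ∀ t ∈ Icc α d, g₂ t = g₂ α + ∫ u in Ioc α t, w u := by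
      intro α hα t ht
      have h1 := hg₂rep t ⟨le_trans hα.1 ht.1, ht.2⟩
      have h2 := hg₂rep α hα
      have h3 : ∫ u in Ioc 1 t, w u = (∫ u in Ioc 1 α, w u) + ∫ u in Ioc α t, w u := by
        rw [← Ioc_union_Ioc_eq_Ioc hα.1 ht.1,
          setIntegral_union (Ioc_disjoint_Ioc_of_le le_rfl) measurableSet_Ioc
            (hwIoc2.mono_set (Ioc_subset_Ioc_right hα.2))
            (hwIoc2.mono_set (Ioc_subset_Ioc hα.1 ht.2))]
      linarith
    have hy'meas2 : AEStronglyMeasurable y' (volume.restrict (Ioo 1 d)) := by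
      have hU : Ioo 1 d ⊆ ⋃ n : ℕ, Icc (1 + (d - 1) / (n + 1)) d := by
        intro t ht
        obtain ⟨n, hn⟩ := exists_nat_gt ((d - 1) / (t - 1))
        refine mem_iUnion.2 ⟨n, ?_, ht.2.le⟩
        have h1t : 0 < t - 1 := by linarith [ht.1]
        rw [div_lt_iff₀ h1t] at hn
        have hn1 : (0:ℝ) < (n:ℝ) + 1 := Nat.cast_add_one_pos n
        have hd1 : (d - 1) / ((n:ℝ) + 1) ≤ t - 1 := by
          rw [div_le_iff₀ hn1]; nlinarith
        linarith
      refine AEStronglyMeasurable.mono_measure ?_ (Measure.restrict_mono hU le_rfl)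
      refine aestronglyMeasurable_iUnion_iff.2 fun n => ?_
      have hb1 : 1 < 1 + (d - 1) / ((n:ℝ) + 1) := by
        have : 0 < (d - 1) / ((n:ℝ) + 1) := div_pos (by linarith) (Nat.cast_add_one_pos n)
        linarith
      have hb2 : 1 + (d - 1) / ((n:ℝ) + 1) ≤ d := by
        have h0 : (0:ℝ) ≤ (n:ℝ) := Nat.cast_nonneg n
        have := div_le_self (by linarith : (0:ℝ) ≤ d - 1) (by linarith : (1:ℝ) ≤ (n:ℝ) + 1)
        linarith
      exact (hACy.2 _ hb1 hb2).1.aestronglyMeasurable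
    have hwIcc2 : IntegrableOn w (Icc 1 d) := (integrableOn_Icc_iff_integrableOn_Ioc (by simp)).2 hwIoc2
    have hg₂cont : ContinuousOn g₂ (Icc 1 d) :=
      ((continuousOn_const.add (intervalIntegral.continuousOn_primitive hwIcc2)).congr
        fun t ht => hg₂rep t ht)
    have hg₂y' : IntegrableOn (fun t => g₂ t * y' t) (Ioo 1 d) := by
      refine Integrable.mono'
        (((hintφ.mono_set hsub2).add (hinty.mono_set hsub2)).div_const 2)
        ((((hg₂cont.mono Ioo_subset_Icc_self).aestronglyMeasurable
          measurableSet_Ioo)).mul hy'meas2) ?_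
      filter_upwards [ae_restrict_mem measurableSet_Ioo] with t ht
      have ha := hapos t (by linarith [ht.1]) ht.2.le (ne_of_gt ht.1)
      rw [hg₂eq t ⟨ht.1, ht.2.le⟩, Real.norm_eq_abs, abs_mul, abs_mul, abs_of_pos ha]
      simp only [Pi.add_apply]
      nlinarith [mul_nonneg ha.le (sq_nonneg (|φ' t| - |y' t|)), sq_abs (φ' t),
        sq_abs (y' t), abs_nonneg (φ' t), abs_nonneg (y' t), ha.le]
    set h₂ : ℝ → ℝ := fun t => w t * y t + g₂ t * y' t with hh₂def
    have hh₂Ioo : IntegrableOn h₂ (Ioo 1 d) := (hwy.mono_set hsub2).add hg₂y'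
    have hh₂Ioc : IntegrableOn h₂ (Ioc 1 d) := (integrableOn_Ioc_iff_integrableOn_Ioo (by simp)).2 hh₂Ioo
    have hh₂Icc : IntegrableOn h₂ (Icc 1 d) := (integrableOn_Icc_iff_integrableOn_Ioc (by simp)).2 hh₂Ioc
    have hkey : ∀ α, 1 < α → α ≤ d →
        g₂ α * y α = (g₂ d * y d - ∫ t in Ioc 1 d, h₂ t) + ∫ t in Ioc 1 α, h₂ t := by
      intro α h1 h2
      have hGrep : ∀ t ∈ Icc α d, y t = y α + ∫ u in Ioc α t, y' u := by
        intro t ht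
        rw [(hACy.2 α h1 h2).2 t ht, intervalIntegral.integral_of_le ht.1]
      have hparts := parts_eq h2 (hwIoc2.mono_set (Ioc_subset_Ioc_left h1.le))
        ((hACy.2 α h1 h2).1.mono_set Ioc_subset_Icc_self)
        (hg₂rep' α ⟨h1.le, h2⟩) hGrep
      have hsplit : ∫ t in Ioc 1 d, h₂ t = (∫ t in Ioc 1 α, h₂ t) + ∫ t in Ioc α d, h₂ t := by
        rw [← Ioc_union_Ioc_eq_Ioc h1.le h2,
          setIntegral_union (Ioc_disjoint_Ioc_of_le le_rfl) measurableSet_Ioc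
            (hh₂Ioc.mono_set (Ioc_subset_Ioc_right h2))
            (hh₂Ioc.mono_set (Ioc_subset_Ioc_left h1.le))]
      linarith
    have hIccmem : Icc 1 d ∈ 𝓝[>] (1:ℝ) :=
      mem_of_superset (Ioo_mem_nhdsGT_of_mem ⟨le_rfl, h1d⟩) Ioo_subset_Icc_self
    have hlefil : 𝓝[>] (1:ℝ) ≤ 𝓝[Icc 1 d] 1 := nhdsWithin_le_of_mem hIccmem
    have hprim : Tendsto (fun α => ∫ t in Ioc 1 α, h₂ t) (𝓝[>] (1:ℝ)) (𝓝 0) := by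
      have h1 := Tendsto.mono_left
        (intervalIntegral.continuousOn_primitive hh₂Icc 1 ⟨le_rfl, h1d.le⟩) hlefil
      simpa using h1
    set ℓ₂ := g₂ d * y d - ∫ t in Ioc 1 d, h₂ t with hℓ₂def
    have htends : Tendsto (fun α => g₂ α * y α) (𝓝[>] (1:ℝ)) (𝓝 ℓ₂) := by
      have h1 : Tendsto (fun α => ℓ₂ + ∫ t in Ioc 1 α, h₂ t) (𝓝[>] (1:ℝ)) (𝓝 (ℓ₂ + 0)) :=
        tendsto_const_nhds.add hprim
      rw [add_zero] at h1
      refine h1.congr' ?_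
      filter_upwards [Ioo_mem_nhdsGT_of_mem (⟨le_rfl, h1d⟩ : (1:ℝ) ∈ Ico 1 d)] with α hα
      exact (hkey α hα.1 hα.2.le).symm
    have htendg : Tendsto g₂ (𝓝[>] (1:ℝ)) (𝓝 (g₂ 1)) :=
      Tendsto.mono_left (hg₂cont 1 ⟨le_rfl, h1d.le⟩) hlefil
    have hL : g₂ 1 = 0 := by
      by_contra hL0
      obtain ⟨x₂, hx₂1, hx₂d, hbnd⟩ := exists_lower_right htendg hL0 h1d
      refine lint_scale_contra (C := g₂ 1 ^ 2 / 4) measurableSet_Ioo (by positivity)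
        (hintφ.mono_set (fun s hs => ⟨lt_trans hc1 hs.1, lt_of_lt_of_le hs.2 hx₂d⟩))
        ?_ (hstrong₂ x₂ ⟨hx₂1, hx₂d⟩)
      intro s hs
      have hsd : s ≤ d := le_trans hs.2.le hx₂d
      have ha := hapos s (by linarith [hs.1]) hsd (ne_of_gt hs.1)
      have heq : g₂ s = a s * φ' s := hg₂eq s ⟨hs.1, hsd⟩
      have hb := hbnd s hs
      have h2 : g₂ 1 ^ 2 / 4 ≤ g₂ s ^ 2 := by
        nlinarith [mul_self_le_mul_self (by positivity : (0:ℝ) ≤ |g₂ 1| / 2) hb,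
          abs_mul_abs_self (g₂ 1), abs_mul_abs_self (g₂ s)]
      have h3 : a s * φ' s ^ 2 = g₂ s ^ 2 * (1 / a s) := by
        rw [heq]; field_simp
      rw [h3]
      exact mul_le_mul_of_nonneg_right h2 (by positivity)
    have hg₂tail : ∀ s ∈ Icc 1 d, g₂ s = ∫ t in Ioc 1 s, w t := by
      intro s hs
      have h1 := hg₂rep s hs
      rw [hL] at h1
      linarith [h1]
    set K := (∫ t in Ioc 1 d, w t ^ 2) + 1 with hKdef
    have hw2Ioc2 : IntegrableOn (fun t => w t ^ 2) (Ioc 1 d) :=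
      (integrableOn_Ioc_iff_integrableOn_Ioo (by simp)).2 (hw2sq.mono_set hsub2)
    have hKpos : 0 < K := by
      have h0 : 0 ≤ ∫ t in Ioc 1 d, w t ^ 2 := integral_nonneg fun t => sq_nonneg _
      rw [hKdef]; linarith
    have hgbd : ∀ s ∈ Icc 1 d, |g₂ s| ≤ Real.sqrt (K * (s - 1)) := by
      intro s hs
      rw [hg₂tail s hs]
      refine sqrt_primitive_bound hs.1 (hwIoc2.mono_set (Ioc_subset_Ioc_right hs.2))
        (hw2Ioc2.mono_set (Ioc_subset_Ioc_right hs.2)) hKpos ?_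
      have hmono : ∫ t in Ioc 1 s, w t ^ 2 ≤ ∫ t in Ioc 1 d, w t ^ 2 :=
        setIntegral_mono_set hw2Ioc2 (ae_of_all _ fun t => sq_nonneg _)
          (HasSubset.Subset.eventuallyLE (Ioc_subset_Ioc_right hs.2))
      rw [hKdef]; linarith
    have hℓ₂0 : ℓ₂ = 0 := by
      by_contra hne
      obtain ⟨x₁, hx₁1, hx₁d, hbnd⟩ := exists_lower_right htends hne h1d
      refine lint_scale_contra (C := ℓ₂ ^ 2 / (4 * K)) measurableSet_Ioo (by positivity)
        (hy2sq.mono_set (fun s hs => ⟨lt_trans hc1 hs.1, lt_of_lt_of_le hs.2 hx₁d⟩))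
        ?_ (lint_right_top hx₁1)
      intro s hs
      have hb := hbnd s hs
      have hgb := hgbd s ⟨hs.1.le, le_trans hs.2.le hx₁d⟩
      have h1s : 0 < s - 1 := by linarith [hs.1]
      have hsq : Real.sqrt (K * (s - 1)) ^ 2 = K * (s - 1) := Real.sq_sqrt (by positivity)
      have h2 : |ℓ₂| / 2 ≤ Real.sqrt (K * (s - 1)) * |y s| := by
        refine le_trans hb ?_
        rw [abs_mul]
        exact mul_le_mul_of_nonneg_right hgb (abs_nonneg _)
      have h3 : (|ℓ₂| / 2) * (|ℓ₂| / 2) ≤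
          (Real.sqrt (K * (s - 1)) * |y s|) * (Real.sqrt (K * (s - 1)) * |y s|) :=
        mul_self_le_mul_self (by positivity) h2
      have e : ℓ₂ ^ 2 / (4 * K) * (s - 1)⁻¹ = ℓ₂ ^ 2 / (4 * K * (s - 1)) := by
        field_simp
      rw [e, div_le_iff₀ (by positivity)]
      nlinarith [h3, hsq, abs_mul_abs_self ℓ₂, abs_mul_abs_self (y s),
        Real.sqrt_nonneg (K * (s - 1)), abs_nonneg (y s)]
    rw [hℓ₂0] at htends
    refine htends.congr' ?_
    filter_upwards [Ioo_mem_nhdsGT_of_mem (⟨le_rfl, h1d⟩ : (1:ℝ) ∈ Ico 1 d)] with α hα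
    rw [hg₂eq α ⟨hα.1, hα.2.le⟩]

end
end

section
/- (Dissipativity identity for the wave operator.) Let a be a weight. Let v ∈ L²(c,d) be piecewise absolutely continuous with v(c) = v(d) = 0 and ∫_c^d a(x)·v'(x)² dx < ∞, and let u be piecewise absolutely continuous with ∫_c^d a(x)·u'(x)² dx < ∞ such that x ↦ a(x)·u'(x) is absolutely continuous on each of [c,1] and [1,d] with derivative (a u')' ∈ L²(c,d). If lim_{x↗1} a(x)·u'(x)·v(x) = lim_{x↘1} a(x)·u'(x)·v(x), then ∫_{(c,d)} [ (a u')'(x)·v(x) + a(x)·u'(x)·v'(x) ] dx = 0. -/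
open MeasureTheory Set Filter Topology

noncomputable section

/-! ### Auxiliary lemmas -/

lemma fubini_core' {s t : ℝ} {f g : ℝ → ℝ}
    (hf : IntegrableOn f (Set.Ioc s t)) (hg : IntegrableOn g (Set.Ioc s t)) :
    ((∫ x in Set.Ioc s t, f x * ∫ y in Set.Ioc s x, g y)
      + ∫ x in Set.Ioc s t, (∫ y in Set.Ioc s x, f y) * g x)
    = (∫ x in Set.Ioc s t, f x) * ∫ x in Set.Ioc s t, g x := by
  set μ := volume.restrict (Set.Ioc s t) with hμ
  have hf' : Integrable f μ := hf
  have hg' : Integrable g μ := hg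
  have hK : Integrable (fun p : ℝ × ℝ => f p.1 * g p.2) (μ.prod μ) := hf'.mul_prod hg'
  have hmeas1 : MeasurableSet {p : ℝ × ℝ | p.2 ≤ p.1} :=
    (isClosed_le continuous_snd continuous_fst).measurableSet
  have hmeas2 : MeasurableSet {p : ℝ × ℝ | p.1 ≤ p.2} :=
    (isClosed_le continuous_fst continuous_snd).measurableSet
  have hK1 : Integrable (fun p : ℝ × ℝ => if p.2 ≤ p.1 then f p.1 * g p.2 else 0) (μ.prod μ) := by
    have := hK.indicator hmeas1
    refine this.congr (Eventually.of_forall fun p => ?_); by_cases hp : p.2 ≤ p.1 <;> simp [Set.indicator_apply, hp]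
  have hK2 : Integrable (fun p : ℝ × ℝ => if p.1 ≤ p.2 then f p.1 * g p.2 else 0) (μ.prod μ) := by
    have := hK.indicator hmeas2
    refine this.congr (Eventually.of_forall fun p => ?_); by_cases hp : p.1 ≤ p.2 <;> simp [Set.indicator_apply, hp]
  have hinner_g : ∀ x ∈ Set.Ioc s t,
      (∫ y, (if y ≤ x then g y else 0) ∂μ) = ∫ y in Set.Ioc s x, g y := by
    intro x hx
    have : (fun y => if y ≤ x then g y else 0) = (Set.Iic x).indicator g := by
      funext y; simp [Set.indicator_apply]
    rw [this, hμ, setIntegral_indicator measurableSet_Iic]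
    congr 1
    rw [Set.Ioc_inter_Iic, min_eq_right hx.2]
  have hinner_f : ∀ x ∈ Set.Ioc s t,
      (∫ y, (if y ≤ x then f y else 0) ∂μ) = ∫ y in Set.Ioc s x, f y := by
    intro x hx
    have : (fun y => if y ≤ x then f y else 0) = (Set.Iic x).indicator f := by
      funext y; simp [Set.indicator_apply]
    rw [this, hμ, setIntegral_indicator measurableSet_Iic]
    congr 1
    rw [Set.Ioc_inter_Iic, min_eq_right hx.2]
  have h1 : (∫ p : ℝ × ℝ, (if p.2 ≤ p.1 then f p.1 * g p.2 else 0) ∂(μ.prod μ))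
      = ∫ x in Set.Ioc s t, f x * ∫ y in Set.Ioc s x, g y := by
    rw [MeasureTheory.integral_prod _ hK1]
    refine setIntegral_congr_fun measurableSet_Ioc (fun x hx => ?_)
    have : (fun y => if y ≤ x then f x * g y else 0)
        = fun y => f x * (if y ≤ x then g y else 0) := by
      funext y; split <;> simp
    simp only [this, integral_const_mul, hinner_g x hx]
  have h2 : (∫ p : ℝ × ℝ, (if p.1 ≤ p.2 then f p.1 * g p.2 else 0) ∂(μ.prod μ))
      = ∫ x in Set.Ioc s t, (∫ y in Set.Ioc s x, f y) * g x := by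
    rw [MeasureTheory.integral_prod_symm _ hK2]
    refine setIntegral_congr_fun measurableSet_Ioc (fun x hx => ?_)
    have : (fun y => if y ≤ x then f y * g x else 0)
        = fun y => (if y ≤ x then f y else 0) * g x := by
      funext y; split <;> simp
    simp only [this, integral_mul_const, hinner_f x hx]
  have hdiag : (μ.prod μ) {p : ℝ × ℝ | p.1 = p.2} = 0 := by
    have hm : MeasurableSet {p : ℝ × ℝ | p.1 = p.2} :=
      (isClosed_eq continuous_fst continuous_snd).measurableSet
    rw [Measure.prod_apply hm]
    have : ∀ x : ℝ, μ (Prod.mk x ⁻¹' {p : ℝ × ℝ | p.1 = p.2}) = 0 := by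
      intro x
      have : (Prod.mk x ⁻¹' {p : ℝ × ℝ | p.1 = p.2}) = {x} := by
        ext y; simp [eq_comm]
      rw [this]
      exact le_antisymm ((Measure.restrict_apply_le _ _).trans (by simp)) (zero_le)
    simp [this]
  have hae : ∀ᵐ p : ℝ × ℝ ∂(μ.prod μ), p.1 ≠ p.2 := by
    rw [ae_iff]; simpa using hdiag
  have hsum : (∫ p : ℝ × ℝ, (if p.2 ≤ p.1 then f p.1 * g p.2 else 0) ∂(μ.prod μ))
      + (∫ p : ℝ × ℝ, (if p.1 ≤ p.2 then f p.1 * g p.2 else 0) ∂(μ.prod μ))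
      = ∫ p : ℝ × ℝ, f p.1 * g p.2 ∂(μ.prod μ) := by
    rw [← integral_add hK1 hK2]
    refine integral_congr_ae (hae.mono fun p hp => ?_)
    rcases lt_or_gt_of_ne hp with h | h
    · simp [not_le.mpr h, le_of_lt h]
    · simp [not_le.mpr h, le_of_lt h]
  rw [← h1, ← h2, hsum, integral_prod_mul]

lemma prim_aesm' {s t : ℝ} {g : ℝ → ℝ} (hg : IntegrableOn g (Set.Ioc s t)) :
    AEStronglyMeasurable (fun x => ∫ y in Set.Ioc s x, g y)
      (volume.restrict (Set.Ioc s t)) := by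
  have hIcc : IntegrableOn g (Set.Icc s t) :=
    (integrableOn_Icc_iff_integrableOn_Ioc).mpr hg
  have hcont : ContinuousOn (fun x => ∫ y in Set.Ioc s x, g y) (Set.Icc s t) :=
    intervalIntegral.continuousOn_primitive hIcc
  exact (hcont.mono Set.Ioc_subset_Icc_self).aestronglyMeasurable measurableSet_Ioc

lemma prim_bound' {s t : ℝ} {g : ℝ → ℝ} (hg : IntegrableOn g (Set.Ioc s t)) :
    ∀ x ∈ Set.Ioc s t, ‖∫ y in Set.Ioc s x, g y‖ ≤ ∫ y in Set.Ioc s t, ‖g y‖ := by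
  intro x hx
  refine (norm_integral_le_integral_norm _).trans ?_
  refine setIntegral_mono_set hg.norm ?_ ?_
  · exact Eventually.of_forall fun y => norm_nonneg _
  · exact HasSubset.Subset.eventuallyLE (Set.Ioc_subset_Ioc_right hx.2)

lemma mul_prim_integrable' {s t : ℝ} {f g : ℝ → ℝ}
    (hf : IntegrableOn f (Set.Ioc s t)) (hg : IntegrableOn g (Set.Ioc s t)) :
    IntegrableOn (fun x => f x * ∫ y in Set.Ioc s x, g y) (Set.Ioc s t) := by
  set C := ∫ y in Set.Ioc s t, ‖g y‖
  refine Integrable.mono' (hf.norm.mul_const C) (hf.aestronglyMeasurable.mul (prim_aesm' hg)) ?_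
  filter_upwards [ae_restrict_mem measurableSet_Ioc] with x hx
  rw [norm_mul]
  exact mul_le_mul_of_nonneg_left (prim_bound' hg x hx) (norm_nonneg _)

/-- Integration by parts for absolutely continuous functions given in FTC form. -/
lemma ibp_ac {s t : ℝ} (hst : s ≤ t) {f g F G : ℝ → ℝ}
    (hf : IntegrableOn f (Set.Ioc s t)) (hg : IntegrableOn g (Set.Ioc s t))
    (hF : ∀ x ∈ Set.Icc s t, F x = F s + ∫ y in Set.Ioc s x, f y)
    (hG : ∀ x ∈ Set.Icc s t, G x = G s + ∫ y in Set.Ioc s x, g y) :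
    ∫ x in Set.Ioc s t, (f x * G x + F x * g x) = F t * G t - F s * G s := by
  set Pf := fun x => ∫ y in Set.Ioc s x, f y with hPf
  set Pg := fun x => ∫ y in Set.Ioc s x, g y with hPg
  have I1 : IntegrableOn (fun x => f x * Pg x) (Set.Ioc s t) := mul_prim_integrable' hf hg
  have I2 : IntegrableOn (fun x => Pf x * g x) (Set.Ioc s t) := by
    have := mul_prim_integrable' hg hf
    exact this.congr_fun (fun x _ => mul_comm _ _) measurableSet_Ioc
  have key : Set.EqOn (fun x => f x * G x + F x * g x)
      (fun x => (f x * Pg x + Pf x * g x) + (G s * f x + F s * g x)) (Set.Ioc s t) := by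
    intro x hx
    have hx' : x ∈ Set.Icc s t := Set.Ioc_subset_Icc_self hx
    simp only
    rw [hF x hx', hG x hx']
    ring
  rw [setIntegral_congr_fun measurableSet_Ioc key]
  have hB : IntegrableOn (fun x => G s * f x + F s * g x) (Set.Ioc s t) :=
    (hf.const_mul _).add (hg.const_mul _)
  have I12 : IntegrableOn (fun x => f x * Pg x + Pf x * g x) (Set.Ioc s t) := I1.add I2
  rw [integral_add I12 hB, integral_add I1 I2,
    integral_add (hf.const_mul _) (hg.const_mul _)]
  have hcore := fubini_core' hf hg
  have hFt : F t = F s + Pf t := hF t ⟨hst, le_rfl⟩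
  have hGt : G t = G s + Pg t := hG t ⟨hst, le_rfl⟩
  rw [integral_const_mul, integral_const_mul]
  show (∫ x in Set.Ioc s t, f x * Pg x) + (∫ x in Set.Ioc s t, Pf x * g x)
      + (G s * Pf t + F s * Pg t) = F t * G t - F s * G s
  rw [hcore, hFt, hGt]
  ring

/-- a.e. measurability of the a.e. derivative of a piecewise absolutely continuous function. -/
lemma pac_aemeasurable {c d : ℝ} (hc1 : c < 1) (h1d : 1 < d) {u u' : ℝ → ℝ}
    (hAC : PiecewiseAC c d u u') : AEMeasurable u' (volume.restrict (Set.Ioo c d)) := by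
  set β : ℕ → ℝ := fun n => 1 - (1 - c) / (n + 1) with hβ
  set α : ℕ → ℝ := fun n => 1 + (d - 1) / (n + 1) with hα
  have hβprop : ∀ n : ℕ, c ≤ β n ∧ β n < 1 := by
    intro n
    have hn : (1 : ℝ) ≤ (n : ℝ) + 1 := by
      have : (0:ℝ) ≤ (n:ℝ) := Nat.cast_nonneg n
      linarith
    constructor
    · have : (1 - c) / (n + 1) ≤ 1 - c := div_le_self (by linarith) hn
      simp only [hβ]; linarith
    · have : 0 < (1 - c) / (n + 1) := div_pos (by linarith) (by positivity)
      simp only [hβ]; linarith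
  have hαprop : ∀ n : ℕ, 1 < α n ∧ α n ≤ d := by
    intro n
    have hn : (1 : ℝ) ≤ (n : ℝ) + 1 := by
      have : (0:ℝ) ≤ (n:ℝ) := Nat.cast_nonneg n
      linarith
    constructor
    · have : 0 < (d - 1) / (n + 1) := div_pos (by linarith) (by positivity)
      simp only [hα]; linarith
    · have : (d - 1) / (n + 1) ≤ d - 1 := div_le_self (by linarith) hn
      simp only [hα]; linarith
  have hm1 : AEMeasurable u' (volume.restrict (⋃ n, Set.Icc c (β n))) :=
    aemeasurable_iUnion_iff.mpr fun n =>
      ((hAC.1 (β n) (hβprop n).1 (hβprop n).2).1.aestronglyMeasurable).aemeasurable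
  have hm2 : AEMeasurable u' (volume.restrict (⋃ n, Set.Icc (α n) d)) :=
    aemeasurable_iUnion_iff.mpr fun n =>
      ((hAC.2 (α n) (hαprop n).1 (hαprop n).2).1.aestronglyMeasurable).aemeasurable
  have hm3 : AEMeasurable u' (volume.restrict ({1} : Set ℝ)) := by
    have : volume.restrict ({1} : Set ℝ) = 0 :=
      Measure.restrict_eq_zero.mpr (measure_singleton 1)
    rw [this]
    exact aemeasurable_zero_measure
  have hcover : Set.Ioo c d ⊆ ((⋃ n, Set.Icc c (β n)) ∪ (⋃ n, Set.Icc (α n) d)) ∪ ({1} : Set ℝ) := by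
    intro x hx
    rcases lt_trichotomy x 1 with hx1 | hx1 | hx1
    · left; left
      have h1x : 0 < 1 - x := by linarith
      obtain ⟨n, hn⟩ := exists_nat_gt ((1 - c) / (1 - x))
      refine Set.mem_iUnion.mpr ⟨n, hx.1.le, ?_⟩
      have hn1 : (1 - c) / (1 - x) < (n : ℝ) + 1 := by
        have : (n : ℝ) ≤ (n : ℝ) + 1 := by linarith
        linarith
      have hpos : (0:ℝ) < (n : ℝ) + 1 := by positivity
      have : (1 - c) / ((n : ℝ) + 1) < 1 - x := by
        rw [div_lt_iff₀ hpos]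
        calc 1 - c = ((1 - c) / (1 - x)) * (1 - x) := by field_simp
        _ < ((n : ℝ) + 1) * (1 - x) := by
            exact mul_lt_mul_of_pos_right hn1 h1x
        _ = (1 - x) * ((n : ℝ) + 1) := by ring
      simp only [hβ]; linarith
    · right; simp [hx1]
    · left; right
      have hx1' : 0 < x - 1 := by linarith
      obtain ⟨n, hn⟩ := exists_nat_gt ((d - 1) / (x - 1))
      refine Set.mem_iUnion.mpr ⟨n, ?_, hx.2.le⟩
      have hn1 : (d - 1) / (x - 1) < (n : ℝ) + 1 := by
        have : (n : ℝ) ≤ (n : ℝ) + 1 := by linarith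
        linarith
      have hpos : (0:ℝ) < (n : ℝ) + 1 := by positivity
      have : (d - 1) / ((n : ℝ) + 1) < x - 1 := by
        rw [div_lt_iff₀ hpos]
        calc d - 1 = ((d - 1) / (x - 1)) * (x - 1) := by field_simp
        _ < ((n : ℝ) + 1) * (x - 1) := mul_lt_mul_of_pos_right hn1 hx1'
        _ = (x - 1) * ((n : ℝ) + 1) := by ring
      simp only [hα]; linarith
  have hbig : AEMeasurable u'
      (volume.restrict (((⋃ n, Set.Icc c (β n)) ∪ (⋃ n, Set.Icc (α n) d)) ∪ ({1} : Set ℝ))) :=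
    aemeasurable_union_iff.mpr ⟨aemeasurable_union_iff.mpr ⟨hm1, hm2⟩, hm3⟩
  exact hbig.mono_measure (Measure.restrict_mono hcover le_rfl)

/-! ### Main theorem -/

/-- Dissipativity identity: if the one-sided limits of
`a·u'·v` at `1` coincide, then `∫ [(a u')'·v + a·u'·v'] dx = 0`. -/
theorem stmt_14 (c d : ℝ) (a a' u u' v v' w : ℝ → ℝ)
    (hc : 0 ≤ c) (hc1 : c < 1) (h1d : 1 < d) (hd2 : d ≤ 2)
    (hw : IsWeight c d a a')
    (hv2 : MeasureTheory.MemLp v 2 (volume.restrict (Set.Ioo c d)))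
    (hACv : PiecewiseAC c d v v')
    (hvc : v c = 0) (hvd : v d = 0)
    (hintv : MeasureTheory.IntegrableOn (fun x => a x * v' x ^ 2) (Set.Ioo c d))
    (hACu : PiecewiseAC c d u u')
    (hintu : MeasureTheory.IntegrableOn (fun x => a x * u' x ^ 2) (Set.Ioo c d))
    (hw2 : MeasureTheory.MemLp w 2 (volume.restrict (Set.Ioo c d)))
    (hwint : MeasureTheory.IntegrableOn w (Set.Ioo c d))
    (hfluxAC : ∃ g₁ g₂ : ℝ → ℝ,
      (∀ x ∈ Set.Ico c 1, g₁ x = a x * u' x) ∧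
      (∀ x ∈ Set.Ioc 1 d, g₂ x = a x * u' x) ∧
      (∀ x ∈ Set.Icc c 1, g₁ x = g₁ c + ∫ t in c..x, w t) ∧
      (∀ x ∈ Set.Icc 1 d, g₂ x = g₂ 1 + ∫ t in (1:ℝ)..x, w t))
    (htrans : ∃ L : ℝ,
      Filter.Tendsto (fun x => a x * u' x * v x) (𝓝[<] 1) (𝓝 L) ∧
      Filter.Tendsto (fun x => a x * u' x * v x) (𝓝[>] 1) (𝓝 L)) :
    ∫ x in Set.Ioo c d, (w x * v x + a x * u' x * v' x) = 0 := by
  obtain ⟨g₁, g₂, hg1, hg2, hg1FTC, hg2FTC⟩ := hfluxAC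
  obtain ⟨L, hL1, hL2⟩ := htrans
  set h : ℝ → ℝ := fun x => w x * v x + a x * u' x * v' x with hh_def
  -- nonnegativity of the weight
  have ha_nonneg : ∀ x ∈ Set.Icc c d, 0 ≤ a x := by
    intro x hx
    by_cases hx1 : x = 1
    · rw [hx1, hw.zero_at_one]
    · exact (hw.pos x ⟨hx, hx1⟩).le
  -- integrability of w * v
  have hWV : IntegrableOn (fun x => w x * v x) (Set.Ioo c d) := by
    have hmem : MemLp (w • v) 1 (volume.restrict (Set.Ioo c d)) :=
      hv2.smul hw2 (hpqr := ⟨by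
        simp only [one_div, inv_one]
        exact ENNReal.inv_two_add_inv_two⟩)
    exact memLp_one_iff_integrable.mp hmem
  -- integrability of a * u' * v'
  have hu'm : AEMeasurable u' (volume.restrict (Set.Ioo c d)) := pac_aemeasurable hc1 h1d hACu
  have hv'm : AEMeasurable v' (volume.restrict (Set.Ioo c d)) := pac_aemeasurable hc1 h1d hACv
  have ham : AEMeasurable a (volume.restrict (Set.Ioo c d)) :=
    ((hw.cont.mono Set.Ioo_subset_Icc_self).aestronglyMeasurable measurableSet_Ioo).aemeasurable
  have hAUV : IntegrableOn (fun x => a x * u' x * v' x) (Set.Ioo c d) := by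
    refine Integrable.mono' (((hintu.add hintv).div_const 2))
      (((ham.mul hu'm).mul hv'm).aestronglyMeasurable) ?_
    filter_upwards [ae_restrict_mem measurableSet_Ioo] with x hx
    have h0 : 0 ≤ a x := ha_nonneg x (Set.Ioo_subset_Icc_self hx)
    rw [Real.norm_eq_abs, abs_mul, abs_mul, abs_of_nonneg h0]
    have hsq : |u' x| * |v' x| ≤ (u' x ^ 2 + v' x ^ 2) / 2 := by
      nlinarith [sq_nonneg (|u' x| - |v' x|), sq_abs (u' x), sq_abs (v' x)]
    calc a x * |u' x| * |v' x| = a x * (|u' x| * |v' x|) := by ring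
    _ ≤ a x * ((u' x ^ 2 + v' x ^ 2) / 2) := mul_le_mul_of_nonneg_left hsq h0
    _ = (a x * u' x ^ 2 + a x * v' x ^ 2) / 2 := by ring
  have hh : IntegrableOn h (Set.Ioo c d) := hWV.add hAUV
  -- key identity on the left of 1
  have key_left : ∀ α_ : ℝ, c ≤ α_ → α_ < 1 →
      ∫ x in Set.Ioc c α_, h x = g₁ α_ * v α_ := by
    intro β hcβ hβ1
    have hfw : IntegrableOn w (Set.Ioc c β) :=
      hwint.mono_set (fun z hz => ⟨hz.1, lt_of_le_of_lt hz.2 (hβ1.trans h1d)⟩)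
    have hgv' : IntegrableOn v' (Set.Ioc c β) :=
      ((hACv.1 β hcβ hβ1).1).mono_set Set.Ioc_subset_Icc_self
    have hF : ∀ x ∈ Set.Icc c β, g₁ x = g₁ c + ∫ y in Set.Ioc c x, w y := by
      intro x hx
      rw [hg1FTC x ⟨hx.1, hx.2.trans hβ1.le⟩, intervalIntegral.integral_of_le hx.1]
    have hG : ∀ x ∈ Set.Icc c β, v x = v c + ∫ y in Set.Ioc c x, v' y := by
      intro x hx
      rw [(hACv.1 β hcβ hβ1).2 x hx, intervalIntegral.integral_of_le hx.1]
    have hibp := ibp_ac hcβ hfw hgv' hF hG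
    have hcongr : ∫ x in Set.Ioc c β, h x
        = ∫ x in Set.Ioc c β, (w x * v x + g₁ x * v' x) := by
      refine setIntegral_congr_fun measurableSet_Ioc (fun x hx => ?_)
      simp only [hh_def]
      rw [hg1 x ⟨hx.1.le, lt_of_le_of_lt hx.2 hβ1⟩]
    rw [hcongr, hibp, hvc, mul_zero, sub_zero]
  -- key identity on the right of 1
  have hIw1d : IntegrableOn w (Set.Ioc 1 d) :=
    (integrableOn_Ioc_iff_integrableOn_Ioo).mpr
      (hwint.mono_set (Set.Ioo_subset_Ioo_left hc1.le))
  have key_right : ∀ α_ : ℝ, 1 < α_ → α_ ≤ d →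
      ∫ x in Set.Ioc α_ d, h x = -(g₂ α_ * v α_) := by
    intro α h1α hαd
    have hfw : IntegrableOn w (Set.Ioc α d) :=
      hIw1d.mono_set (Set.Ioc_subset_Ioc_left h1α.le)
    have hgv' : IntegrableOn v' (Set.Ioc α d) :=
      ((hACv.2 α h1α hαd).1).mono_set Set.Ioc_subset_Icc_self
    have hF : ∀ x ∈ Set.Icc α d, g₂ x = g₂ α + ∫ y in Set.Ioc α x, w y := by
      intro x hx
      have hx1 : (1:ℝ) ≤ x := h1α.le.trans hx.1
      have i1 : IntervalIntegrable w volume 1 x :=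
        (intervalIntegrable_iff_integrableOn_Ioc_of_le hx1).mpr
          (hIw1d.mono_set (Set.Ioc_subset_Ioc_right hx.2))
      have i2 : IntervalIntegrable w volume 1 α :=
        (intervalIntegrable_iff_integrableOn_Ioc_of_le h1α.le).mpr
          (hIw1d.mono_set (Set.Ioc_subset_Ioc_right hαd))
      have hsub := intervalIntegral.integral_interval_sub_left i1 i2
      have e1 := hg2FTC x ⟨hx1, hx.2⟩
      have e2 := hg2FTC α ⟨h1α.le, hαd⟩
      rw [← intervalIntegral.integral_of_le hx.1, ← hsub, e1, e2]
      ring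
    have hG : ∀ x ∈ Set.Icc α d, v x = v α + ∫ y in Set.Ioc α x, v' y := by
      intro x hx
      rw [(hACv.2 α h1α hαd).2 x hx, intervalIntegral.integral_of_le hx.1]
    have hibp := ibp_ac hαd hfw hgv' hF hG
    have hcongr : ∫ x in Set.Ioc α d, h x
        = ∫ x in Set.Ioc α d, (w x * v x + g₂ x * v' x) := by
      refine setIntegral_congr_fun measurableSet_Ioc (fun x hx => ?_)
      simp only [hh_def]
      rw [hg2 x ⟨h1α.trans hx.1, hx.2⟩]
    rw [hcongr, hibp, hvd, mul_zero]
    ring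
  -- sequences approaching 1
  set βs : ℕ → ℝ := fun n => 1 - (1 - c) / (n + 1) with hβs
  set αs : ℕ → ℝ := fun n => 1 + (d - 1) / (n + 1) with hαs
  have hβprop : ∀ n : ℕ, c ≤ βs n ∧ βs n < 1 := by
    intro n
    have hn : (1 : ℝ) ≤ (n : ℝ) + 1 := by
      have : (0:ℝ) ≤ (n:ℝ) := Nat.cast_nonneg n
      linarith
    constructor
    · have : (1 - c) / (n + 1) ≤ 1 - c := div_le_self (by linarith) hn
      simp only [hβs]; linarith
    · have : 0 < (1 - c) / (n + 1) := div_pos (by linarith) (by positivity)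
      simp only [hβs]; linarith
  have hαprop : ∀ n : ℕ, 1 < αs n ∧ αs n ≤ d := by
    intro n
    have hn : (1 : ℝ) ≤ (n : ℝ) + 1 := by
      have : (0:ℝ) ≤ (n:ℝ) := Nat.cast_nonneg n
      linarith
    constructor
    · have : 0 < (d - 1) / (n + 1) := div_pos (by linarith) (by positivity)
      simp only [hαs]; linarith
    · have : (d - 1) / (n + 1) ≤ d - 1 := div_le_self (by linarith) hn
      simp only [hαs]; linarith
  have htend_aux : Tendsto (fun n : ℕ => 1 / ((n : ℝ) + 1)) atTop (𝓝 0) :=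
    tendsto_one_div_add_atTop_nhds_zero_nat
  have hβtendsto : Tendsto βs atTop (𝓝 1) := by
    have : Tendsto (fun n : ℕ => 1 - (1 - c) * (1 / ((n : ℝ) + 1))) atTop (𝓝 (1 - (1 - c) * 0)) :=
      tendsto_const_nhds.sub (tendsto_const_nhds.mul htend_aux)
    simpa [hβs, mul_one_div, div_eq_mul_inv] using this
  have hαtendsto : Tendsto αs atTop (𝓝 1) := by
    have : Tendsto (fun n : ℕ => 1 + (d - 1) * (1 / ((n : ℝ) + 1))) atTop (𝓝 (1 + (d - 1) * 0)) :=
      tendsto_const_nhds.add (tendsto_const_nhds.mul htend_aux)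
    simpa [hαs, mul_one_div, div_eq_mul_inv] using this
  have hβin : Tendsto βs atTop (𝓝[<] 1) :=
    tendsto_nhdsWithin_of_tendsto_nhds_of_eventually_within _ hβtendsto
      (Eventually.of_forall fun n => (hβprop n).2)
  have hαin : Tendsto αs atTop (𝓝[>] 1) :=
    tendsto_nhdsWithin_of_tendsto_nhds_of_eventually_within _ hαtendsto
      (Eventually.of_forall fun n => (hαprop n).1)
  -- βs is monotone, αs is antitone
  have hβmono : Monotone βs := by
    intro m n hmn
    have h1 : (0:ℝ) < (m : ℝ) + 1 := by positivity
    have h2 : (m : ℝ) + 1 ≤ (n : ℝ) + 1 := by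
      have : (m : ℝ) ≤ (n : ℝ) := Nat.cast_le.mpr hmn
      linarith
    have := div_le_div_of_nonneg_left (by linarith : (0:ℝ) ≤ 1 - c) h1 h2
    simp only [hβs]
    linarith
  have hαanti : Antitone αs := by
    intro m n hmn
    have h1 : (0:ℝ) < (m : ℝ) + 1 := by positivity
    have h2 : (m : ℝ) + 1 ≤ (n : ℝ) + 1 := by
      have : (m : ℝ) ≤ (n : ℝ) := Nat.cast_le.mpr hmn
      linarith
    have := div_le_div_of_nonneg_left (by linarith : (0:ℝ) ≤ d - 1) h1 h2
    simp only [hαs]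
    linarith
  -- left limit: integral over Ioo c 1
  have hIl : IntegrableOn h (Set.Ioo c 1) :=
    hh.mono_set (Set.Ioo_subset_Ioo_right h1d.le)
  have hUl : (⋃ n, Set.Ioc c (βs n)) = Set.Ioo c 1 := by
    apply Set.Subset.antisymm
    · refine Set.iUnion_subset fun n z hz => ⟨hz.1, lt_of_le_of_lt hz.2 (hβprop n).2⟩
    · intro z hz
      have := hβtendsto.eventually (eventually_gt_nhds hz.2)
      obtain ⟨n, hn⟩ := this.exists
      exact Set.mem_iUnion.mpr ⟨n, hz.1, hn.le⟩
  have hleft_tendsto : Tendsto (fun n => ∫ x in Set.Ioc c (βs n), h x) atTop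
      (𝓝 (∫ x in Set.Ioo c 1, h x)) := by
    have := tendsto_setIntegral_of_monotone (fun n => measurableSet_Ioc)
      (fun m n hmn => Set.Ioc_subset_Ioc_right (hβmono hmn))
      (show IntegrableOn h (⋃ n, Set.Ioc c (βs n)) by rw [hUl]; exact hIl)
    rwa [hUl] at this
  have hleft_val : Tendsto (fun n => ∫ x in Set.Ioc c (βs n), h x) atTop (𝓝 L) := by
    have heq : (fun n => ∫ x in Set.Ioc c (βs n), h x)
        = fun n => a (βs n) * u' (βs n) * v (βs n) := by
      funext n
      rw [key_left (βs n) (hβprop n).1 (hβprop n).2,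
        hg1 (βs n) ⟨(hβprop n).1, (hβprop n).2⟩]
    rw [heq]
    exact hL1.comp hβin
  have hIoo_c1 : ∫ x in Set.Ioo c 1, h x = L := tendsto_nhds_unique hleft_tendsto hleft_val
  -- right limit : integral over Ioc 1 d
  have hIr : IntegrableOn h (Set.Ioc 1 d) :=
    (integrableOn_Ioc_iff_integrableOn_Ioo).mpr (hh.mono_set (Set.Ioo_subset_Ioo_left hc1.le))
  have hUr : (⋃ n, Set.Ioc (αs n) d) = Set.Ioc 1 d := by
    apply Set.Subset.antisymm
    · refine Set.iUnion_subset fun n z hz => ⟨(hαprop n).1.trans hz.1, hz.2⟩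
    · intro z hz
      have := hαtendsto.eventually (eventually_lt_nhds hz.1)
      obtain ⟨n, hn⟩ := this.exists
      exact Set.mem_iUnion.mpr ⟨n, hn, hz.2⟩
  have hright_tendsto : Tendsto (fun n => ∫ x in Set.Ioc (αs n) d, h x) atTop
      (𝓝 (∫ x in Set.Ioc 1 d, h x)) := by
    have := tendsto_setIntegral_of_monotone (fun n => measurableSet_Ioc)
      (fun m n hmn => Set.Ioc_subset_Ioc_left (hαanti hmn))
      (show IntegrableOn h (⋃ n, Set.Ioc (αs n) d) by rw [hUr]; exact hIr)
    rwa [hUr] at this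
  have hright_val : Tendsto (fun n => ∫ x in Set.Ioc (αs n) d, h x) atTop (𝓝 (-L)) := by
    have heq : (fun n => ∫ x in Set.Ioc (αs n) d, h x)
        = fun n => -(a (αs n) * u' (αs n) * v (αs n)) := by
      funext n
      rw [key_right (αs n) (hαprop n).1 (hαprop n).2,
        hg2 (αs n) ⟨(hαprop n).1, (hαprop n).2⟩]
    rw [heq]
    exact (hL2.comp hαin).neg
  have hIoc_1d : ∫ x in Set.Ioc 1 d, h x = -L := tendsto_nhds_unique hright_tendsto hright_val
  -- combine
  have hdisj : Disjoint (Set.Ioo c 1) (Set.Ioc 1 d) := by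
    refine Set.disjoint_left.mpr fun z hz hz' => ?_
    exact absurd (hz.2.trans hz'.1) (lt_irrefl z)
  have hunion : ∫ x in Set.Ioo c 1 ∪ Set.Ioc 1 d, h x
      = (∫ x in Set.Ioo c 1, h x) + ∫ x in Set.Ioc 1 d, h x :=
    setIntegral_union hdisj measurableSet_Ioc hIl hIr
  have hset : Set.Ioo c d =ᵐ[volume] ((Set.Ioo c 1 ∪ Set.Ioc 1 d : Set ℝ)) := by
    rw [MeasureTheory.ae_eq_set]
    constructor
    · refine measure_mono_null (fun z hz => ?_) (measure_singleton (1:ℝ))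
      obtain ⟨hz1, hz2⟩ := hz
      rcases lt_trichotomy z 1 with hlt | heq | hgt
      · exact absurd (Or.inl ⟨hz1.1, hlt⟩) hz2
      · exact heq
      · exact absurd (Or.inr ⟨hgt, hz1.2.le⟩) hz2
    · refine measure_mono_null (fun z hz => ?_) (measure_singleton d)
      obtain ⟨hz1, hz2⟩ := hz
      rcases hz1 with hl | hr
      · exact absurd ⟨hl.1, hl.2.trans h1d⟩ hz2
      · by_contra hne
        exact hz2 ⟨hc1.trans hr.1, lt_of_le_of_ne hr.2 hne⟩
  calc ∫ x in Set.Ioo c d, h x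
      = ∫ x in Set.Ioo c 1 ∪ Set.Ioc 1 d, h x := setIntegral_congr_set hset
  _ = (∫ x in Set.Ioo c 1, h x) + ∫ x in Set.Ioc 1 d, h x := hunion
  _ = L + -L := by rw [hIoo_c1, hIoc_1d]
  _ = 0 := by ring

end
end

section
/- (Conservation of energy.) Let a be a weight, T > 0, and let y be a classical solution of the degenerate wave equation on [0,T] such that: y(t,c) = y(t,d) = 0 for all t ∈ [0,T]; for every t ∈ [0,T] the one-sided limits lim_{x↗1} a(x)·∂_x y(t,x)·∂_t y(t,x) and lim_{x↘1} a(x)·∂_x y(t,x)·∂_t y(t,x) exist and are equal; and there exists h ∈ L¹(c,d) such that (∂_t y(t,x))² + a(x)·(∂_x y(t,x))² + |∂_t y(t,x)·∂_{tt} y(t,x)| + a(x)·|∂_x y(t,x)·∂_{tx} y(t,x)| ≤ h(x) for all t ∈ [0,T] and x ∈ (c,d) \ {1}. Then E_y(t) = E_y(0) for all t ∈ [0,T]. -/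
open MeasureTheory Set Filter Topology

noncomputable section

/-- A classical solution `y` of the degenerate wave equation
`∂_tt y = ∂_x (a ∂_x y)` on `[0,T] × ([c,1) ∪ (1,d])`, carrying its partial
derivatives `yt = ∂_t y`, `yx = ∂_x y`, `ytt = ∂_tt y`, `ytx = ∂_x ∂_t y` and
`ww = ∂_x (a ∂_x y)`, all continuous on `[0,T] × ([c,1) ∪ (1,d])`. -/
structure ClassicalSolution (c d T : ℝ) (a : ℝ → ℝ)
    (y yt yx ytt ytx ww : ℝ → ℝ → ℝ) : Prop where
  dt : ∀ t ∈ Set.Icc (0:ℝ) T, ∀ x ∈ Set.Icc c d \ {1},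
    HasDerivWithinAt (fun s => y s x) (yt t x) (Set.Icc 0 T) t
  dtt : ∀ t ∈ Set.Icc (0:ℝ) T, ∀ x ∈ Set.Icc c d \ {1},
    HasDerivWithinAt (fun s => yt s x) (ytt t x) (Set.Icc 0 T) t
  dx : ∀ t ∈ Set.Icc (0:ℝ) T, ∀ x ∈ Set.Icc c d \ {1},
    HasDerivWithinAt (fun z => y t z) (yx t x) (Set.Icc c d \ {1}) x
  dtx : ∀ t ∈ Set.Icc (0:ℝ) T, ∀ x ∈ Set.Icc c d \ {1},
    HasDerivWithinAt (fun z => yt t z) (ytx t x) (Set.Icc c d \ {1}) x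
  dax : ∀ t ∈ Set.Icc (0:ℝ) T, ∀ x ∈ Set.Icc c d \ {1},
    HasDerivWithinAt (fun z => a z * yx t z) (ww t x) (Set.Icc c d \ {1}) x
  cy : ContinuousOn (fun p : ℝ × ℝ => y p.1 p.2) (Set.Icc 0 T ×ˢ (Set.Icc c d \ {1}))
  cyt : ContinuousOn (fun p : ℝ × ℝ => yt p.1 p.2) (Set.Icc 0 T ×ˢ (Set.Icc c d \ {1}))
  cyx : ContinuousOn (fun p : ℝ × ℝ => yx p.1 p.2) (Set.Icc 0 T ×ˢ (Set.Icc c d \ {1}))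
  cytt : ContinuousOn (fun p : ℝ × ℝ => ytt p.1 p.2) (Set.Icc 0 T ×ˢ (Set.Icc c d \ {1}))
  cytx : ContinuousOn (fun p : ℝ × ℝ => ytx p.1 p.2) (Set.Icc 0 T ×ˢ (Set.Icc c d \ {1}))
  cww : ContinuousOn (fun p : ℝ × ℝ => ww p.1 p.2) (Set.Icc 0 T ×ˢ (Set.Icc c d \ {1}))
  wave : ∀ t ∈ Set.Icc (0:ℝ) T, ∀ x ∈ Set.Ioo c d \ {1}, ytt t x = ww t x

/-- slice continuity in the second variable -/
lemma EC.slice_x {T : ℝ} {S : Set ℝ} {f : ℝ → ℝ → ℝ}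
    (hf : ContinuousOn (fun p : ℝ × ℝ => f p.1 p.2) (Set.Icc 0 T ×ˢ S))
    {t : ℝ} (ht : t ∈ Set.Icc (0:ℝ) T) : ContinuousOn (f t) S := by
  have hmap : ∀ x ∈ S, ((t, x) : ℝ × ℝ) ∈ Set.Icc (0:ℝ) T ×ˢ S := fun x hx => ⟨ht, hx⟩
  exact hf.comp ((continuous_const.prodMk continuous_id).continuousOn) hmap

/-- slice continuity in the first variable -/
lemma EC.slice_t {T : ℝ} {S : Set ℝ} {f : ℝ → ℝ → ℝ}
    (hf : ContinuousOn (fun p : ℝ × ℝ => f p.1 p.2) (Set.Icc 0 T ×ˢ S))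
    {x : ℝ} (hx : x ∈ S) : ContinuousOn (fun s => f s x) (Set.Icc (0:ℝ) T) := by
  have hmap : ∀ s ∈ Set.Icc (0:ℝ) T, ((s, x) : ℝ × ℝ) ∈ Set.Icc (0:ℝ) T ×ˢ S :=
    fun s hs => ⟨hs, hx⟩
  exact hf.comp ((continuous_id.prodMk continuous_const).continuousOn) hmap

/-- clamped FTC-1 : derivative within `Icc p q` of `u ↦ ∫_p^u g`. -/
lemma EC.ftc1_within {p q : ℝ} {g : ℝ → ℝ} (hg : ContinuousOn g (Set.Icc p q))
    {t : ℝ} (ht : t ∈ Set.Icc p q) :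
    HasDerivWithinAt (fun u => ∫ s in p..u, g s) (g t) (Set.Icc p q) t := by
  have hpq : p ≤ q := ht.1.trans ht.2
  set g' : ℝ → ℝ := fun s => g (max p (min s q)) with hg'def
  have hclamp : Continuous fun s : ℝ => max p (min s q) :=
    continuous_const.max (continuous_id.min continuous_const)
  have hmap : ∀ s : ℝ, max p (min s q) ∈ Set.Icc p q := fun s =>
    ⟨le_max_left _ _, max_le hpq (min_le_right _ _)⟩
  have hcont : Continuous g' := hg.comp_continuous hclamp hmap
  have hgg' : ∀ s ∈ Set.Icc p q, g' s = g s := by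
    intro s hs
    have h1 : min s q = s := min_eq_left hs.2
    have h2 : max p s = s := max_eq_right hs.1
    simp [hg'def, h1, h2]
  have heq : ∀ u ∈ Set.Icc p q, (∫ s in p..u, g' s) = ∫ s in p..u, g s := by
    intro u hu
    apply intervalIntegral.integral_congr
    intro s hs
    rw [Set.uIcc_of_le hu.1] at hs
    exact hgg' s ⟨hs.1, hs.2.trans hu.2⟩
  have hD : HasDerivAt (fun u => ∫ s in p..u, g' s) (g' t) t :=
    intervalIntegral.integral_hasDerivAt_right (hcont.intervalIntegrable _ _)
      (hcont.stronglyMeasurableAtFilter _ _) hcont.continuousAt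
  have := (hD.hasDerivWithinAt (s := Set.Icc p q)).congr
    (fun u hu => (heq u hu).symm) ((heq t ht).symm)
  rwa [hgg' t ht] at this

/-- Clairaut-type lemma: the time derivative of `yx` is `ytx`. -/
lemma EC.clairaut {c d T : ℝ} {a : ℝ → ℝ} {y yt yx ytt ytx ww : ℝ → ℝ → ℝ}
    (hT : 0 < T)
    (hsol : ClassicalSolution c d T a y yt yx ytt ytx ww)
    {p q x : ℝ} (hpq : Set.Icc p q ⊆ Set.Icc c d \ {1}) (hx : x ∈ Set.Ioo p q)
    {t : ℝ} (ht : t ∈ Set.Icc (0:ℝ) T) :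
    HasDerivWithinAt (fun s => yx s x) (ytx t x) (Set.Icc 0 T) t := by
  have hSx : x ∈ Set.Icc c d \ {1} := hpq ⟨hx.1.le, hx.2.le⟩
  have hopen : IsOpen (Set.Ioo p q) := isOpen_Ioo
  have hnb : ∀ z ∈ Set.Ioo p q, Set.Icc c d \ {1} ∈ 𝓝 z := fun z hz =>
    Filter.mem_of_superset (hopen.mem_nhds hz) (fun w hw => hpq ⟨hw.1.le, hw.2.le⟩)
  -- key identity: yx u x = yx 0 x + ∫_0^u ytx
  have key : ∀ u ∈ Set.Icc (0:ℝ) T, yx u x = yx 0 x + ∫ s in (0:ℝ)..u, ytx s x := by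
    intro u hu
    have h0T : (0:ℝ) ∈ Set.Icc (0:ℝ) T := ⟨le_refl 0, hT.le⟩
    -- the representation y u x' - y 0 x' = ∫_0^u yt s x'
    have hC3 : ∀ x' ∈ Set.Ioo p q, (∫ s in (0:ℝ)..u, yt s x') = y u x' - y 0 x' := by
      intro x' hx'
      have hS' : x' ∈ Set.Icc c d \ {1} := hpq ⟨hx'.1.le, hx'.2.le⟩
      have hcont : ContinuousOn (fun s => y s x') (Set.Icc 0 u) :=
        (EC.slice_t hsol.cy hS').mono (Set.Icc_subset_Icc le_rfl hu.2)
      have hderiv : ∀ s ∈ Set.Ioo (0:ℝ) u, HasDerivWithinAt (fun s => y s x') (yt s x')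
          (Set.Ioi s) s := by
        intro s hs
        have hsT : s ∈ Set.Icc (0:ℝ) T := ⟨hs.1.le, hs.2.le.trans hu.2⟩
        have hnbT : Set.Icc (0:ℝ) T ∈ 𝓝 s := by
          refine Filter.mem_of_superset (isOpen_Ioo.mem_nhds (⟨hs.1, lt_of_lt_of_le hs.2 hu.2⟩ :
            s ∈ Set.Ioo (0:ℝ) T)) Set.Ioo_subset_Icc_self
        exact ((hsol.dt s hsT x' hS').hasDerivAt hnbT).hasDerivWithinAt
      have hint : IntervalIntegrable (fun s => yt s x') volume 0 u := by
        apply ContinuousOn.intervalIntegrable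
        rw [Set.uIcc_of_le hu.1]
        exact (EC.slice_t hsol.cyt hS').mono (Set.Icc_subset_Icc le_rfl hu.2)
      exact intervalIntegral.integral_eq_sub_of_hasDeriv_right_of_le hu.1 hcont hderiv hint
    -- derivative of x' ↦ y u x' - y 0 x' at x, first value
    have h1 : HasDerivAt (fun x' => y u x' - y 0 x') (yx u x - yx 0 x) x :=
      ((hsol.dx u hu x hSx).hasDerivAt (hnb x hx)).sub
        ((hsol.dx 0 h0T x hSx).hasDerivAt (hnb x hx))
    -- derivative of the parametric integral
    have h2 : HasDerivAt (fun x' => ∫ s in (0:ℝ)..u, yt s x') (∫ s in (0:ℝ)..u, ytx s x) x := by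
      rcases eq_or_lt_of_le hu.1 with hu0 | hu0
      · rw [← hu0]
        simp only [intervalIntegral.integral_same]
        exact hasDerivAt_const x 0
      · have hIocT : Set.Ioc (0:ℝ) u ⊆ Set.Icc (0:ℝ) T := fun s hs => ⟨hs.1.le, hs.2.trans hu.2⟩
        have hIccT : Set.Icc (0:ℝ) u ⊆ Set.Icc (0:ℝ) T := Set.Icc_subset_Icc le_rfl hu.2
        set ε : ℝ := min (x - p) (q - x) with hε
        have hε_pos : 0 < ε := lt_min (by linarith [hx.1]) (by linarith [hx.2])
        have hball : Metric.ball x ε ⊆ Set.Ioo p q := by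
          rw [Real.ball_eq_Ioo]
          intro z hz
          constructor
          · have := min_le_left (x - p) (q - x); linarith [hz.1]
          · have := min_le_right (x - p) (q - x); linarith [hz.2]
        have hKsub : Set.Icc (0:ℝ) u ×ˢ Set.Icc p q ⊆
            Set.Icc (0:ℝ) T ×ˢ (Set.Icc c d \ {1}) := Set.prod_mono hIccT hpq
        obtain ⟨M, hM⟩ := (isCompact_Icc.prod isCompact_Icc).exists_bound_of_continuousOn
          (hsol.cytx.mono hKsub)
        have hmeasIoc : MeasurableSet (Set.Ioc (0:ℝ) u) := measurableSet_Ioc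
        have main := (hasDerivAt_integral_of_dominated_loc_of_deriv_le
          (μ := volume.restrict (Set.Ioc (0:ℝ) u))
          (F := fun x' s => yt s x') (F' := fun x' s => ytx s x') (x₀ := x)
          (bound := fun _ => M) (Metric.ball_mem_nhds x hε_pos) ?_ ?_ ?_ ?_ ?_ ?_).2
        · simpa only [intervalIntegral.integral_of_le hu.1] using main
        · filter_upwards [hopen.mem_nhds hx] with z hz
          exact ((EC.slice_t hsol.cyt (hpq ⟨hz.1.le, hz.2.le⟩)).mono hIocT).aestronglyMeasurable
            hmeasIoc
        · exact (((EC.slice_t hsol.cyt hSx).mono hIccT).integrableOn_Icc).mono_set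
            Set.Ioc_subset_Icc_self
        · exact ((EC.slice_t hsol.cytx hSx).mono hIocT).aestronglyMeasurable hmeasIoc
        · filter_upwards [MeasureTheory.ae_restrict_mem hmeasIoc] with s hs
          intro x' hx'
          have hx'pq := hball hx'
          exact hM (s, x') ⟨Set.Ioc_subset_Icc_self hs, ⟨hx'pq.1.le, hx'pq.2.le⟩⟩
        · exact MeasureTheory.integrable_const M
        · filter_upwards [MeasureTheory.ae_restrict_mem hmeasIoc] with s hs
          intro x' hx'
          have hx'pq := hball hx'
          exact (hsol.dtx s (hIocT hs) x' (hpq ⟨hx'pq.1.le, hx'pq.2.le⟩)).hasDerivAt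
            (hnb x' hx'pq)
    have h2' : HasDerivAt (fun x' => y u x' - y 0 x') (∫ s in (0:ℝ)..u, ytx s x) x := by
      apply h2.congr_of_eventuallyEq
      filter_upwards [hopen.mem_nhds hx] with z hz
      exact (hC3 z hz).symm
    have := h2'.unique h1
    linarith [this]
  -- conclude by FTC-1
  have hcont : ContinuousOn (fun s => ytx s x) (Set.Icc 0 T) := EC.slice_t hsol.cytx hSx
  have hftc := (EC.ftc1_within hcont ht).const_add (yx 0 x)
  exact hftc.congr (fun u hu => key u hu) (key t ht)

/-- The space integral of `2 yt ytt + 2 a yx ytx` vanishes. -/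
lemma EC.spaceint {c d T : ℝ} {a a' : ℝ → ℝ} {y yt yx ytt ytx ww : ℝ → ℝ → ℝ} {h : ℝ → ℝ}
    (hc1 : c < 1) (h1d : 1 < d) (hT : 0 < T)
    (hw : IsWeight c d a a')
    (hsol : ClassicalSolution c d T a y yt yx ytt ytx ww)
    (hbc : ∀ t ∈ Set.Icc (0:ℝ) T, y t c = 0 ∧ y t d = 0)
    (htrans : ∀ t ∈ Set.Icc (0:ℝ) T, ∃ L : ℝ,
      Filter.Tendsto (fun x => a x * yx t x * yt t x) (𝓝[<] 1) (𝓝 L) ∧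
      Filter.Tendsto (fun x => a x * yx t x * yt t x) (𝓝[>] 1) (𝓝 L))
    (hhint : MeasureTheory.IntegrableOn h (Set.Ioo c d))
    (hdom : ∀ t ∈ Set.Icc (0:ℝ) T, ∀ x ∈ Set.Ioo c d \ {1},
      (yt t x) ^ 2 + a x * (yx t x) ^ 2 + |yt t x * ytt t x|
        + a x * |yx t x * ytx t x| ≤ h x)
    {t : ℝ} (ht : t ∈ Set.Icc (0:ℝ) T) :
    ∫ x in Set.Ioo c d, (2*(yt t x * ytt t x) + 2*(a x * (yx t x * ytx t x))) = 0 := by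
  have hcd : c < d := hc1.trans h1d
  have hcS : c ∈ Set.Icc c d \ {1} := ⟨⟨le_rfl, hcd.le⟩, by
    simp only [Set.mem_singleton_iff]; exact ne_of_lt hc1⟩
  have hdS : d ∈ Set.Icc c d \ {1} := ⟨⟨hcd.le, le_rfl⟩, by
    simp only [Set.mem_singleton_iff]; exact ne_of_gt h1d⟩
  have hud := uniqueDiffOn_Icc hT t ht
  -- yt t c = 0 and yt t d = 0
  have ytc0 : yt t c = 0 := by
    have h1 := hsol.dt t ht c hcS
    have h2 : HasDerivWithinAt (fun s => y s c) 0 (Set.Icc 0 T) t :=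
      (hasDerivWithinAt_const t _ (0:ℝ)).congr (fun s hs => (hbc s hs).1) ((hbc t ht).1)
    rw [← h1.derivWithin hud, h2.derivWithin hud]
  have ytd0 : yt t d = 0 := by
    have h1 := hsol.dt t ht d hdS
    have h2 : HasDerivWithinAt (fun s => y s d) 0 (Set.Icc 0 T) t :=
      (hasDerivWithinAt_const t _ (0:ℝ)).congr (fun s hs => (hbc s hs).2) ((hbc t ht).2)
    rw [← h1.derivWithin hud, h2.derivWithin hud]
  obtain ⟨L, hL1, hL2⟩ := htrans t ht
  set q : ℝ → ℝ := fun z => a z * yx t z * yt t z with hqdef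
  set Q : ℝ → ℝ := Function.update q 1 L with hQdef
  set g : ℝ → ℝ := fun z => 2*(yt t z * ytt t z) + 2*(a z * (yx t z * ytx t z)) with hgdef
  have hQq : ∀ z, z ≠ 1 → Q z = q z := fun z hz => Function.update_of_ne hz _ _
  have hQ1 : Q 1 = L := Function.update_self _ _ _
  have contq : ContinuousOn q (Set.Icc c d \ {1}) :=
    ((hw.cont.mono diff_subset).mul (EC.slice_x hsol.cyx ht)).mul (EC.slice_x hsol.cyt ht)
  have contg : ContinuousOn g (Set.Icc c d \ {1}) := by
    apply ContinuousOn.add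
    · exact continuousOn_const.mul ((EC.slice_x hsol.cyt ht).mul (EC.slice_x hsol.cytt ht))
    · exact continuousOn_const.mul ((hw.cont.mono diff_subset).mul
        ((EC.slice_x hsol.cyx ht).mul (EC.slice_x hsol.cytx ht)))
  -- continuity of Q on the two closed subintervals
  have contQl : ContinuousOn Q (Set.Icc c 1) := by
    intro z hz
    rcases eq_or_ne z 1 with rfl | hne
    · show Filter.Tendsto Q (𝓝[Set.Icc c 1] (1:ℝ)) (𝓝 (Q 1))
      rw [hQ1]
      have hsplit : Set.Icc c (1:ℝ) = Set.Ico c 1 ∪ {1} := (Set.Ico_union_right hc1.le).symm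
      rw [hsplit, nhdsWithin_union, Filter.tendsto_sup]
      constructor
      · apply Filter.Tendsto.congr' _
          (hL1.mono_left (nhdsWithin_mono _ Set.Ico_subset_Iio_self))
        filter_upwards [self_mem_nhdsWithin] with w hw
        exact (hQq w (ne_of_lt hw.2)).symm
      · rw [nhdsWithin_singleton, Filter.tendsto_pure_left]
        intro s hs
        rw [hQ1]; exact mem_of_mem_nhds hs
    · have hz1 : z < 1 := lt_of_le_of_ne hz.2 hne
      have hzS : z ∈ Set.Icc c d \ {1} := ⟨⟨hz.1, by linarith⟩, hne⟩
      have hsub : Set.Icc c 1 \ {1} ⊆ Set.Icc c d \ {1} :=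
        Set.diff_subset_diff (Set.Icc_subset_Icc le_rfl h1d.le) subset_rfl
      have base : ContinuousWithinAt Q (Set.Icc c 1 \ {1}) z :=
        ((contq z hzS).mono hsub).congr (fun w hw => hQq w hw.2) (hQq z hne)
      apply base.mono_of_mem_nhdsWithin
      rw [Set.diff_eq]
      exact Filter.inter_mem self_mem_nhdsWithin
        (mem_nhdsWithin_of_mem_nhds (isOpen_compl_singleton.mem_nhds hne))
  have contQr : ContinuousOn Q (Set.Icc 1 d) := by
    intro z hz
    rcases eq_or_ne z 1 with rfl | hne
    · show Filter.Tendsto Q (𝓝[Set.Icc (1:ℝ) d] (1:ℝ)) (𝓝 (Q 1))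
      rw [hQ1]
      have hsplit : Set.Icc (1:ℝ) d = Set.Ioc 1 d ∪ {1} := (Set.Ioc_union_left h1d.le).symm
      rw [hsplit, nhdsWithin_union, Filter.tendsto_sup]
      constructor
      · apply Filter.Tendsto.congr' _
          (hL2.mono_left (nhdsWithin_mono _ Set.Ioc_subset_Ioi_self))
        filter_upwards [self_mem_nhdsWithin] with w hw
        exact (hQq w (ne_of_gt hw.1)).symm
      · rw [nhdsWithin_singleton, Filter.tendsto_pure_left]
        intro s hs
        rw [hQ1]; exact mem_of_mem_nhds hs
    · have hz1 : (1:ℝ) < z := lt_of_le_of_ne hz.1 (Ne.symm hne)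
      have hzS : z ∈ Set.Icc c d \ {1} := ⟨⟨by linarith, hz.2⟩, hne⟩
      have hsub : Set.Icc 1 d \ {1} ⊆ Set.Icc c d \ {1} :=
        Set.diff_subset_diff (Set.Icc_subset_Icc hc1.le le_rfl) subset_rfl
      have base : ContinuousWithinAt Q (Set.Icc 1 d \ {1}) z :=
        ((contq z hzS).mono hsub).congr (fun w hw => hQq w hw.2) (hQq z hne)
      apply base.mono_of_mem_nhdsWithin
      rw [Set.diff_eq]
      exact Filter.inter_mem self_mem_nhdsWithin
        (mem_nhdsWithin_of_mem_nhds (isOpen_compl_singleton.mem_nhds hne))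
  -- derivative of 2*Q at interior points
  have derivQ2 : ∀ z ∈ Set.Ioo c d \ {1}, HasDerivAt (fun w => 2 * Q w) (g z) z := by
    intro z hz
    have hzS : z ∈ Set.Icc c d \ {1} := ⟨Set.Ioo_subset_Icc_self hz.1, hz.2⟩
    have ho : IsOpen (Set.Ioo c d \ {1}) := isOpen_Ioo.sdiff isClosed_singleton
    have hnb : Set.Icc c d \ {1} ∈ 𝓝 z :=
      Filter.mem_of_superset (ho.mem_nhds hz)
        (Set.diff_subset_diff Set.Ioo_subset_Icc_self subset_rfl)
    have hu : HasDerivAt (fun w => a w * yx t w) (ww t z) z :=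
      (hsol.dax t ht z hzS).hasDerivAt hnb
    have hv : HasDerivAt (fun w => yt t w) (ytx t z) z :=
      (hsol.dtx t ht z hzS).hasDerivAt hnb
    have hq : HasDerivAt q (ww t z * yt t z + (a z * yx t z) * ytx t z) z := hu.mul hv
    have hQ : HasDerivAt Q (ww t z * yt t z + (a z * yx t z) * ytx t z) z := by
      apply hq.congr_of_eventuallyEq
      filter_upwards [isOpen_compl_singleton.mem_nhds hz.2] with w hw
      exact hQq w hw
    have h2Q := hQ.const_mul 2
    refine HasDerivAt.congr_deriv h2Q ?_
    rw [hgdef]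
    simp only []
    rw [hsol.wave t ht z hz]
    ring
  -- bound |g| ≤ 2h
  have habs : ∀ z ∈ Set.Ioo c d \ {1}, |g z| ≤ 2 * h z := by
    intro z hz
    have hzS : z ∈ Set.Icc c d \ {1} := ⟨Set.Ioo_subset_Icc_self hz.1, hz.2⟩
    have ha0 : 0 ≤ a z := (hw.pos z hzS).le
    have hdz := hdom t ht z hz
    have h1 : 0 ≤ yt t z ^ 2 := sq_nonneg _
    have h2 : 0 ≤ a z * yx t z ^ 2 := mul_nonneg ha0 (sq_nonneg _)
    have e1 : |2*(yt t z * ytt t z)| = 2 * |yt t z * ytt t z| := by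
      rw [abs_mul]; norm_num
    have e2 : |2*(a z * (yx t z * ytx t z))| = 2 * (a z * |yx t z * ytx t z|) := by
      rw [abs_mul, abs_mul, abs_of_nonneg ha0]; norm_num
    calc |g z| ≤ |2*(yt t z * ytt t z)| + |2*(a z * (yx t z * ytx t z))| := abs_add_le _ _
      _ = 2 * |yt t z * ytt t z| + 2 * (a z * |yx t z * ytx t z|) := by rw [e1, e2]
      _ ≤ 2 * h z := by linarith
  -- integrability of g on the two pieces
  have hsubl : Set.Ioo c 1 ⊆ Set.Ioo c d \ {1} := fun z hz =>
    ⟨⟨hz.1, hz.2.trans h1d⟩, by simp only [Set.mem_singleton_iff]; exact ne_of_lt hz.2⟩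
  have hsubr : Set.Ioo 1 d ⊆ Set.Ioo c d \ {1} := fun z hz =>
    ⟨⟨hc1.trans hz.1, hz.2⟩, by simp only [Set.mem_singleton_iff]; exact ne_of_gt hz.1⟩
  have hrestrl : volume.restrict (Set.Ioc c 1) = volume.restrict (Set.Ioo c 1) :=
    (Measure.restrict_congr_set Ioo_ae_eq_Ioc).symm
  have hrestrr : volume.restrict (Set.Ioc 1 d) = volume.restrict (Set.Ioo 1 d) :=
    (Measure.restrict_congr_set Ioo_ae_eq_Ioc).symm
  have hSidel : Set.Ioo c d \ {1} ⊆ Set.Icc c d \ {1} :=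
    Set.diff_subset_diff Set.Ioo_subset_Icc_self subset_rfl
  have hintl : MeasureTheory.IntegrableOn g (Set.Ioc c 1) := by
    apply MeasureTheory.Integrable.mono'
      ((hhint.mono_set (fun z hz => ⟨hz.1, lt_of_le_of_lt hz.2 h1d⟩)).const_mul 2)
    · show AEStronglyMeasurable g (volume.restrict (Set.Ioc c 1))
      rw [hrestrl]
      exact (contg.mono (fun z hz => hSidel (hsubl hz))).aestronglyMeasurable measurableSet_Ioo
    · rw [hrestrl]
      filter_upwards [MeasureTheory.ae_restrict_mem measurableSet_Ioo] with z hz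
      rw [Real.norm_eq_abs]
      exact habs z (hsubl hz)
  have hintr : MeasureTheory.IntegrableOn g (Set.Ioc 1 d) := by
    rw [MeasureTheory.IntegrableOn, hrestrr]
    apply MeasureTheory.Integrable.mono'
      ((hhint.mono_set (fun z hz => ⟨hc1.trans hz.1, hz.2⟩)).const_mul 2)
    · exact (contg.mono (fun z hz => hSidel (hsubr hz))).aestronglyMeasurable measurableSet_Ioo
    · filter_upwards [MeasureTheory.ae_restrict_mem measurableSet_Ioo] with z hz
      rw [Real.norm_eq_abs]
      exact habs z (hsubr hz)
  -- FTC on each side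
  have ftcL : ∫ z in c..(1:ℝ), g z = 2 * Q 1 - 2 * Q c := by
    apply intervalIntegral.integral_eq_sub_of_hasDeriv_right_of_le hc1.le
      (continuousOn_const.mul contQl)
    · intro z hz
      exact (derivQ2 z (hsubl hz)).hasDerivWithinAt
    · rw [intervalIntegrable_iff_integrableOn_Ioc_of_le hc1.le]
      exact hintl
  have ftcR : ∫ z in (1:ℝ)..d, g z = 2 * Q d - 2 * Q 1 := by
    apply intervalIntegral.integral_eq_sub_of_hasDeriv_right_of_le h1d.le
      (continuousOn_const.mul contQr)
    · intro z hz
      exact (derivQ2 z (hsubr hz)).hasDerivWithinAt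
    · rw [intervalIntegrable_iff_integrableOn_Ioc_of_le h1d.le]
      exact hintr
  have hQc : Q c = 0 := by
    rw [hQq c (ne_of_lt hc1), hqdef]; simp [ytc0]
  have hQd : Q d = 0 := by
    rw [hQq d (ne_of_gt h1d), hqdef]; simp [ytd0]
  -- assemble
  have hunion : Set.Ioc c 1 ∪ Set.Ioo 1 d = Set.Ioo c d := by
    ext z
    constructor
    · rintro (⟨hz1, hz2⟩ | ⟨hz1, hz2⟩)
      exacts [⟨hz1, lt_of_le_of_lt hz2 h1d⟩, ⟨hc1.trans hz1, hz2⟩]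
    · rintro ⟨hz1, hz2⟩
      rcases le_or_gt z 1 with hz | hz
      exacts [Or.inl ⟨hz1, hz⟩, Or.inr ⟨hz, hz2⟩]
  have hdisj : Disjoint (Set.Ioc c 1) (Set.Ioo 1 d) := by
    rw [Set.disjoint_left]
    rintro z ⟨_, hz1⟩ ⟨hz2, _⟩
    exact absurd hz1 (not_le.2 hz2)
  have hiL : ∫ z in Set.Ioc c 1, g z = 2 * L := by
    rw [← intervalIntegral.integral_of_le hc1.le, ftcL, hQ1, hQc]; ring
  have hiR : ∫ z in Set.Ioo 1 d, g z = -(2 * L) := by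
    rw [← MeasureTheory.integral_Ioc_eq_integral_Ioo, ← intervalIntegral.integral_of_le h1d.le,
      ftcR, hQ1, hQd]; ring
  calc ∫ z in Set.Ioo c d, g z
      = ∫ z in Set.Ioc c 1 ∪ Set.Ioo 1 d, g z := by rw [hunion]
    _ = (∫ z in Set.Ioc c 1, g z) + ∫ z in Set.Ioo 1 d, g z :=
        MeasureTheory.setIntegral_union hdisj measurableSet_Ioo hintl
          (hintr.mono_set Set.Ioo_subset_Ioc_self)
    _ = 0 := by rw [hiL, hiR]; ring

/-- Conservation of energy: `E_y(t) = E_y(0)` for all `t ∈ [0,T]`. -/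
theorem stmt_15 (c d T : ℝ) (a a' : ℝ → ℝ) (y yt yx ytt ytx ww : ℝ → ℝ → ℝ) (h : ℝ → ℝ)
    (hc : 0 ≤ c) (hc1 : c < 1) (h1d : 1 < d) (hd2 : d ≤ 2) (hT : 0 < T)
    (hw : IsWeight c d a a')
    (hsol : ClassicalSolution c d T a y yt yx ytt ytx ww)
    (hbc : ∀ t ∈ Set.Icc (0:ℝ) T, y t c = 0 ∧ y t d = 0)
    (htrans : ∀ t ∈ Set.Icc (0:ℝ) T, ∃ L : ℝ,
      Filter.Tendsto (fun x => a x * yx t x * yt t x) (𝓝[<] 1) (𝓝 L) ∧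
      Filter.Tendsto (fun x => a x * yx t x * yt t x) (𝓝[>] 1) (𝓝 L))
    (hhint : MeasureTheory.IntegrableOn h (Set.Ioo c d))
    (hdom : ∀ t ∈ Set.Icc (0:ℝ) T, ∀ x ∈ Set.Ioo c d \ {1},
      (yt t x) ^ 2 + a x * (yx t x) ^ 2 + |yt t x * ytt t x|
        + a x * |yx t x * ytx t x| ≤ h x) :
    ∀ t ∈ Set.Icc (0:ℝ) T,
      (1/2) * ∫ x in Set.Ioo c d, ((yt t x) ^ 2 + a x * (yx t x) ^ 2)
        = (1/2) * ∫ x in Set.Ioo c d, ((yt 0 x) ^ 2 + a x * (yx 0 x) ^ 2) := by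
  have hcd : c < d := hc1.trans h1d
  set S' : Set ℝ := Set.Ioo c d \ {1} with hS'def
  have hS'meas : MeasurableSet S' := measurableSet_Ioo.diff (measurableSet_singleton 1)
  have hS'sub : S' ⊆ Set.Icc c d \ {1} :=
    Set.diff_subset_diff Set.Ioo_subset_Icc_self subset_rfl
  have hrs : volume.restrict (Set.Ioo c d) = volume.restrict S' := by
    symm
    apply Measure.restrict_congr_set
    refine MeasureTheory.diff_ae_eq_self.2 ?_
    exact measure_mono_null Set.inter_subset_right (measure_singleton 1)
  -- measurability and bounds for the energy integrand
  have hFmeas : ∀ u ∈ Set.Icc (0:ℝ) T, AEStronglyMeasurable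
      (fun x => yt u x ^ 2 + a x * yx u x ^ 2) (volume.restrict (Set.Ioo c d)) := by
    intro u hu
    rw [hrs]
    have contFu : ContinuousOn (fun x => yt u x ^ 2 + a x * yx u x ^ 2)
        (Set.Icc c d \ {1}) :=
      ((EC.slice_x hsol.cyt hu).pow 2).add
        ((hw.cont.mono diff_subset).mul ((EC.slice_x hsol.cyx hu).pow 2))
    exact (contFu.mono hS'sub).aestronglyMeasurable hS'meas
  have hbound : ∀ u ∈ Set.Icc (0:ℝ) T, ∀ᵐ x ∂(volume.restrict (Set.Ioo c d)),
      ‖yt u x ^ 2 + a x * yx u x ^ 2‖ ≤ h x := by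
    intro u hu
    rw [hrs]
    filter_upwards [MeasureTheory.ae_restrict_mem hS'meas] with x hx
    have hdz := hdom u hu x hx
    have ha0 : 0 ≤ a x := (hw.pos x (hS'sub hx)).le
    have h1 : 0 ≤ yt u x ^ 2 := sq_nonneg _
    have h2 : 0 ≤ a x * yx u x ^ 2 := mul_nonneg ha0 (sq_nonneg _)
    rw [Real.norm_eq_abs, abs_of_nonneg (add_nonneg h1 h2)]
    have h3 : 0 ≤ |yt u x * ytt u x| := abs_nonneg _
    have h4 : 0 ≤ a x * |yx u x * ytx u x| := mul_nonneg ha0 (abs_nonneg _)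
    linarith
  have hg'meas : ∀ u ∈ Set.Icc (0:ℝ) T, AEStronglyMeasurable
      (fun x => 2*(yt u x * ytt u x) + 2*(a x * (yx u x * ytx u x)))
      (volume.restrict (Set.Ioo c d)) := by
    intro u hu
    rw [hrs]
    have contgu : ContinuousOn (fun x => 2*(yt u x * ytt u x) + 2*(a x * (yx u x * ytx u x)))
        (Set.Icc c d \ {1}) := by
      apply ContinuousOn.add
      · exact continuousOn_const.mul ((EC.slice_x hsol.cyt hu).mul (EC.slice_x hsol.cytt hu))
      · exact continuousOn_const.mul ((hw.cont.mono diff_subset).mul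
          ((EC.slice_x hsol.cyx hu).mul (EC.slice_x hsol.cytx hu)))
    exact (contgu.mono hS'sub).aestronglyMeasurable hS'meas
  have habs : ∀ u ∈ Set.Icc (0:ℝ) T, ∀ x ∈ S',
      |2*(yt u x * ytt u x) + 2*(a x * (yx u x * ytx u x))| ≤ 2 * h x := by
    intro u hu x hx
    have ha0 : 0 ≤ a x := (hw.pos x (hS'sub hx)).le
    have hdz := hdom u hu x hx
    have h1 : 0 ≤ yt u x ^ 2 := sq_nonneg _
    have h2 : 0 ≤ a x * yx u x ^ 2 := mul_nonneg ha0 (sq_nonneg _)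
    have e1 : |2*(yt u x * ytt u x)| = 2 * |yt u x * ytt u x| := by
      rw [abs_mul]; norm_num
    have e2 : |2*(a x * (yx u x * ytx u x))| = 2 * (a x * |yx u x * ytx u x|) := by
      rw [abs_mul, abs_mul, abs_of_nonneg ha0]; norm_num
    calc |2*(yt u x * ytt u x) + 2*(a x * (yx u x * ytx u x))|
        ≤ |2*(yt u x * ytt u x)| + |2*(a x * (yx u x * ytx u x))| := abs_add_le _ _
      _ = 2 * |yt u x * ytt u x| + 2 * (a x * |yx u x * ytx u x|) := by rw [e1, e2]
      _ ≤ 2 * h x := by linarith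
  -- continuity of the energy
  have contF : ContinuousOn
      (fun u => ∫ x in Set.Ioo c d, (yt u x ^ 2 + a x * yx u x ^ 2)) (Set.Icc 0 T) := by
    apply MeasureTheory.continuousOn_of_dominated hFmeas hbound hhint
    rw [hrs]
    filter_upwards [MeasureTheory.ae_restrict_mem hS'meas] with x hx
    exact ((EC.slice_t hsol.cyt (hS'sub hx)).pow 2).add
      (continuousOn_const.mul ((EC.slice_t hsol.cyx (hS'sub hx)).pow 2))
  -- zero derivative of the energy at interior times
  have hderivF : ∀ t₀ ∈ Set.Ioo (0:ℝ) T, HasDerivAt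
      (fun u => ∫ x in Set.Ioo c d, (yt u x ^ 2 + a x * yx u x ^ 2)) 0 t₀ := by
    intro t₀ ht₀
    have ht₀' : t₀ ∈ Set.Icc (0:ℝ) T := Set.Ioo_subset_Icc_self ht₀
    set ε : ℝ := min t₀ (T - t₀) with hεdef
    have hε : 0 < ε := lt_min ht₀.1 (by linarith [ht₀.2])
    have hball : Metric.ball t₀ ε ⊆ Set.Ioo 0 T := by
      rw [Real.ball_eq_Ioo]
      intro u hu
      constructor
      · have := min_le_left t₀ (T - t₀); linarith [hu.1]
      · have := min_le_right t₀ (T - t₀); linarith [hu.2]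
    have main := (hasDerivAt_integral_of_dominated_loc_of_deriv_le
      (μ := volume.restrict (Set.Ioo c d))
      (F := fun u x => yt u x ^ 2 + a x * yx u x ^ 2)
      (F' := fun u x => 2*(yt u x * ytt u x) + 2*(a x * (yx u x * ytx u x)))
      (x₀ := t₀) (bound := fun x => 2 * h x) (Metric.ball_mem_nhds t₀ hε) ?_ ?_ ?_ ?_ ?_ ?_).2
    · have hzero := EC.spaceint hc1 h1d hT hw hsol hbc htrans hhint hdom ht₀'
      rw [hzero] at main
      exact main
    · filter_upwards [isOpen_Ioo.mem_nhds ht₀] with u hu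
      exact hFmeas u (Set.Ioo_subset_Icc_self hu)
    · exact MeasureTheory.Integrable.mono' hhint (hFmeas t₀ ht₀') (hbound t₀ ht₀')
    · exact hg'meas t₀ ht₀'
    · rw [hrs]
      filter_upwards [MeasureTheory.ae_restrict_mem hS'meas] with x hx
      intro u hu
      have huT : u ∈ Set.Icc (0:ℝ) T := Set.Ioo_subset_Icc_self (hball hu)
      rw [Real.norm_eq_abs]
      exact habs u huT x hx
    · exact hhint.const_mul 2
    · rw [hrs]
      filter_upwards [MeasureTheory.ae_restrict_mem hS'meas] with x hx
      intro u hu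
      have huIoo := hball hu
      have huT : u ∈ Set.Icc (0:ℝ) T := Set.Ioo_subset_Icc_self huIoo
      have hnbT : Set.Icc (0:ℝ) T ∈ 𝓝 u :=
        Filter.mem_of_superset (isOpen_Ioo.mem_nhds huIoo) Set.Ioo_subset_Icc_self
      have hxS : x ∈ Set.Icc c d \ {1} := hS'sub hx
      have hx1 : x ≠ 1 := hx.2
      have d1 : HasDerivAt (fun s => yt s x) (ytt u x) u :=
        (hsol.dtt u huT x hxS).hasDerivAt hnbT
      have d2 : HasDerivAt (fun s => yx s x) (ytx u x) u := by
        rcases lt_or_gt_of_ne hx1 with hlt | hgt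
        · refine ((EC.clairaut hT hsol (p := c) (q := (x+1)/2) ?_ ?_ huT).hasDerivAt hnbT)
          · intro z hz
            refine ⟨⟨hz.1, by nlinarith [hz.2]⟩, ?_⟩
            simp only [Set.mem_singleton_iff]
            nlinarith [hz.2]
          · exact ⟨hx.1.1, by linarith⟩
        · refine ((EC.clairaut hT hsol (p := (x+1)/2) (q := d) ?_ ?_ huT).hasDerivAt hnbT)
          · intro z hz
            refine ⟨⟨by nlinarith [hz.1], hz.2⟩, ?_⟩
            simp only [Set.mem_singleton_iff]
            nlinarith [hz.1]
          · exact ⟨by linarith, hx.1.2⟩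
      have hsum := (d1.pow 2).add ((d2.pow 2).const_mul (a x))
      convert hsum using 1
      · rfl
      norm_num
      ring
  -- conclusion by the mean value theorem
  intro t ht
  rcases eq_or_lt_of_le ht.1 with h0 | h0
  · rw [← h0]
  · obtain ⟨ξ, hξ, hslope⟩ := exists_hasDerivAt_eq_slope
      (fun u => ∫ x in Set.Ioo c d, (yt u x ^ 2 + a x * yx u x ^ 2)) (fun _ => 0) h0
      (contF.mono (Set.Icc_subset_Icc le_rfl ht.2))
      (fun ξ hξ => hderivF ξ ⟨hξ.1, lt_of_lt_of_le hξ.2 ht.2⟩)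
    have hne : t - 0 ≠ 0 := by linarith
    have h0' := hslope.symm
    rw [div_eq_zero_iff] at h0'
    rcases h0' with h0' | h0'
    · have : (∫ x in Set.Ioo c d, (yt t x ^ 2 + a x * yx t x ^ 2))
          = ∫ x in Set.Ioo c d, (yt 0 x ^ 2 + a x * yx 0 x ^ 2) := by linarith
      rw [this]
    · exact absurd h0' hne


end
end
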